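/- arXiv:1604.08737 — 4 statements merged into one kernel-verified Lean document; each statement's English description precedes it below -/
import Mathlib

section
/- Let 1 ≤ s < q < r ≤ ∞, ω ≥ 0, and let (T_t)_{t≥0} be a semigroup on a subset D of L^q(Σ,μ) such that ‖T_t u − T_t û‖_s ≤ e^{ωt}‖u − û‖_s (in [0,∞]) for all t ≥ 0 and u, û ∈ D. Suppose there exist α > 0, β, γ > 0 and C > 0 such that ‖T_t u − T_t û‖_r ≤ C·t^{−α}·e^{ωβt}·‖u − û‖_q^γ for all t > 0 and u, û ∈ D. Set θ_s := (r−q)s/(q(r−s)) if r < ∞ and θ_s := s/q if r = ∞, and assume γ(1 − θ_s) < 1. Then, with θ := 1 − γ(1 − θ_s), α_s := α/θ, β_s := (β/2 + γθ_s)/θ and γ_s := γθ_s/θ, one has ‖T_t u − T_t û‖_r ≤ (C·2^{α/θ})^{1/θ}·t^{−α_s}·e^{ωβ_s t}·‖u − û‖_s^{γ_s} for every t > 0 and all u, û ∈ D ∩ L^s(Σ,μ). -/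
open MeasureTheory Filter ENNReal


private lemma interp' {α : Type*} [MeasurableSpace α] {μ : Measure α} {f : α → ℝ}
    (hf : AEStronglyMeasurable f μ) {s q : ℝ} {r : ℝ≥0∞}
    (hs : 0 < s) (hsq : s < q) (hqr : ENNReal.ofReal q < r) {θ : ℝ}
    (hθ : θ = if r = ∞ then s / q else ((r.toReal - q) * s) / (q * (r.toReal - s))) :
    eLpNorm f (ENNReal.ofReal q) μ ≤
      eLpNorm f (ENNReal.ofReal s) μ ^ θ * eLpNorm f r μ ^ (1 - θ) := by
  have hq : 0 < q := hs.trans hsq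
  have hS0 : ENNReal.ofReal s ≠ 0 := by simp [ENNReal.ofReal_eq_zero, not_le, hs]
  have hQ0 : ENNReal.ofReal q ≠ 0 := by simp [ENNReal.ofReal_eq_zero, not_le, hq]
  have hStop : ENNReal.ofReal s ≠ ∞ := ENNReal.ofReal_ne_top
  have hQtop : ENNReal.ofReal q ≠ ∞ := ENNReal.ofReal_ne_top
  have hSt : (ENNReal.ofReal s).toReal = s := ENNReal.toReal_ofReal hs.le
  have hQt : (ENNReal.ofReal q).toReal = q := ENNReal.toReal_ofReal hq.le
  have hG : AEMeasurable (fun x => (‖f x‖₊ : ℝ≥0∞)) μ := hf.enorm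
  by_cases hr : r = ∞
  · subst hr
    rw [if_pos rfl] at hθ
    have hθ0 : 0 < θ := by rw [hθ]; positivity
    have hθ1 : θ < 1 := by rw [hθ, div_lt_one hq]; exact hsq
    by_cases hM : eLpNorm f ∞ μ = ∞
    · by_cases hLs : eLpNorm f (ENNReal.ofReal s) μ = 0
      · have h0 : f =ᵐ[μ] 0 := (eLpNorm_eq_zero_iff hf hS0).mp hLs
        rw [eLpNorm_congr_ae h0, eLpNorm_zero]
        exact zero_le
      · have hne : eLpNorm f (ENNReal.ofReal s) μ ^ θ ≠ 0 := by
          simp only [Ne, ENNReal.rpow_eq_zero_iff, not_or, not_and_or]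
          exact ⟨Or.inl hLs, Or.inr (by linarith)⟩
        rw [hM, ENNReal.top_rpow_of_pos (by linarith), ENNReal.mul_top hne]
        exact le_top
    · -- essSup finite case
      have key : ∫⁻ x, (‖f x‖₊ : ℝ≥0∞) ^ q ∂μ ≤
          (∫⁻ x, (‖f x‖₊ : ℝ≥0∞) ^ s ∂μ) * eLpNormEssSup f μ ^ (q - s) := by
        rw [← lintegral_mul_const' _ _ (by
          exact ENNReal.rpow_ne_top_of_nonneg (by linarith) hM)]
        refine lintegral_mono_ae ?_
        filter_upwards [ae_le_eLpNormEssSup (f := f) (μ := μ)] with x hx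
        calc (‖f x‖₊ : ℝ≥0∞) ^ q = (‖f x‖₊ : ℝ≥0∞) ^ s * (‖f x‖₊ : ℝ≥0∞) ^ (q - s) := by
              rw [← ENNReal.rpow_add_of_nonneg _ _ hs.le (by linarith)]; ring_nf
          _ ≤ (‖f x‖₊ : ℝ≥0∞) ^ s * eLpNormEssSup f μ ^ (q - s) :=
              mul_le_mul_right (ENNReal.rpow_le_rpow hx (by linarith)) _
      have h1 : eLpNorm f (ENNReal.ofReal q) μ =
          (∫⁻ x, (‖f x‖₊ : ℝ≥0∞) ^ q ∂μ) ^ (1 / q) := by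
        rw [eLpNorm_eq_lintegral_rpow_enorm_toReal hQ0 hQtop, hQt]; rfl
      have h2 : eLpNorm f (ENNReal.ofReal s) μ =
          (∫⁻ x, (‖f x‖₊ : ℝ≥0∞) ^ s ∂μ) ^ (1 / s) := by
        rw [eLpNorm_eq_lintegral_rpow_enorm_toReal hS0 hStop, hSt]; rfl
      rw [h1, h2]
      calc (∫⁻ x, (‖f x‖₊ : ℝ≥0∞) ^ q ∂μ) ^ (1 / q)
          ≤ ((∫⁻ x, (‖f x‖₊ : ℝ≥0∞) ^ s ∂μ) * eLpNormEssSup f μ ^ (q - s)) ^ (1 / q) :=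
            ENNReal.rpow_le_rpow key (by positivity)
        _ = ((∫⁻ x, (‖f x‖₊ : ℝ≥0∞) ^ s ∂μ) ^ (1/s)) ^ θ * eLpNormEssSup f μ ^ (1 - θ) := by
            rw [ENNReal.mul_rpow_of_nonneg _ _ (by positivity), ← ENNReal.rpow_mul,
              ← ENNReal.rpow_mul]
            congr 1
            · congr 1
              rw [hθ]; field_simp
            · congr 1
              rw [hθ]; field_simp
        _ = _ := by rw [eLpNorm_exponent_top]
  · -- r finite
    rw [if_neg hr] at hθ
    set rr := r.toReal with hrr
    have hqrr : q < rr := by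
      have := (ENNReal.toReal_lt_toReal hQtop hr).mpr hqr
      rwa [hQt] at this
    have hrr0 : 0 < rr := by linarith
    have hr0 : r ≠ 0 := by
      intro h; rw [h] at hqr; exact (not_lt_of_ge (zero_le)) hqr
    have hrt : r = ENNReal.ofReal rr := by
      rw [hrr, ENNReal.ofReal_toReal hr]
    have hθ0 : 0 < θ := by
      rw [hθ]; apply div_pos <;> nlinarith
    have hθ1 : θ < 1 := by
      rw [hθ, div_lt_one (by nlinarith)]; nlinarith
    -- Hölder exponents
    set p₁ : ℝ := (rr - s) / (rr - q) with hp₁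
    set p₂ : ℝ := (rr - s) / (q - s) with hp₂
    have hne1 : rr - q ≠ 0 := ne_of_gt (by linarith)
    have hne2 : rr - s ≠ 0 := ne_of_gt (by linarith)
    have hne3 : q - s ≠ 0 := ne_of_gt (by linarith)
    have hne4 : q ≠ 0 := hq.ne'
    have hconj : p₁.HolderConjugate p₂ := by
      rw [Real.holderConjugate_iff]
      constructor
      · rw [hp₁, lt_div_iff₀ (by linarith)]; linarith
      · rw [hp₁, hp₂, inv_div, inv_div, ← add_div]
        rw [show rr - q + (q - s) = rr - s by ring, div_self hne2]
    have hθq₁ : θ * q * p₁ = s := by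
      rw [hθ, hp₁]; field_simp
    have hθq₂ : (1 - θ) * q * p₂ = rr := by
      have h1θ : 1 - θ = rr * (q - s) / (q * (rr - s)) := by
        rw [hθ]; field_simp; ring
      rw [h1θ, hp₂]; field_simp
    have key := ENNReal.lintegral_mul_le_Lp_mul_Lq μ hconj
      (f := fun x => (‖f x‖₊ : ℝ≥0∞) ^ (θ * q)) (g := fun x => (‖f x‖₊ : ℝ≥0∞) ^ ((1 - θ) * q))
      (hG.pow_const _) (hG.pow_const _)
    have e1 : ∀ x : α, ((fun x => (‖f x‖₊ : ℝ≥0∞) ^ (θ * q)) *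
        (fun x => (‖f x‖₊ : ℝ≥0∞) ^ ((1 - θ) * q))) x = (‖f x‖₊ : ℝ≥0∞) ^ q := by
      intro x
      simp only [Pi.mul_apply]
      rw [← ENNReal.rpow_add_of_nonneg _ _ (by positivity) (by nlinarith)]
      ring_nf
    have e2 : ∀ x : α, ((‖f x‖₊ : ℝ≥0∞) ^ (θ * q)) ^ p₁ = (‖f x‖₊ : ℝ≥0∞) ^ s := by
      intro x; rw [← ENNReal.rpow_mul, hθq₁]
    have e3 : ∀ x : α, ((‖f x‖₊ : ℝ≥0∞) ^ ((1 - θ) * q)) ^ p₂ = (‖f x‖₊ : ℝ≥0∞) ^ rr := by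
      intro x; rw [← ENNReal.rpow_mul, hθq₂]
    simp only [e1] at key
    have key2 : ∫⁻ x, (‖f x‖₊ : ℝ≥0∞) ^ q ∂μ ≤
        (∫⁻ x, (‖f x‖₊ : ℝ≥0∞) ^ s ∂μ) ^ (1 / p₁) *
        (∫⁻ x, (‖f x‖₊ : ℝ≥0∞) ^ rr ∂μ) ^ (1 / p₂) := by
      refine key.trans_eq ?_
      congr 1
      · congr 1; exact lintegral_congr fun x => e2 x
      · congr 1; exact lintegral_congr fun x => e3 x
    have h1 : eLpNorm f (ENNReal.ofReal q) μ =
        (∫⁻ x, (‖f x‖₊ : ℝ≥0∞) ^ q ∂μ) ^ (1 / q) := by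
      rw [eLpNorm_eq_lintegral_rpow_enorm_toReal hQ0 hQtop, hQt]; rfl
    have h2 : eLpNorm f (ENNReal.ofReal s) μ =
        (∫⁻ x, (‖f x‖₊ : ℝ≥0∞) ^ s ∂μ) ^ (1 / s) := by
      rw [eLpNorm_eq_lintegral_rpow_enorm_toReal hS0 hStop, hSt]; rfl
    have h3 : eLpNorm f r μ = (∫⁻ x, (‖f x‖₊ : ℝ≥0∞) ^ rr ∂μ) ^ (1 / rr) := by
      rw [eLpNorm_eq_lintegral_rpow_enorm_toReal hr0 hr]; rfl
    rw [h1, h2, h3]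
    calc (∫⁻ x, (‖f x‖₊ : ℝ≥0∞) ^ q ∂μ) ^ (1 / q)
        ≤ ((∫⁻ x, (‖f x‖₊ : ℝ≥0∞) ^ s ∂μ) ^ (1 / p₁) *
          (∫⁻ x, (‖f x‖₊ : ℝ≥0∞) ^ rr ∂μ) ^ (1 / p₂)) ^ (1 / q) := by gcongr
      _ = _ := by
          rw [ENNReal.mul_rpow_of_nonneg _ _ (by positivity), ← ENNReal.rpow_mul,
            ← ENNReal.rpow_mul, ← ENNReal.rpow_mul, ← ENNReal.rpow_mul]
          congr 1
          · congr 1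
            rw [hθ, hp₁]
            field_simp [hne1, hne2, hne3, hne4, hs.ne']
          · congr 1
            have h1θ : 1 - θ = rr * (q - s) / (q * (rr - s)) := by
              rw [hθ]; field_simp; ring
            rw [hp₂, h1θ]
            field_simp [hne1, hne2, hne3, hne4, hrr0.ne']

private lemma iterate_bound' {F : ℕ → ℝ} {σ A B E c K : ℝ}
    (hσ0 : 0 < σ) (hσ1 : σ < 1) (hB : 0 ≤ B) (hE : 0 ≤ E)
    (hF0 : ∀ n, 0 ≤ F n)
    (hrec : ∀ n : ℕ, F n ≤ Real.exp (A + B * (n + 1) + E * (1/2) ^ (n + 1)) * F (n + 1) ^ σ)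
    (hbd : ∀ n : ℕ, F n ≤ Real.exp (c + K * n)) :
    F 0 ≤ Real.exp (A / (1 - σ) + B / (1 - σ) ^ 2 + E / (2 - σ)) := by
  have h1σ : 0 < 1 - σ := by linarith
  have h2σ : 0 < 2 - σ := by linarith
  have hσn : ∀ n : ℕ, (0:ℝ) ≤ σ ^ n := fun n => pow_nonneg hσ0.le n
  set L : ℕ → ℝ := fun k => A + B * (k + 1) + E * (1/2) ^ (k + 1) with hL
  -- main induction
  have main : ∀ n : ℕ, F 0 ≤
      Real.exp (∑ k ∈ Finset.range n, σ ^ k * L k) * F n ^ σ ^ n := by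
    intro n
    induction n with
    | zero => simpa using hF0 0
    | succ n ih =>
      refine ih.trans ?_
      have h1 : F n ^ σ ^ n ≤ (Real.exp (L n) * F (n + 1) ^ σ) ^ σ ^ n :=
        Real.rpow_le_rpow (hF0 n) (hrec n) (hσn n)
      have h2 : (Real.exp (L n) * F (n + 1) ^ σ) ^ (σ ^ n : ℝ) =
          Real.exp (σ ^ n * L n) * F (n + 1) ^ σ ^ (n + 1) := by
        rw [Real.mul_rpow (Real.exp_pos _).le (Real.rpow_nonneg (hF0 _) _),
          ← Real.exp_mul, ← Real.rpow_mul (hF0 (n+1)), mul_comm (L n), ← pow_succ']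
      calc Real.exp (∑ k ∈ Finset.range n, σ ^ k * L k) * F n ^ σ ^ n
          ≤ Real.exp (∑ k ∈ Finset.range n, σ ^ k * L k) *
            (Real.exp (L n) * F (n + 1) ^ σ) ^ σ ^ n :=
            mul_le_mul_of_nonneg_left h1 (Real.exp_pos _).le
        _ = Real.exp (∑ k ∈ Finset.range (n+1), σ ^ k * L k) * F (n+1) ^ σ ^ (n+1) := by
            rw [h2, Finset.sum_range_succ, Real.exp_add]
            ring
  -- bound the partial sums
  have habs : |σ| < 1 := by rw [abs_of_pos hσ0]; exact hσ1
  have hsumgeo : Summable (fun k : ℕ => σ ^ k) := summable_geometric_of_lt_one hσ0.le hσ1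
  have hsum1 : Summable (fun k : ℕ => (k : ℝ) * σ ^ k) := by
    have := summable_pow_mul_geometric_of_norm_lt_one 1 (by rwa [Real.norm_eq_abs] : ‖σ‖ < 1)
    simpa using this
  have htsum1 : ∑' k : ℕ, ((k : ℝ) + 1) * σ ^ k = 1 / (1 - σ) ^ 2 := by
    have heq : (fun k : ℕ => ((k : ℝ) + 1) * σ ^ k)
        = fun k : ℕ => (k : ℝ) * σ ^ k + σ ^ k := by funext k; ring
    rw [heq, Summable.tsum_add hsum1 hsumgeo, tsum_coe_mul_geometric_of_norm_lt_one
      (by rwa [Real.norm_eq_abs]), tsum_geometric_of_lt_one hσ0.le hσ1]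
    field_simp
    ring
  have hsum1' : Summable (fun k : ℕ => ((k : ℝ) + 1) * σ ^ k) := by
    have heq : (fun k : ℕ => ((k : ℝ) + 1) * σ ^ k)
        = fun k : ℕ => (k : ℝ) * σ ^ k + σ ^ k := by funext k; ring
    rw [heq]; exact hsum1.add hsumgeo
  have hsbound : ∀ n : ℕ, ∑ k ∈ Finset.range n, σ ^ k * L k ≤
      A * ((1 - σ ^ n) / (1 - σ)) + B / (1 - σ) ^ 2 + E / (2 - σ) := by
    intro n
    have hdecomp : ∑ k ∈ Finset.range n, σ ^ k * L k =
        A * ∑ k ∈ Finset.range n, σ ^ k +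
        B * ∑ k ∈ Finset.range n, ((k : ℝ) + 1) * σ ^ k +
        E * ∑ k ∈ Finset.range n, (1/2) * (σ/2) ^ k := by
      rw [Finset.mul_sum, Finset.mul_sum, Finset.mul_sum, ← Finset.sum_add_distrib,
        ← Finset.sum_add_distrib]
      refine Finset.sum_congr rfl fun k _ => ?_
      rw [hL]
      have : (σ / 2) ^ k = σ ^ k * (1/2) ^ k := by
        rw [div_pow]; ring_nf; norm_num
      rw [this]
      ring
    rw [hdecomp]
    have e1 : ∑ k ∈ Finset.range n, σ ^ k = (1 - σ ^ n) / (1 - σ) := by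
      rw [geom_sum_eq hσ1.ne n]
      rw [div_eq_div_iff (by linarith) (by linarith)]
      ring
    have e2 : ∑ k ∈ Finset.range n, ((k : ℝ) + 1) * σ ^ k ≤ 1 / (1 - σ) ^ 2 := by
      rw [← htsum1]
      exact Summable.sum_le_tsum _ (fun i _ => by positivity) hsum1'
    have e3 : ∑ k ∈ Finset.range n, (1/2 : ℝ) * (σ/2) ^ k ≤ 1 / (2 - σ) := by
      rw [← Finset.mul_sum]
      have : ∑ k ∈ Finset.range n, (σ/2) ^ k ≤ (1 - σ/2)⁻¹ := by
        rw [← tsum_geometric_of_lt_one (by positivity) (by linarith)]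
        exact Summable.sum_le_tsum _ (fun i _ => by positivity)
          (summable_geometric_of_lt_one (by positivity) (by linarith))
      calc (1/2 : ℝ) * ∑ k ∈ Finset.range n, (σ/2) ^ k ≤ (1/2) * (1 - σ/2)⁻¹ := by linarith
        _ = 1 / (2 - σ) := by
            rw [_root_.eq_div_iff (by linarith)]
            field_simp
    rw [e1]
    have := mul_le_mul_of_nonneg_left e2 hB
    have := mul_le_mul_of_nonneg_left e3 hE
    rw [mul_one_div] at *
    linarith
  -- the n-dependent bound
  have hRn : ∀ n : ℕ, F 0 ≤ Real.exp (A * ((1 - σ ^ n) / (1 - σ)) + B / (1 - σ) ^ 2 +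
      E / (2 - σ) + (c + K * n) * σ ^ n) := by
    intro n
    refine (main n).trans ?_
    have h3 : F n ^ σ ^ n ≤ Real.exp ((c + K * n) * σ ^ n) := by
      calc F n ^ σ ^ n ≤ Real.exp (c + K * n) ^ (σ ^ n : ℝ) :=
            Real.rpow_le_rpow (hF0 n) (hbd n) (hσn n)
        _ = Real.exp ((c + K * n) * σ ^ n) := by rw [← Real.exp_mul]
    calc Real.exp (∑ k ∈ Finset.range n, σ ^ k * L k) * F n ^ σ ^ n
        ≤ Real.exp (A * ((1 - σ ^ n) / (1 - σ)) + B / (1 - σ) ^ 2 + E / (2 - σ)) *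
          Real.exp ((c + K * n) * σ ^ n) := by
          refine mul_le_mul (Real.exp_le_exp.mpr (hsbound n)) h3
            (Real.rpow_nonneg (hF0 n) _) (Real.exp_pos _).le
      _ = _ := by rw [← Real.exp_add]
  -- pass to the limit
  have hpow0 : Tendsto (fun n : ℕ => σ ^ n) atTop (nhds 0) :=
    tendsto_pow_atTop_nhds_zero_of_lt_one hσ0.le hσ1
  have hnpow0 : Tendsto (fun n : ℕ => (n : ℝ) * σ ^ n) atTop (nhds 0) :=
    hsum1.tendsto_atTop_zero
  have hexp : Tendsto (fun n : ℕ => A * ((1 - σ ^ n) / (1 - σ)) + B / (1 - σ) ^ 2 +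
      E / (2 - σ) + (c + K * n) * σ ^ n) atTop
      (nhds (A / (1 - σ) + B / (1 - σ) ^ 2 + E / (2 - σ))) := by
    have l1 : Tendsto (fun n : ℕ => A * ((1 - σ ^ n) / (1 - σ))) atTop (nhds (A / (1 - σ))) := by
      have : Tendsto (fun n : ℕ => (1 - σ ^ n) / (1 - σ)) atTop (nhds ((1 - 0) / (1 - σ))) :=
        ((tendsto_const_nhds.sub hpow0)).div_const _
      simpa [div_eq_mul_inv] using this.const_mul A
    have l2 : Tendsto (fun n : ℕ => (c + K * n) * σ ^ n) atTop (nhds 0) := by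
      have : Tendsto (fun n : ℕ => c * σ ^ n + K * ((n : ℝ) * σ ^ n)) atTop
          (nhds (c * 0 + K * 0)) := (hpow0.const_mul c).add (hnpow0.const_mul K)
      simpa using this.congr (fun n => by ring)
    have := ((l1.add_const (B / (1 - σ) ^ 2)).add_const (E / (2 - σ))).add l2
    simpa using this
  exact ge_of_tendsto' ((Real.continuous_exp.continuousAt.tendsto.comp hexp)) hRn

set_option maxHeartbeats 2000000

namespace Statement3

variable {α : Type*} [MeasurableSpace α]

/-- A (nonlinear) semigroup acting on a subset `D` of a function space:
a family `(T_t)_{t ≥ 0}` of maps of `D` into itself with `T_0 = id` and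
`T_{t+s} = T_t ∘ T_s`. -/
def IsSemigroupOn (D : Set (α → ℝ)) (T : ℝ → (α → ℝ) → (α → ℝ)) : Prop :=
  (∀ t : ℝ, 0 ≤ t → ∀ u ∈ D, T t u ∈ D) ∧
  (∀ u ∈ D, T 0 u = u) ∧
  (∀ s t : ℝ, 0 ≤ s → 0 ≤ t → ∀ u ∈ D, T (t + s) u = T t (T s u))

/-- **Extrapolation towards `L¹` (with differences).**
If a semigroup on `D ⊆ L^q(Σ,μ)` has exponential growth in `L^s` and satisfies an
`L^q`–`L^r` regularisation estimate
`‖T_t u − T_t û‖_r ≤ C t^{−α} e^{ωβt} ‖u − û‖_q^γ`, then (with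
`θ_s = (r−q)s/(q(r−s))` if `r < ∞`, `θ_s = s/q` if `r = ∞`, and assuming
`γ(1−θ_s) < 1`) it satisfies the `L^s`–`L^r` estimate
`‖T_t u − T_t û‖_r ≤ (C 2^{α/θ})^{1/θ} t^{−α_s} e^{ωβ_s t} ‖u − û‖_s^{γ_s}`. -/
theorem extrapolation_towards_L1_with_differences
    (μ : Measure α) [SigmaFinite μ]
    (s q : ℝ) (r : ℝ≥0∞) (hs : 1 ≤ s) (hsq : s < q) (hqr : ENNReal.ofReal q < r)
    (ω : ℝ) (hω : 0 ≤ ω)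
    (D : Set (α → ℝ)) (hD : ∀ u ∈ D, MemLp u (ENNReal.ofReal q) μ)
    (T : ℝ → (α → ℝ) → (α → ℝ)) (hT : IsSemigroupOn D T)
    (hgrow : ∀ t : ℝ, 0 ≤ t → ∀ u ∈ D, ∀ v ∈ D,
      eLpNorm (T t u - T t v) (ENNReal.ofReal s) μ ≤
        ENNReal.ofReal (Real.exp (ω * t)) * eLpNorm (u - v) (ENNReal.ofReal s) μ)
    (a β γ C : ℝ) (ha : 0 < a) (hβ : 0 < β) (hγ : 0 < γ) (hC : 0 < C)
    (hreg : ∀ t : ℝ, 0 < t → ∀ u ∈ D, ∀ v ∈ D,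
      eLpNorm (T t u - T t v) r μ ≤
        ENNReal.ofReal (C * t ^ (-a) * Real.exp (ω * β * t)) *
          eLpNorm (u - v) (ENNReal.ofReal q) μ ^ γ)
    (θs : ℝ)
    (hθs : θs = if r = ∞ then s / q else ((r.toReal - q) * s) / (q * (r.toReal - s)))
    (hsmall : γ * (1 - θs) < 1) :
    ∀ t : ℝ, 0 < t → ∀ u ∈ D, ∀ v ∈ D,
      MemLp u (ENNReal.ofReal s) μ → MemLp v (ENNReal.ofReal s) μ →
      eLpNorm (T t u - T t v) r μ ≤
        ENNReal.ofReal ((C * 2 ^ (a / (1 - γ * (1 - θs)))) ^ (1 / (1 - γ * (1 - θs))) *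
            t ^ (-(a / (1 - γ * (1 - θs)))) *
            Real.exp (ω * ((β / 2 + γ * θs) / (1 - γ * (1 - θs))) * t)) *
          eLpNorm (u - v) (ENNReal.ofReal s) μ ^ (γ * θs / (1 - γ * (1 - θs))) := by
  
  obtain ⟨hmap, hid, hsemi⟩ := hT
  intro t ht u hu v hv hus hvs
  have hs0 : 0 < s := lt_of_lt_of_le one_pos hs
  have hq0 : 0 < q := hs0.trans hsq
  have hS0 : ENNReal.ofReal s ≠ 0 := by simp [ENNReal.ofReal_eq_zero, not_le, hs0]
  -- bounds on θs
  have hθs0 : 0 < θs := by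
    rw [hθs]
    split_ifs with hr
    · positivity
    · have hqrr : q < r.toReal := by
        have := (ENNReal.toReal_lt_toReal ENNReal.ofReal_ne_top hr).mpr hqr
        rwa [ENNReal.toReal_ofReal hq0.le] at this
      apply div_pos <;> nlinarith
  have hθs1 : θs < 1 := by
    rw [hθs]
    split_ifs with hr
    · rw [div_lt_one hq0]; exact hsq
    · have hqrr : q < r.toReal := by
        have := (ENNReal.toReal_lt_toReal ENNReal.ofReal_ne_top hr).mpr hqr
        rwa [ENNReal.toReal_ofReal hq0.le] at this
      rw [div_lt_one (by nlinarith)]; nlinarith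
  set σ : ℝ := γ * (1 - θs) with hσ
  have hσ0 : 0 < σ := by rw [hσ]; apply mul_pos hγ; linarith
  have hσ1 : σ < 1 := hsmall
  have hth0 : 0 < 1 - σ := by linarith
  -- AESM facts
  have hAE : ∀ w ∈ D, AEStronglyMeasurable w μ := fun w hw => (hD w hw).aestronglyMeasurable
  -- trivial case : u = v a.e.
  by_cases hNs : eLpNorm (u - v) (ENNReal.ofReal s) μ = 0
  · have h := hgrow t ht.le u hu v hv
    rw [hNs, mul_zero] at h
    have hT0 : T t u - T t v =ᵐ[μ] 0 :=
      (eLpNorm_eq_zero_iff ((hAE _ (hmap t ht.le u hu)).sub (hAE _ (hmap t ht.le v hv)))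
        hS0).mp (le_antisymm h zero_le)
    rw [eLpNorm_congr_ae hT0, eLpNorm_zero]
    exact zero_le
  -- nontrivial case
  have hNsfin : eLpNorm (u - v) (ENNReal.ofReal s) μ ≠ ∞ := (hus.sub hvs).eLpNorm_lt_top.ne
  set Nsr : ℝ := (eLpNorm (u - v) (ENNReal.ofReal s) μ).toReal with hNsrdef
  have hNsr : 0 < Nsr := ENNReal.toReal_pos hNs hNsfin
  set Nq : ℝ≥0∞ := eLpNorm (u - v) (ENNReal.ofReal q) μ with hNqdef
  have hNqfin : Nq ≠ ∞ := ((hD u hu).sub (hD v hv)).eLpNorm_lt_top.ne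
  have hNq0 : Nq ≠ 0 := by
    intro h0
    have huv : u - v =ᵐ[μ] 0 :=
      (eLpNorm_eq_zero_iff ((hAE u hu).sub (hAE v hv))
        (by simp [ENNReal.ofReal_eq_zero, not_le, hq0])).mp h0
    exact hNs (by rw [eLpNorm_congr_ae huv, eLpNorm_zero])
  set Nqr : ℝ := Nq.toReal with hNqrdef
  have hNqr : 0 < Nqr := ENNReal.toReal_pos hNq0 hNqfin
  -- the sequence
  set Fe : ℕ → ℝ≥0∞ := fun n => eLpNorm (T (t / 2 ^ n) u - T (t / 2 ^ n) v) r μ with hFe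
  have htn : ∀ n : ℕ, 0 < t / 2 ^ n := fun n => by positivity
  have hFbd : ∀ n : ℕ, Fe n ≤ ENNReal.ofReal (C * (t / 2 ^ n) ^ (-a) *
      Real.exp (ω * β * (t / 2 ^ n))) * Nq ^ γ := fun n => hreg _ (htn n) u hu v hv
  have hFfin : ∀ n : ℕ, Fe n ≠ ∞ := fun n =>
    ((hFbd n).trans_lt (ENNReal.mul_lt_top ENNReal.ofReal_lt_top
      (ENNReal.rpow_lt_top_of_nonneg hγ.le hNqfin))).ne
  set an : ℕ → ℝ := fun n => C * (t / 2 ^ (n+1)) ^ (-a) * Real.exp (ω * β * (t / 2 ^ (n+1))) *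
      (Real.exp (ω * (t / 2 ^ (n+1))) * Nsr) ^ (γ * θs) with han
  have hanpos : ∀ n, 0 < an n := fun n => by
    rw [han]
    have := htn (n+1)
    positivity
  -- key recursion in ℝ≥0∞
  have hrecE : ∀ n : ℕ, Fe n ≤ ENNReal.ofReal (an n) * Fe (n+1) ^ σ := by
    intro n
    set τ : ℝ := t / 2 ^ (n+1) with hτdef
    have hτ : 0 < τ := htn (n+1)
    have hu' : T τ u ∈ D := hmap τ hτ.le u hu
    have hv' : T τ v ∈ D := hmap τ hτ.le v hv
    have hsplit : t / 2 ^ n = τ + τ := by rw [hτdef, pow_succ]; ring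
    have hTu : T (t / 2 ^ n) u = T τ (T τ u) := by rw [hsplit]; exact hsemi τ τ hτ.le hτ.le u hu
    have hTv : T (t / 2 ^ n) v = T τ (T τ v) := by rw [hsplit]; exact hsemi τ τ hτ.le hτ.le v hv
    have h2 := hreg τ hτ (T τ u) hu' (T τ v) hv'
    have h3 := interp' (μ := μ) ((hAE _ hu').sub (hAE _ hv')) hs0 hsq hqr hθs
    have h4 := hgrow τ hτ.le u hu v hv
    have h5 : eLpNorm (T τ u - T τ v) r μ = Fe (n+1) := rfl
    have hNseq : eLpNorm (u - v) (ENNReal.ofReal s) μ = ENNReal.ofReal Nsr :=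
      (ENNReal.ofReal_toReal hNsfin).symm
    calc Fe n = eLpNorm (T τ (T τ u) - T τ (T τ v)) r μ := by rw [hFe]; simp only; rw [hTu, hTv]
      _ ≤ ENNReal.ofReal (C * τ ^ (-a) * Real.exp (ω * β * τ)) *
          eLpNorm (T τ u - T τ v) (ENNReal.ofReal q) μ ^ γ := h2
      _ ≤ ENNReal.ofReal (C * τ ^ (-a) * Real.exp (ω * β * τ)) *
          ((ENNReal.ofReal (Real.exp (ω * τ) * Nsr)) ^ θs * Fe (n+1) ^ (1 - θs)) ^ γ := by
          gcongr
          refine h3.trans ?_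
          rw [h5]
          gcongr
          refine h4.trans_eq ?_
          rw [hNseq, ENNReal.ofReal_mul (Real.exp_pos _).le]
      _ = ENNReal.ofReal (an n) * Fe (n+1) ^ σ := by
          rw [ENNReal.mul_rpow_of_nonneg _ _ hγ.le, ← ENNReal.rpow_mul, ← ENNReal.rpow_mul,
            ← mul_assoc, ENNReal.ofReal_rpow_of_pos (by positivity),
            ← ENNReal.ofReal_mul (by positivity), han, hσ]
          rw [hτdef]
          ring_nf
  -- real form
  set fr : ℕ → ℝ := fun n => (Fe n).toReal with hfr
  have hfr0 : ∀ n, 0 ≤ fr n := fun n => ENNReal.toReal_nonneg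
  have hrecR : ∀ n : ℕ, fr n ≤ an n * fr (n+1) ^ σ := by
    intro n
    have h := hrecE n
    have hrhs : ENNReal.ofReal (an n) * Fe (n+1) ^ σ ≠ ∞ :=
      (ENNReal.mul_lt_top ENNReal.ofReal_lt_top
        (ENNReal.rpow_lt_top_of_nonneg hσ0.le (hFfin (n+1)))).ne
    have := ENNReal.toReal_mono hrhs h
    rwa [ENNReal.toReal_mul, ENNReal.toReal_ofReal (hanpos n).le, ← ENNReal.toReal_rpow] at this
  have hbdR : ∀ n : ℕ, fr n ≤ C * (t / 2 ^ n) ^ (-a) * Real.exp (ω * β * (t / 2 ^ n))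
      * Nqr ^ γ := by
    intro n
    have h := hFbd n
    have hrhs : ENNReal.ofReal (C * (t / 2 ^ n) ^ (-a) * Real.exp (ω * β * (t / 2 ^ n)))
        * Nq ^ γ ≠ ∞ :=
      (ENNReal.mul_lt_top ENNReal.ofReal_lt_top
        (ENNReal.rpow_lt_top_of_nonneg hγ.le hNqfin)).ne
    have := ENNReal.toReal_mono hrhs h
    rwa [ENNReal.toReal_mul, ENNReal.toReal_ofReal (by have := htn n; positivity),
      ← ENNReal.toReal_rpow] at this
  -- exponential forms
  set A : ℝ := Real.log C - a * Real.log t + γ * θs * Real.log Nsr with hA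
  set B : ℝ := a * Real.log 2 with hB
  set E : ℝ := ω * (β + γ * θs) * t with hE
  set c : ℝ := Real.log C - a * Real.log t + ω * β * t + γ * Real.log Nqr with hc
  have hB0 : 0 ≤ B := by
    rw [hB]; exact mul_nonneg ha.le (Real.log_nonneg one_le_two)
  have hE0 : 0 ≤ E := by
    rw [hE]
    refine mul_nonneg (mul_nonneg hω ?_) ht.le
    nlinarith [mul_pos hγ hθs0]
  have hlogdiv : ∀ m : ℕ, Real.log (t / 2 ^ m) = Real.log t - m * Real.log 2 := by
    intro m
    rw [Real.log_div ht.ne' (by positivity), Real.log_pow]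
  have hdiveq : ∀ m : ℕ, t / 2 ^ m = t * (1/2 : ℝ) ^ m := by
    intro m
    rw [div_pow, one_pow]
    ring
  have han' : ∀ n : ℕ, an n = Real.exp (A + B * (n + 1) + E * (1/2) ^ (n + 1)) := by
    intro n
    have hτ : (0:ℝ) < t / 2 ^ (n+1) := htn (n+1)
    have step : an n = Real.exp (Real.log C + Real.log (t / 2 ^ (n+1)) * (-a) +
        ω * β * (t / 2 ^ (n+1)) +
        (ω * (t / 2 ^ (n+1)) + Real.log Nsr) * (γ * θs)) := by
      rw [Real.exp_add, Real.exp_add, Real.exp_add, Real.exp_log hC,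
        ← Real.rpow_def_of_pos hτ, han]
      simp only
      congr 1
      rw [Real.rpow_def_of_pos (by positivity : (0:ℝ) < Real.exp (ω * (t / 2 ^ (n+1))) * Nsr),
        Real.log_mul (Real.exp_ne_zero _) hNsr.ne', Real.log_exp]
    rw [step]
    congr 1
    rw [hlogdiv (n+1), hdiveq (n+1), hA, hB, hE]
    push_cast
    ring
  have hbd' : ∀ n : ℕ, fr n ≤ Real.exp (c + B * n) := by
    intro n
    refine (hbdR n).trans ?_
    have hτ : (0:ℝ) < t / 2 ^ n := htn n
    have heq : C * (t / 2 ^ n) ^ (-a) * Real.exp (ω * β * (t / 2 ^ n)) * Nqr ^ γ =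
        Real.exp (Real.log C + Real.log (t / 2 ^ n) * (-a) + ω * β * (t / 2 ^ n) +
          Real.log Nqr * γ) := by
      rw [Real.exp_add, Real.exp_add, Real.exp_add, Real.exp_log hC,
        ← Real.rpow_def_of_pos hτ, ← Real.rpow_def_of_pos hNqr]
    rw [heq, Real.exp_le_exp, hlogdiv n, hdiveq n, hc, hB]
    have hhalf : (1/2 : ℝ) ^ n ≤ 1 := pow_le_one₀ (by norm_num) (by norm_num)
    have hωβt : 0 ≤ ω * β * t := mul_nonneg (mul_nonneg hω hβ.le) ht.le
    nlinarith [mul_le_mul_of_nonneg_left hhalf hωβt]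
  have hrec' : ∀ n : ℕ, fr n ≤ Real.exp (A + B * (n + 1) + E * (1/2) ^ (n + 1)) *
      fr (n+1) ^ σ := by
    intro n
    rw [← han' n]
    exact hrecR n
  have key := iterate_bound' hσ0 hσ1 hB0 hE0 hfr0 hrec' hbd'
  -- final comparison
  set gs : ℝ := γ * θs / (1 - σ) with hgs
  have hEle : E / (2 - σ) ≤ ω * ((β / 2 + γ * θs) / (1 - σ)) * t := by
    have hγθs : 0 < γ * θs := mul_pos hγ hθs0
    have h1 : (β + γ * θs) * (1 - σ) ≤ (β / 2 + γ * θs) * (2 - σ) := by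
      have expand : (β / 2 + γ * θs) * (2 - σ) - (β + γ * θs) * (1 - σ) =
          σ * β / 2 + γ * θs := by ring
      have : 0 < σ * β := mul_pos hσ0 hβ
      linarith
    have h2 : 0 ≤ ω * t := mul_nonneg hω ht.le
    have h3 : ω * t * ((β + γ * θs) * (1 - σ)) ≤ ω * t * ((β / 2 + γ * θs) * (2 - σ)) :=
      mul_le_mul_of_nonneg_left h1 h2
    rw [show ω * ((β / 2 + γ * θs) / (1 - σ)) * t = (ω * (β / 2 + γ * θs) * t) / (1 - σ)
        by ring, hE, div_le_div_iff₀ (by linarith) (by linarith)]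
    nlinarith [h3]
  have hfinal : fr 0 ≤ (C * 2 ^ (a / (1 - σ))) ^ (1 / (1 - σ)) * t ^ (-(a / (1 - σ))) *
      Real.exp (ω * ((β / 2 + γ * θs) / (1 - σ)) * t) * Nsr ^ gs := by
    refine key.trans ?_
    have hrhs : (C * 2 ^ (a / (1 - σ))) ^ (1 / (1 - σ)) * t ^ (-(a / (1 - σ))) *
        Real.exp (ω * ((β / 2 + γ * θs) / (1 - σ)) * t) * Nsr ^ gs =
        Real.exp ((Real.log C + a / (1 - σ) * Real.log 2) * (1 / (1 - σ)) +
          Real.log t * (-(a / (1 - σ))) + ω * ((β / 2 + γ * θs) / (1 - σ)) * t +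
          Real.log Nsr * gs) := by
      rw [Real.exp_add, Real.exp_add, Real.exp_add,
        ← Real.log_rpow two_pos (a / (1 - σ)), ← Real.log_mul hC.ne' (by positivity),
        ← Real.rpow_def_of_pos (show (0:ℝ) < C * 2 ^ (a / (1 - σ)) by positivity),
        ← Real.rpow_def_of_pos ht, ← Real.rpow_def_of_pos hNsr]
    rw [hrhs, Real.exp_le_exp]
    have hident : (Real.log C + a / (1 - σ) * Real.log 2) * (1 / (1 - σ)) +
        Real.log t * (-(a / (1 - σ))) + Real.log Nsr * gs =
        A / (1 - σ) + B / (1 - σ) ^ 2 := by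
      rw [hA, hB, hgs]
      field_simp
      ring
    linarith [hEle, hident.ge]
  -- assemble
  have hgoalL : eLpNorm (T t u - T t v) r μ = Fe 0 := by
    rw [hFe]
    norm_num
  have hKnonneg : (0:ℝ) ≤ (C * 2 ^ (a / (1 - σ))) ^ (1 / (1 - σ)) * t ^ (-(a / (1 - σ))) *
      Real.exp (ω * ((β / 2 + γ * θs) / (1 - σ)) * t) := by positivity
  calc eLpNorm (T t u - T t v) r μ = Fe 0 := hgoalL
    _ = ENNReal.ofReal (fr 0) := (ENNReal.ofReal_toReal (hFfin 0)).symm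
    _ ≤ ENNReal.ofReal ((C * 2 ^ (a / (1 - σ))) ^ (1 / (1 - σ)) * t ^ (-(a / (1 - σ))) *
        Real.exp (ω * ((β / 2 + γ * θs) / (1 - σ)) * t) * Nsr ^ gs) :=
        ENNReal.ofReal_le_ofReal hfinal
    _ = ENNReal.ofReal ((C * 2 ^ (a / (1 - σ))) ^ (1 / (1 - σ)) * t ^ (-(a / (1 - σ))) *
        Real.exp (ω * ((β / 2 + γ * θs) / (1 - σ)) * t)) * ENNReal.ofReal (Nsr ^ gs) :=
        ENNReal.ofReal_mul hKnonneg
    _ = ENNReal.ofReal ((C * 2 ^ (a / (1 - σ))) ^ (1 / (1 - σ)) * t ^ (-(a / (1 - σ))) *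
        Real.exp (ω * ((β / 2 + γ * θs) / (1 - σ)) * t)) *
        eLpNorm (u - v) (ENNReal.ofReal s) μ ^ gs := by
        rw [← ENNReal.ofReal_rpow_of_pos hNsr, hNsrdef, ENNReal.ofReal_toReal hNsfin]

end Statement3
end

section
/- Let 1 ≤ s < q < r ≤ ∞, ω ≥ 0, u₀ ∈ L^s(Σ,μ) ∩ L^r(Σ,μ), and let (T_t)_{t≥0} be a semigroup on a subset D of L^q(Σ,μ) such that ‖T_t u − u₀‖_s ≤ e^{ωt}‖u − u₀‖_s (in [0,∞]) for all t ≥ 0 and u ∈ D. Suppose there exist α > 0, β, γ > 0 and C > 0 such that ‖T_t u − u₀‖_r ≤ C·t^{−α}·e^{ωβt}·‖u − u₀‖_q^γ for all t > 0 and u ∈ D. Set θ_s := (r−q)s/(q(r−s)) if r < ∞ and θ_s := s/q if r = ∞, and assume γ(1 − θ_s) < 1. Then, with θ := 1 − γ(1 − θ_s), α_s := α/θ, β_s := (β/2 + γθ_s)/θ and γ_s := γθ_s/θ, one has ‖T_t u − u₀‖_r ≤ (C·2^{α/θ})^{1/θ}·t^{−α_s}·e^{ωβ_s t}·‖u − u₀‖_s^{γ_s}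 for every t > 0 and all u ∈ D ∩ L^s(Σ,μ). -/
open MeasureTheory Filter ENNReal

namespace Statement4

variable {α : Type*} [MeasurableSpace α]

/-- A (nonlinear) semigroup acting on a subset `D` of a function space:
a family `(T_t)_{t ≥ 0}` of maps of `D` into itself with `T_0 = id` and
`T_{t+s} = T_t ∘ T_s`. -/
def IsSemigroupOn (D : Set (α → ℝ)) (T : ℝ → (α → ℝ) → (α → ℝ)) : Prop :=
  (∀ t : ℝ, 0 ≤ t → ∀ u ∈ D, T t u ∈ D) ∧
  (∀ u ∈ D, T 0 u = u) ∧
  (∀ s t : ℝ, 0 ≤ s → 0 ≤ t → ∀ u ∈ D, T (t + s) u = T t (T s u))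

section Aux

variable {μ : MeasureTheory.Measure α}

theorem interp_aux {f : α → ℝ} (hf : AEStronglyMeasurable f μ)
    {s q : ℝ} {r : ℝ≥0∞} (hs : 0 < s) (hsq : s < q) (hqr : ENNReal.ofReal q < r)
    {θ : ℝ}
    (hθ : θ = if r = ∞ then s / q else ((r.toReal - q) * s) / (q * (r.toReal - s))) :
    eLpNorm f (ENNReal.ofReal q) μ ≤
      eLpNorm f (ENNReal.ofReal s) μ ^ θ * eLpNorm f r μ ^ (1 - θ) := by
  have hq : 0 < q := hs.trans hsq
  have hqs0 : ENNReal.ofReal q ≠ 0 := by simp [hq]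
  have hNq : eLpNorm f (ENNReal.ofReal q) μ
      = (∫⁻ x, (‖f x‖₊ : ℝ≥0∞) ^ q ∂μ) ^ (1/q) := by
    rw [eLpNorm_eq_lintegral_rpow_enorm_toReal hqs0 ENNReal.ofReal_ne_top,
      ENNReal.toReal_ofReal hq.le]; rfl
  have hNs : eLpNorm f (ENNReal.ofReal s) μ
      = (∫⁻ x, (‖f x‖₊ : ℝ≥0∞) ^ s ∂μ) ^ (1/s) := by
    rw [eLpNorm_eq_lintegral_rpow_enorm_toReal (by simp [hs]) ENNReal.ofReal_ne_top,
      ENNReal.toReal_ofReal hs.le]; rfl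
  by_cases hr : r = ∞
  · subst hr
    simp only [if_true] at hθ
    have hθ' : θ = s / q := hθ
    rcases eq_or_ne (eLpNormEssSup f μ) ∞ with hE | hE
    · rcases eq_or_ne (eLpNorm f (ENNReal.ofReal s) μ) 0 with h0 | h0
      · have hf0 : f =ᵐ[μ] 0 := (eLpNorm_eq_zero_iff hf (by simp [hs])).mp h0
        rw [eLpNorm_congr_ae hf0, eLpNorm_zero]
        exact zero_le
      · rw [eLpNorm_exponent_top, hE]
        rw [ENNReal.top_rpow_of_pos (by
          have : θ < 1 := by rw [hθ']; rw [div_lt_one hq]; exact hsq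
          linarith)]
        rw [ENNReal.mul_top]
        · exact le_top
        · intro h
          have hθpos : 0 < θ := by rw [hθ']; positivity
          rcases ENNReal.rpow_eq_zero_iff.mp h with ⟨h1, _⟩ | ⟨_, h2⟩
          · exact h0 h1
          · linarith
    · -- essSup finite
      have hae : ∀ᵐ x ∂μ, (‖f x‖₊ : ℝ≥0∞) ^ q ≤
          (‖f x‖₊ : ℝ≥0∞) ^ s * (eLpNormEssSup f μ) ^ (q - s) := by
        filter_upwards [ae_le_eLpNormEssSup (f := f) (μ := μ)] with x hx
        have : (‖f x‖₊ : ℝ≥0∞) ^ q = (‖f x‖₊ : ℝ≥0∞) ^ s * (‖f x‖₊ : ℝ≥0∞) ^ (q - s) := by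
          rw [← ENNReal.rpow_add_of_nonneg _ _ hs.le (by linarith)]
          ring_nf
        rw [this]
        exact mul_le_mul_right (ENNReal.rpow_le_rpow hx (by linarith)) _
      have hle : ∫⁻ x, (‖f x‖₊ : ℝ≥0∞) ^ q ∂μ ≤
          (∫⁻ x, (‖f x‖₊ : ℝ≥0∞) ^ s ∂μ) * (eLpNormEssSup f μ) ^ (q - s) := by
        calc ∫⁻ x, (‖f x‖₊ : ℝ≥0∞) ^ q ∂μ
            ≤ ∫⁻ x, (‖f x‖₊ : ℝ≥0∞) ^ s * (eLpNormEssSup f μ) ^ (q - s) ∂μ :=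
              lintegral_mono_ae hae
          _ = _ := lintegral_mul_const' _ _ (ENNReal.rpow_ne_top_of_nonneg (by linarith) hE)
      calc eLpNorm f (ENNReal.ofReal q) μ
          = (∫⁻ x, (‖f x‖₊ : ℝ≥0∞) ^ q ∂μ) ^ (1/q) := hNq
        _ ≤ ((∫⁻ x, (‖f x‖₊ : ℝ≥0∞) ^ s ∂μ) * (eLpNormEssSup f μ) ^ (q - s)) ^ (1/q) :=
            ENNReal.rpow_le_rpow hle (by positivity)
        _ = eLpNorm f (ENNReal.ofReal s) μ ^ θ * eLpNorm f ∞ μ ^ (1 - θ) := by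
            rw [ENNReal.mul_rpow_of_nonneg _ _ (by positivity), hNs,
              ← ENNReal.rpow_mul, ← ENNReal.rpow_mul, eLpNorm_exponent_top]
            congr 1
            · congr 1
              rw [hθ']; field_simp
            · congr 1
              rw [hθ']; field_simp
  · -- r finite
    have hrq : q < r.toReal := by
      rw [← ENNReal.ofReal_lt_iff_lt_toReal hq.le hr] at *
      exact hqr
    have hr0 : (0:ℝ) < r.toReal := hq.trans hrq
    simp only [hr, if_false] at hθ
    have hrs : 0 < r.toReal - s := by linarith
    have hrq' : 0 < r.toReal - q := by linarith
    have hθpos : 0 < θ := by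
      rw [hθ]; exact div_pos (mul_pos hrq' hs) (mul_pos hq hrs)
    have hθlt : θ < 1 := by
      rw [hθ, div_lt_one (mul_pos hq hrs)]
      nlinarith
    set p1 := θ * q / s with hp1
    set p2 := (1 - θ) * q / r.toReal with hp2
    have hp1pos : 0 < p1 := by positivity
    have hp2pos : 0 < p2 := by
      have : 0 < 1 - θ := by linarith
      positivity
    have hsum : p1 + p2 = 1 := by
      have h1 : r.toReal - s ≠ 0 := hrs.ne'
      rw [hp1, hp2, hθ]
      field_simp
      ring
    have e1 : s * p1 = θ * q := by rw [hp1]; field_simp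
    have e2 : r.toReal * p2 = (1 - θ) * q := by rw [hp2]; field_simp
    have e3 : p1 * (1/q) = 1/s * θ := by rw [hp1]; field_simp
    have e4 : p2 * (1/q) = 1/r.toReal * (1 - θ) := by rw [hp2]; field_simp
    have hNr : eLpNorm f r μ = (∫⁻ x, (‖f x‖₊ : ℝ≥0∞) ^ r.toReal ∂μ) ^ (1/r.toReal) :=
      eLpNorm_eq_lintegral_rpow_enorm_toReal (by rintro rfl; simp at hqr) hr
    have key : ∫⁻ x, (‖f x‖₊ : ℝ≥0∞) ^ q ∂μ ≤
        (∫⁻ x, (‖f x‖₊ : ℝ≥0∞) ^ s ∂μ) ^ p1 *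
          (∫⁻ x, (‖f x‖₊ : ℝ≥0∞) ^ r.toReal ∂μ) ^ p2 := by
      have := ENNReal.lintegral_mul_norm_pow_le (μ := μ)
        (f := fun x => (‖f x‖₊ : ℝ≥0∞) ^ s) (g := fun x => (‖f x‖₊ : ℝ≥0∞) ^ r.toReal)
        (hf.enorm.pow_const s) (hf.enorm.pow_const r.toReal)
        hp1pos.le hp2pos.le hsum
      refine le_trans (le_of_eq ?_) this
      refine lintegral_congr fun x => ?_
      rw [← ENNReal.rpow_mul, ← ENNReal.rpow_mul,
        ← ENNReal.rpow_add_of_nonneg _ _ (by positivity) (by positivity)]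
      rw [e1, e2]
      congr 1
      ring
    calc eLpNorm f (ENNReal.ofReal q) μ
        = (∫⁻ x, (‖f x‖₊ : ℝ≥0∞) ^ q ∂μ) ^ (1/q) := hNq
      _ ≤ ((∫⁻ x, (‖f x‖₊ : ℝ≥0∞) ^ s ∂μ) ^ p1 *
            (∫⁻ x, (‖f x‖₊ : ℝ≥0∞) ^ r.toReal ∂μ) ^ p2) ^ (1/q) :=
          ENNReal.rpow_le_rpow key (by positivity)
      _ = eLpNorm f (ENNReal.ofReal s) μ ^ θ * eLpNorm f r μ ^ (1 - θ) := by
          rw [ENNReal.mul_rpow_of_nonneg _ _ (by positivity), hNs, hNr,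
            ← ENNReal.rpow_mul, ← ENNReal.rpow_mul, ← ENNReal.rpow_mul, ← ENNReal.rpow_mul]
          rw [e3, e4]

theorem rearrange (c1 c2 x1 x2 θs γ : ℝ) (hc1 : 0 ≤ c1) (hc2 : 0 ≤ c2)
    (hx1 : 0 < x1) (hx2 : 0 < x2) (hθs : 0 ≤ θs) (hθs1 : θs ≤ 1) (hγ : 0 ≤ γ)
    (N M : ℝ≥0∞) :
    ENNReal.ofReal c1 * (ENNReal.ofReal c2 *
        ((ENNReal.ofReal x1 * N) ^ θs * (ENNReal.ofReal x2 * M) ^ (1 - θs)) ^ γ)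
      = ENNReal.ofReal (c1 * c2 * (x1 ^ θs * x2 ^ (1 - θs)) ^ γ) *
          (N ^ (θs * γ) * M ^ ((1 - θs) * γ)) := by
  have h1θ : (0:ℝ) ≤ 1 - θs := by linarith
  have hreal : c1 * c2 * (x1 ^ θs * x2 ^ (1 - θs)) ^ γ
      = c1 * (c2 * ((x1 ^ θs) ^ γ * (x2 ^ (1 - θs)) ^ γ)) := by
    rw [Real.mul_rpow (by positivity) (by positivity)]; ring
  rw [ENNReal.mul_rpow_of_nonneg _ _ hθs, ENNReal.mul_rpow_of_nonneg _ _ h1θ,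
    mul_mul_mul_comm, ENNReal.mul_rpow_of_nonneg _ _ hγ, ENNReal.mul_rpow_of_nonneg _ _ hγ,
    ENNReal.mul_rpow_of_nonneg _ _ hγ,
    ← ENNReal.rpow_mul N, ← ENNReal.rpow_mul M,
    ENNReal.ofReal_rpow_of_pos hx1, ENNReal.ofReal_rpow_of_pos hx2,
    ENNReal.ofReal_rpow_of_pos (by positivity : (0:ℝ) < x1 ^ θs),
    ENNReal.ofReal_rpow_of_pos (by positivity : (0:ℝ) < x2 ^ (1 - θs)),
    hreal, ENNReal.ofReal_mul hc1, ENNReal.ofReal_mul hc2,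
    ENNReal.ofReal_mul (by positivity)]
  ring

end Aux

theorem coef_le (a β γ θs ω θ αs βs C τ : ℝ) (ha : 0 < a) (hβ : 0 < β) (hγ : 0 < γ)
    (hθs : 0 < θs) (hθs1 : θs < 1) (hω : 0 ≤ ω) (hC : 0 < C) (hτ : 0 < τ)
    (hθd : θ = 1 - γ * (1 - θs)) (hθpos : 0 < θ)
    (hαs : αs = a / θ) (hβsd : βs = (β / 2 + γ * θs) / θ) :
    (τ ^ αs * Real.exp (-(ω * βs * τ))) * (C * (τ/2) ^ (-a) * Real.exp (ω * β * (τ/2))) *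
      ((Real.exp (ω * (τ/2)) ^ θs * (((τ/2) ^ αs * Real.exp (-(ω * βs * (τ/2))))⁻¹) ^ (1 - θs)) ^ γ)
      ≤ C * 2 ^ αs := by
  obtain ⟨v, rfl⟩ : ∃ v, τ = 2 * v := ⟨τ / 2, by ring⟩
  have hv : 0 < v := by linarith
  have h22 : (2:ℝ) * v / 2 = v := by ring
  rw [h22]
  have E1 : ∀ x : ℝ, v ^ x = Real.exp (Real.log v * x) := fun x => Real.rpow_def_of_pos hv x
  have E3 : ∀ x y : ℝ, Real.exp x ^ y = Real.exp (x * y) := fun x y => (Real.exp_mul x y).symm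
  have E4 : ∀ x y z : ℝ, (Real.exp x * Real.exp y) ^ z = Real.exp ((x + y) * z) := fun x y z => by
    rw [← Real.exp_add, E3]
  rw [Real.mul_rpow (by norm_num : (0:ℝ) ≤ 2) hv.le]
  simp only [E1, ← Real.exp_add, ← Real.exp_neg, mul_inv, E3, E4]
  have hmerge : ∀ A1 A2 A3 A4 A5 : ℝ,
      2 ^ αs * Real.exp A1 * Real.exp A2 * (C * Real.exp A3 * Real.exp A4) * Real.exp A5
        = C * 2 ^ αs * Real.exp (A1 + A2 + A3 + A4 + A5) := by
    intro A1 A2 A3 A4 A5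
    rw [Real.exp_add, Real.exp_add, Real.exp_add, Real.exp_add]; ring
  rw [hmerge]
  have h1θ : γ * (1 - θs) - (1 - θ) = 0 := by rw [hθd]; ring
  have hαθ : αs * θ - a = 0 := by rw [hαs]; field_simp; ring
  have hβsθ : βs * θ = β / 2 + γ * θs := by rw [hβsd]; field_simp
  have hθle1 : θ < 1 := by nlinarith [mul_pos hγ (by linarith : (0:ℝ) < 1 - θs)]
  have hβspos : 0 < βs := by
    rw [hβsd]
    have : 0 < γ * θs := mul_pos hγ hθs
    positivity
  have hS : Real.log v * αs + -(ω * βs * (2 * v)) + Real.log v * -a + ω * β * v +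
      (ω * v * θs + -(Real.log v * αs + -(ω * βs * v)) * (1 - θs)) * γ ≤ 0 := by
    have e : Real.log v * αs + -(ω * βs * (2 * v)) + Real.log v * -a + ω * β * v +
        (ω * v * θs + -(Real.log v * αs + -(ω * βs * v)) * (1 - θs)) * γ
        = Real.log v * (αs * θ - a) + ω * v * (β + θs * γ - βs * (1 + θ))
          + (ω * βs * v - Real.log v * αs) * (γ * (1 - θs) - (1 - θ)) := by ring
    rw [e, hαθ, h1θ]
    have hX : β + θs * γ - βs * (1 + θ) ≤ 0 := by
      nlinarith [hβsθ, mul_nonneg hβspos.le (by linarith : (0:ℝ) ≤ 1 - θ)]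
    have : ω * v * (β + θs * γ - βs * (1 + θ)) ≤ 0 :=
      mul_nonpos_of_nonneg_of_nonpos (by positivity) hX
    simpa using this
  calc C * 2 ^ αs * Real.exp (Real.log v * αs + -(ω * βs * (2 * v)) + Real.log v * -a
        + ω * β * v + (ω * v * θs + -(Real.log v * αs + -(ω * βs * v)) * (1 - θs)) * γ)
      ≤ C * 2 ^ αs * 1 := by
        gcongr
        exact Real.exp_le_one_iff.mpr hS
    _ = C * 2 ^ αs := by ring


/-- **Extrapolation towards `L¹` (without differences).**
If a semigroup on `D ⊆ L^q(Σ,μ)` satisfies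
`‖T_t u − u₀‖_s ≤ e^{ωt} ‖u − u₀‖_s` and the `L^q`–`L^r` regularisation estimate
`‖T_t u − u₀‖_r ≤ C t^{−α} e^{ωβt} ‖u − u₀‖_q^γ` for some
`u₀ ∈ L^s ∩ L^r(Σ,μ)`, then (with `θ_s` as usual and `γ(1−θ_s) < 1`) it satisfies
`‖T_t u − u₀‖_r ≤ (C 2^{α/θ})^{1/θ} t^{−α_s} e^{ωβ_s t} ‖u − u₀‖_s^{γ_s}`. -/
theorem extrapolation_towards_L1_without_differences
    (μ : Measure α) [SigmaFinite μ]
    (s q : ℝ) (r : ℝ≥0∞) (hs : 1 ≤ s) (hsq : s < q) (hqr : ENNReal.ofReal q < r)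
    (ω : ℝ) (hω : 0 ≤ ω)
    (u₀ : α → ℝ) (hu₀s : MemLp u₀ (ENNReal.ofReal s) μ) (hu₀r : MemLp u₀ r μ)
    (D : Set (α → ℝ)) (hD : ∀ u ∈ D, MemLp u (ENNReal.ofReal q) μ)
    (T : ℝ → (α → ℝ) → (α → ℝ)) (hT : IsSemigroupOn D T)
    (hgrow : ∀ t : ℝ, 0 ≤ t → ∀ u ∈ D,
      eLpNorm (T t u - u₀) (ENNReal.ofReal s) μ ≤
        ENNReal.ofReal (Real.exp (ω * t)) * eLpNorm (u - u₀) (ENNReal.ofReal s) μ)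
    (a β γ C : ℝ) (ha : 0 < a) (hβ : 0 < β) (hγ : 0 < γ) (hC : 0 < C)
    (hreg : ∀ t : ℝ, 0 < t → ∀ u ∈ D,
      eLpNorm (T t u - u₀) r μ ≤
        ENNReal.ofReal (C * t ^ (-a) * Real.exp (ω * β * t)) *
          eLpNorm (u - u₀) (ENNReal.ofReal q) μ ^ γ)
    (θs : ℝ)
    (hθs : θs = if r = ∞ then s / q else ((r.toReal - q) * s) / (q * (r.toReal - s)))
    (hsmall : γ * (1 - θs) < 1) :
    ∀ t : ℝ, 0 < t → ∀ u ∈ D, MemLp u (ENNReal.ofReal s) μ →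
      eLpNorm (T t u - u₀) r μ ≤
        ENNReal.ofReal ((C * 2 ^ (a / (1 - γ * (1 - θs)))) ^ (1 / (1 - γ * (1 - θs))) *
            t ^ (-(a / (1 - γ * (1 - θs)))) *
            Real.exp (ω * ((β / 2 + γ * θs) / (1 - γ * (1 - θs))) * t)) *
          eLpNorm (u - u₀) (ENNReal.ofReal s) μ ^ (γ * θs / (1 - γ * (1 - θs))) := by
  have hs0 : (0:ℝ) < s := lt_of_lt_of_le one_pos hs
  have hq : (0:ℝ) < q := hs0.trans hsq
  have hθspos : 0 < θs := by
    rcases eq_or_ne r ∞ with hr | hr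
    · rw [hθs, if_pos hr]; positivity
    · have hrq : q < r.toReal := by
        rwa [ENNReal.ofReal_lt_iff_lt_toReal hq.le hr] at hqr
      rw [hθs, if_neg hr]
      exact div_pos (mul_pos (by linarith) hs0) (mul_pos hq (by linarith))
  have hθslt : θs < 1 := by
    rcases eq_or_ne r ∞ with hr | hr
    · rw [hθs, if_pos hr, div_lt_one hq]; exact hsq
    · have hrq : q < r.toReal := by
        rwa [ENNReal.ofReal_lt_iff_lt_toReal hq.le hr] at hqr
      rw [hθs, if_neg hr, div_lt_one (mul_pos hq (by linarith))]
      nlinarith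
  have hδpos : 0 < γ * (1 - θs) := mul_pos hγ (by linarith)
  intro t ht u hu _
  set θ : ℝ := 1 - γ * (1 - θs) with hθd
  have hθpos : 0 < θ := by rw [hθd]; linarith
  have hθlt1 : θ < 1 := by rw [hθd]; linarith
  set αs : ℝ := a / θ with hαsd
  set βs : ℝ := (β / 2 + γ * θs) / θ with hβsd
  have hαspos : 0 < αs := by rw [hαsd]; positivity
  have hγθs : 0 < γ * θs := mul_pos hγ hθspos
  have hβspos : 0 < βs := by rw [hβsd]; positivity
  have haαs : a ≤ αs := by
    rw [hαsd, le_div_iff₀ hθpos]; nlinarith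
  have hKpos : 0 < C * 2 ^ αs := by positivity
  -- u₀ ∈ L^q by interpolation
  have hu₀q : MemLp u₀ (ENNReal.ofReal q) μ := by
    refine ⟨hu₀s.1, ?_⟩
    calc eLpNorm u₀ (ENNReal.ofReal q) μ
        ≤ eLpNorm u₀ (ENNReal.ofReal s) μ ^ θs * eLpNorm u₀ r μ ^ (1 - θs) :=
          interp_aux hu₀s.1 hs0 hsq hqr hθs
      _ < ∞ := ENNReal.mul_lt_top
          (ENNReal.rpow_lt_top_of_nonneg hθspos.le hu₀s.2.ne)
          (ENNReal.rpow_lt_top_of_nonneg (by linarith) hu₀r.2.ne)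
  have hQfin : eLpNorm (u - u₀) (ENNReal.ofReal q) μ ≠ ∞ := ((hD u hu).sub hu₀q).2.ne
  have hmeasw : ∀ w ∈ D, AEStronglyMeasurable (w - u₀) μ :=
    fun w hw => ((hD w hw).sub hu₀q).1
  set co : ℝ → ℝ := fun x => x ^ αs * Real.exp (-(ω * βs * x)) with hco
  have hcopos : ∀ x : ℝ, 0 < x → 0 < co x := by
    intro x hx; rw [hco]; positivity
  set M : ℝ≥0∞ := ⨆ τ : Set.Ioc (0:ℝ) t,
      ENNReal.ofReal (co τ.1) * eLpNorm (T τ.1 u - u₀) r μ with hMd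
  have hFM : ∀ τ ∈ Set.Ioc (0:ℝ) t,
      ENNReal.ofReal (co τ) * eLpNorm (T τ u - u₀) r μ ≤ M := by
    intro τ hτ
    rw [hMd]
    exact le_iSup (fun σ : Set.Ioc (0:ℝ) t =>
      ENNReal.ofReal (co σ.1) * eLpNorm (T σ.1 u - u₀) r μ) ⟨τ, hτ⟩
  -- a priori bound showing M < ∞
  have hFbound : ∀ τ ∈ Set.Ioc (0:ℝ) t,
      ENNReal.ofReal (co τ) * eLpNorm (T τ u - u₀) r μ ≤
        ENNReal.ofReal (C * t ^ (αs - a) * Real.exp (ω * β * t)) *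
          eLpNorm (u - u₀) (ENNReal.ofReal q) μ ^ γ := by
    rintro τ ⟨hτ0, hτt⟩
    calc ENNReal.ofReal (co τ) * eLpNorm (T τ u - u₀) r μ
        ≤ ENNReal.ofReal (co τ) * (ENNReal.ofReal (C * τ ^ (-a) * Real.exp (ω * β * τ)) *
            eLpNorm (u - u₀) (ENNReal.ofReal q) μ ^ γ) := by
          gcongr
          exact hreg τ hτ0 u hu
      _ = ENNReal.ofReal (co τ * (C * τ ^ (-a) * Real.exp (ω * β * τ))) *
            eLpNorm (u - u₀) (ENNReal.ofReal q) μ ^ γ := by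
          rw [← mul_assoc, ← ENNReal.ofReal_mul (hcopos τ hτ0).le]
      _ ≤ ENNReal.ofReal (C * t ^ (αs - a) * Real.exp (ω * β * t)) *
            eLpNorm (u - u₀) (ENNReal.ofReal q) μ ^ γ := by
          refine mul_le_mul' (ENNReal.ofReal_le_ofReal ?_) le_rfl
          have e1 : τ ^ (αs - a) ≤ t ^ (αs - a) :=
            Real.rpow_le_rpow hτ0.le hτt (by linarith)
          have e2 : Real.exp (-(ω * βs * τ)) ≤ 1 :=
            Real.exp_le_one_iff.mpr (by nlinarith [mul_nonneg (mul_nonneg hω hβspos.le) hτ0.le])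
          have e3 : Real.exp (ω * β * τ) ≤ Real.exp (ω * β * t) :=
            Real.exp_le_exp.mpr (by nlinarith [mul_nonneg hω hβ.le])
          have hsplit : co τ * (C * τ ^ (-a) * Real.exp (ω * β * τ))
              = C * τ ^ (αs - a) * (Real.exp (-(ω * βs * τ)) * Real.exp (ω * β * τ)) := by
            rw [hco, sub_eq_add_neg, Real.rpow_add hτ0]; ring
          rw [hsplit]
          calc C * τ ^ (αs - a) * (Real.exp (-(ω * βs * τ)) * Real.exp (ω * β * τ))
              ≤ C * t ^ (αs - a) * (1 * Real.exp (ω * β * t)) := by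
                apply mul_le_mul (mul_le_mul le_rfl e1 (Real.rpow_nonneg hτ0.le _) hC.le)
                  (mul_le_mul e2 e3 (Real.exp_pos _).le zero_le_one)
                  (by positivity) (by positivity)
            _ = C * t ^ (αs - a) * Real.exp (ω * β * t) := by ring
  have hMfin : M ≠ ∞ := by
    refine ne_of_lt (lt_of_le_of_lt (?_ : M ≤ _) (?_ :
      ENNReal.ofReal (C * t ^ (αs - a) * Real.exp (ω * β * t)) *
        eLpNorm (u - u₀) (ENNReal.ofReal q) μ ^ γ < ∞))
    · rw [hMd]
      exact iSup_le fun σ => hFbound σ.1 σ.2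
    · exact ENNReal.mul_lt_top ENNReal.ofReal_lt_top
        (ENNReal.rpow_lt_top_of_nonneg hγ.le hQfin)
  -- the key recursion
  have hrec : ∀ τ ∈ Set.Ioc (0:ℝ) t,
      ENNReal.ofReal (co τ) * eLpNorm (T τ u - u₀) r μ ≤
        ENNReal.ofReal (C * 2 ^ αs) *
          (eLpNorm (u - u₀) (ENNReal.ofReal s) μ ^ (θs * γ) * M ^ ((1 - θs) * γ)) := by
    rintro τ ⟨hτ0, hτt⟩
    have hτ2 : 0 < τ / 2 := by linarith
    have hτ2t : τ / 2 ∈ Set.Ioc (0:ℝ) t := ⟨hτ2, by linarith⟩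
    have hu' : T (τ / 2) u ∈ D := hT.1 _ hτ2.le u hu
    have hsplitT : T τ u = T (τ / 2) (T (τ / 2) u) := by
      have h := hT.2.2 (τ / 2) (τ / 2) hτ2.le hτ2.le u hu
      rwa [show τ / 2 + τ / 2 = τ from by ring] at h
    have hA : eLpNorm (T (τ / 2) u - u₀) (ENNReal.ofReal s) μ ≤
        ENNReal.ofReal (Real.exp (ω * (τ / 2))) * eLpNorm (u - u₀) (ENNReal.ofReal s) μ :=
      hgrow (τ / 2) hτ2.le u hu
    have hcoτ2 : 0 < co (τ / 2) := hcopos _ hτ2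
    have hB : eLpNorm (T (τ / 2) u - u₀) r μ ≤ ENNReal.ofReal ((co (τ / 2))⁻¹) * M := by
      have h1 := hFM (τ / 2) hτ2t
      have hc0 : ENNReal.ofReal (co (τ / 2)) ≠ 0 := by
        simp [ENNReal.ofReal_eq_zero, not_le, hcoτ2]
      rw [ENNReal.ofReal_inv_of_pos hcoτ2]
      calc eLpNorm (T (τ / 2) u - u₀) r μ
          = (ENNReal.ofReal (co (τ / 2)))⁻¹ *
              (ENNReal.ofReal (co (τ / 2)) * eLpNorm (T (τ / 2) u - u₀) r μ) := by
            rw [← mul_assoc, ENNReal.inv_mul_cancel hc0 ENNReal.ofReal_ne_top, one_mul]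
        _ ≤ (ENNReal.ofReal (co (τ / 2)))⁻¹ * M := by gcongr
    have hQτ : eLpNorm (T (τ / 2) u - u₀) (ENNReal.ofReal q) μ ≤
        (ENNReal.ofReal (Real.exp (ω * (τ / 2))) * eLpNorm (u - u₀) (ENNReal.ofReal s) μ) ^ θs *
          (ENNReal.ofReal ((co (τ / 2))⁻¹) * M) ^ (1 - θs) := by
      refine le_trans (interp_aux (hmeasw _ hu') hs0 hsq hqr hθs) ?_
      exact mul_le_mul' (ENNReal.rpow_le_rpow hA hθspos.le)
        (ENNReal.rpow_le_rpow hB (by linarith))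
    calc ENNReal.ofReal (co τ) * eLpNorm (T τ u - u₀) r μ
        = ENNReal.ofReal (co τ) * eLpNorm (T (τ / 2) (T (τ / 2) u) - u₀) r μ := by
          rw [hsplitT]
      _ ≤ ENNReal.ofReal (co τ) *
            (ENNReal.ofReal (C * (τ / 2) ^ (-a) * Real.exp (ω * β * (τ / 2))) *
              eLpNorm (T (τ / 2) u - u₀) (ENNReal.ofReal q) μ ^ γ) :=
          mul_le_mul' le_rfl (hreg (τ / 2) hτ2 _ hu')
      _ ≤ ENNReal.ofReal (co τ) *
            (ENNReal.ofReal (C * (τ / 2) ^ (-a) * Real.exp (ω * β * (τ / 2))) *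
              ((ENNReal.ofReal (Real.exp (ω * (τ / 2))) *
                  eLpNorm (u - u₀) (ENNReal.ofReal s) μ) ^ θs *
                (ENNReal.ofReal ((co (τ / 2))⁻¹) * M) ^ (1 - θs)) ^ γ) :=
          mul_le_mul' le_rfl (mul_le_mul' le_rfl (ENNReal.rpow_le_rpow hQτ hγ.le))
      _ = ENNReal.ofReal (co τ * (C * (τ / 2) ^ (-a) * Real.exp (ω * β * (τ / 2))) *
            ((Real.exp (ω * (τ / 2)) ^ θs * ((co (τ / 2))⁻¹) ^ (1 - θs)) ^ γ)) *
            (eLpNorm (u - u₀) (ENNReal.ofReal s) μ ^ (θs * γ) * M ^ ((1 - θs) * γ)) :=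
          rearrange (co τ) (C * (τ / 2) ^ (-a) * Real.exp (ω * β * (τ / 2)))
            (Real.exp (ω * (τ / 2))) ((co (τ / 2))⁻¹) θs γ
            (hcopos τ hτ0).le (by positivity) (Real.exp_pos _) (by positivity)
            hθspos.le hθslt.le hγ.le _ _
      _ ≤ ENNReal.ofReal (C * 2 ^ αs) *
            (eLpNorm (u - u₀) (ENNReal.ofReal s) μ ^ (θs * γ) * M ^ ((1 - θs) * γ)) := by
          refine mul_le_mul' (ENNReal.ofReal_le_ofReal ?_) le_rfl
          exact coef_le a β γ θs ω θ αs βs C τ ha hβ hγ hθspos hθslt hω hC hτ0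
            hθd hθpos hαsd hβsd
  have hMrec : M ≤ ENNReal.ofReal (C * 2 ^ αs) *
      (eLpNorm (u - u₀) (ENNReal.ofReal s) μ ^ (θs * γ) * M ^ ((1 - θs) * γ)) := by
    rw [hMd]
    exact iSup_le fun σ => hrec σ.1 σ.2
  -- absorption
  have habs : M ≤ ENNReal.ofReal ((C * 2 ^ αs) ^ (1 / θ)) *
      eLpNorm (u - u₀) (ENNReal.ofReal s) μ ^ (θs * γ / θ) := by
    rcases eq_or_ne M 0 with h0 | h0
    · rw [h0]; exact zero_le
    have hδnn : (0:ℝ) ≤ (1 - θs) * γ := mul_nonneg (by linarith) hγ.le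
    have hδθ : θ + (1 - θs) * γ = 1 := by rw [hθd]; ring
    have hMθδ : M ^ θ * M ^ ((1 - θs) * γ) = M := by
      rw [← ENNReal.rpow_add _ _ h0 hMfin, hδθ, ENNReal.rpow_one]
    have hcancel : M ^ θ ≤ ENNReal.ofReal (C * 2 ^ αs) *
        eLpNorm (u - u₀) (ENNReal.ofReal s) μ ^ (θs * γ) := by
      have hMδ0 : M ^ ((1 - θs) * γ) ≠ 0 := by
        simp [ENNReal.rpow_eq_zero_iff, h0, hMfin]
      have hMδtop : M ^ ((1 - θs) * γ) ≠ ∞ := ENNReal.rpow_ne_top_of_nonneg hδnn hMfin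
      have h2 := hMrec
      rw [← mul_assoc] at h2
      nth_rewrite 1 [← hMθδ] at h2
      exact (ENNReal.mul_le_mul_iff_left hMδ0 hMδtop).mp h2
    calc M = (M ^ θ) ^ (1 / θ) := by
          rw [← ENNReal.rpow_mul, mul_one_div, div_self hθpos.ne', ENNReal.rpow_one]
      _ ≤ (ENNReal.ofReal (C * 2 ^ αs) *
            eLpNorm (u - u₀) (ENNReal.ofReal s) μ ^ (θs * γ)) ^ (1 / θ) :=
          ENNReal.rpow_le_rpow hcancel (by positivity)
      _ = ENNReal.ofReal ((C * 2 ^ αs) ^ (1 / θ)) *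
            eLpNorm (u - u₀) (ENNReal.ofReal s) μ ^ (θs * γ / θ) := by
          rw [ENNReal.mul_rpow_of_nonneg _ _ (by positivity),
            ENNReal.ofReal_rpow_of_pos hKpos, ← ENNReal.rpow_mul, mul_one_div]
  -- conclude at τ = t
  have hFt := (hFM t ⟨ht, le_refl t⟩).trans habs
  have hcot : 0 < co t := hcopos t ht
  have hc0 : ENNReal.ofReal (co t) ≠ 0 := by
    simp [ENNReal.ofReal_eq_zero, not_le, hcot]
  calc eLpNorm (T t u - u₀) r μ
      = (ENNReal.ofReal (co t))⁻¹ *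
          (ENNReal.ofReal (co t) * eLpNorm (T t u - u₀) r μ) := by
        rw [← mul_assoc, ENNReal.inv_mul_cancel hc0 ENNReal.ofReal_ne_top, one_mul]
    _ ≤ (ENNReal.ofReal (co t))⁻¹ *
          (ENNReal.ofReal ((C * 2 ^ αs) ^ (1 / θ)) *
            eLpNorm (u - u₀) (ENNReal.ofReal s) μ ^ (θs * γ / θ)) := by gcongr
    _ = ENNReal.ofReal ((C * 2 ^ αs) ^ (1 / θ) * t ^ (-αs) * Real.exp (ω * βs * t)) *
          eLpNorm (u - u₀) (ENNReal.ofReal s) μ ^ (γ * θs / θ) := by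
        rw [← ENNReal.ofReal_inv_of_pos hcot, ← mul_assoc,
          ← ENNReal.ofReal_mul (by positivity : (0:ℝ) ≤ (co t)⁻¹)]
        congr 1
        · simp only [hco]
          rw [mul_inv, ← Real.rpow_neg ht.le, ← Real.exp_neg, neg_neg]
          ring
        · congr 1
          ring

end Statement4
end

section
/- Let 1 ≤ q, r < ∞, γ > 0 with q ≤ γr, and M₀, M₁ ≥ 0. Let T be a map defined on L^q(Σ,μ) ∩ L^∞(Σ,μ) with values in the measurable functions on Σ, satisfying ‖Tu − Tû‖_r ≤ M₀‖u − û‖_q^γ and ‖Tu − Tû‖_∞ ≤ M₁‖u − û‖_∞ for all u, û ∈ L^q(Σ,μ) ∩ L^∞(Σ,μ). Then for every θ ∈ (0,1), setting α := (1−θ)γ + θ and η := θ/α, there exists a constant K > 0 depending only on θ, γ, q and r (in particular independent of T, M₀, M₁ and of the measure space) such that ‖Tu − Tû‖_{r/(1−θ)} ≤ K·M₀^{1−θ}·M₁^{θ}·‖u − û‖_{q/(1−η)}^{α} for all u, û ∈ L^q(Σ,μ) ∩ L^∞(Σ,μ). -/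
open MeasureTheory Filter ENNReal

namespace Statement9

universe u



lemma rpow_sub_one_mul (x : ℝ≥0∞) {m : ℝ} (hm : 1 ≤ m) : x ^ (m - 1) * x = x ^ m := by
  have h : x ^ m = x ^ (m - 1) * x ^ (1:ℝ) := by
    rw [← ENNReal.rpow_add_of_nonneg (x := x) (m - 1) 1 (by linarith) (by norm_num)]
    norm_num
  rw [ENNReal.rpow_one] at h
  exact h.symm

lemma geom_sum (δ : ℝ) :
    ∑' i : ℕ, (2:ℝ≥0∞) ^ (-(i:ℝ) * δ) = (1 - (2:ℝ≥0∞) ^ (-δ))⁻¹ := by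
  have h : ∀ i : ℕ, (2:ℝ≥0∞) ^ (-(i:ℝ) * δ) = ((2:ℝ≥0∞) ^ (-δ)) ^ (i:ℕ) := by
    intro i
    rw [← ENNReal.rpow_natCast ((2:ℝ≥0∞) ^ (-δ)) i, ← ENNReal.rpow_mul]
    ring_nf
  simp_rw [h]
  exact ENNReal.tsum_geometric _

lemma hardy {δ m : ℝ} (hδ : 0 < δ) (hm : 1 ≤ m) (d : ℤ → ℝ≥0∞) :
    ∑' k : ℤ, (2:ℝ≥0∞) ^ ((k:ℝ) * (m * δ)) *
        (∑' i : ℕ, (2:ℝ≥0∞) ^ (-((k:ℝ) + (i:ℝ)) * δ) * d (k + (i:ℤ))) ^ m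
      ≤ ((1 - (2:ℝ≥0∞) ^ (-δ))⁻¹) ^ m * (∑' j : ℤ, d j) ^ m := by
  set c : ℝ≥0∞ := (1 - (2:ℝ≥0∞) ^ (-δ))⁻¹ with hc
  set D : ℝ≥0∞ := ∑' j : ℤ, d j with hD
  set R : ℤ → ℝ≥0∞ := fun k => ∑' i : ℕ, (2:ℝ≥0∞) ^ (-((k:ℝ) + (i:ℝ)) * δ) * d (k + (i:ℤ)) with hR
  have h2 : (2:ℝ≥0∞) ≠ 0 := by norm_num
  have h2' : (2:ℝ≥0∞) ≠ ∞ := by norm_num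
  have hRb : ∀ k : ℤ, R k ≤ (2:ℝ≥0∞) ^ (-(k:ℝ) * δ) * (c * D) := by
    intro k
    have : ∀ i : ℕ, (2:ℝ≥0∞) ^ (-((k:ℝ) + (i:ℝ)) * δ) * d (k + (i:ℤ))
        ≤ (2:ℝ≥0∞) ^ (-(k:ℝ) * δ) * ((2:ℝ≥0∞) ^ (-(i:ℝ) * δ) * D) := by
      intro i
      have h1 : (2:ℝ≥0∞) ^ (-((k:ℝ) + (i:ℝ)) * δ)
          = (2:ℝ≥0∞) ^ (-(k:ℝ) * δ) * (2:ℝ≥0∞) ^ (-(i:ℝ) * δ) := by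
        rw [← ENNReal.rpow_add _ _ h2 h2']; ring_nf
      rw [h1, mul_assoc]
      gcongr
      exact ENNReal.le_tsum _
    calc R k ≤ ∑' i : ℕ, (2:ℝ≥0∞) ^ (-(k:ℝ) * δ) * ((2:ℝ≥0∞) ^ (-(i:ℝ) * δ) * D) :=
          ENNReal.tsum_le_tsum this
      _ = (2:ℝ≥0∞) ^ (-(k:ℝ) * δ) * (c * D) := by
          rw [ENNReal.tsum_mul_left, ENNReal.tsum_mul_right, geom_sum δ]
  have hswap : ∑' k : ℤ, (2:ℝ≥0∞) ^ ((k:ℝ) * δ) * R k = c * D := by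
    have h1 : ∀ k : ℤ, (2:ℝ≥0∞) ^ ((k:ℝ) * δ) * R k
        = ∑' i : ℕ, (2:ℝ≥0∞) ^ (-(i:ℝ) * δ) * d (k + (i:ℤ)) := by
      intro k
      rw [hR]
      rw [← ENNReal.tsum_mul_left]
      congr 1
      funext i
      rw [← mul_assoc, ← ENNReal.rpow_add _ _ h2 h2']
      ring_nf
    simp_rw [h1]
    rw [ENNReal.tsum_comm]
    have h2i : ∀ i : ℕ, ∑' k : ℤ, (2:ℝ≥0∞) ^ (-(i:ℝ) * δ) * d (k + (i:ℤ))
        = (2:ℝ≥0∞) ^ (-(i:ℝ) * δ) * D := by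
      intro i
      rw [ENNReal.tsum_mul_left]
      congr 1
      exact (Equiv.addRight (i:ℤ)).tsum_eq d
    simp_rw [h2i]
    rw [ENNReal.tsum_mul_right, geom_sum δ]
  have hpt : ∀ k : ℤ, (2:ℝ≥0∞) ^ ((k:ℝ) * (m * δ)) * R k ^ m
      ≤ (c * D) ^ (m - 1) * ((2:ℝ≥0∞) ^ ((k:ℝ) * δ) * R k) := by
    intro k
    have hm1 : (0:ℝ) ≤ m - 1 := by linarith
    have e1 : R k ^ m = R k ^ (m - 1) * R k := (rpow_sub_one_mul _ hm).symm
    rw [e1]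
    have e2 : R k ^ (m - 1) ≤ ((2:ℝ≥0∞) ^ (-(k:ℝ) * δ)) ^ (m - 1) * (c * D) ^ (m - 1) := by
      rw [← ENNReal.mul_rpow_of_nonneg _ _ hm1]
      exact ENNReal.rpow_le_rpow (hRb k) hm1
    calc (2:ℝ≥0∞) ^ ((k:ℝ) * (m * δ)) * (R k ^ (m - 1) * R k)
        ≤ (2:ℝ≥0∞) ^ ((k:ℝ) * (m * δ)) * ((((2:ℝ≥0∞) ^ (-(k:ℝ) * δ)) ^ (m - 1) * (c * D) ^ (m - 1)) * R k) := by
          gcongr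
      _ = (c * D) ^ (m - 1) * ((2:ℝ≥0∞) ^ ((k:ℝ) * δ) * R k) := by
          rw [← ENNReal.rpow_mul]
          rw [← mul_assoc, ← mul_assoc, ← ENNReal.rpow_add _ _ h2 h2']
          ring_nf
  calc ∑' k : ℤ, (2:ℝ≥0∞) ^ ((k:ℝ) * (m * δ)) * R k ^ m
      ≤ ∑' k : ℤ, (c * D) ^ (m - 1) * ((2:ℝ≥0∞) ^ ((k:ℝ) * δ) * R k) :=
        ENNReal.tsum_le_tsum hpt
    _ = (c * D) ^ (m - 1) * (c * D) := by rw [ENNReal.tsum_mul_left, hswap]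
    _ = c ^ m * D ^ m := by
        rw [ENNReal.mul_rpow_of_nonneg _ _ (by linarith : (0:ℝ) ≤ m - 1)]
        calc c ^ (m-1) * D ^ (m-1) * (c * D) = (c ^ (m-1) * c) * (D ^ (m-1) * D) := by ring
          _ = c ^ m * D ^ m := by rw [rpow_sub_one_mul _ hm, rpow_sub_one_mul _ hm]

lemma exists_dyadic {ρ : ℝ} (hρ : 0 < ρ) :
    ∃ k : ℤ, (2:ℝ) ^ (k:ℝ) < ρ ∧ ρ ≤ (2:ℝ) ^ ((k:ℝ) + 1) := by
  set l := Real.logb 2 ρ with hl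
  refine ⟨⌈l⌉ - 1, ?_, ?_⟩
  · have h1 : ((⌈l⌉ - 1 : ℤ) : ℝ) < l := by
      push_cast
      have := Int.ceil_lt_add_one (R := ℝ) l
      linarith
    calc (2:ℝ) ^ ((⌈l⌉ - 1 : ℤ) : ℝ) < (2:ℝ) ^ l :=
          Real.rpow_lt_rpow_of_exponent_lt (by norm_num) h1
      _ = ρ := Real.rpow_logb (by norm_num) (by norm_num) hρ
  · have h1 : l ≤ ((⌈l⌉ - 1 : ℤ) : ℝ) + 1 := by
      push_cast
      have := Int.le_ceil l
      linarith
    calc ρ = (2:ℝ) ^ l := (Real.rpow_logb (by norm_num) (by norm_num) hρ).symm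
      _ ≤ (2:ℝ) ^ (((⌈l⌉ - 1 : ℤ) : ℝ) + 1) := Real.rpow_le_rpow_of_exponent_le (by norm_num) h1

lemma lint_rpow_zero_of_essSup_zero {α : Type u} [MeasurableSpace α] {μ : Measure α}
    {f : α → ℝ} (h : eLpNormEssSup f μ = 0) {p : ℝ} (hp : 0 < p) :
    ∫⁻ x, (‖f x‖₊ : ℝ≥0∞) ^ p ∂μ = 0 := by
  have hf0 : f =ᵐ[μ] 0 := eLpNormEssSup_eq_zero_iff.1 h
  have : (fun x => (‖f x‖₊ : ℝ≥0∞) ^ p) =ᵐ[μ] (fun _ => 0) := by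
    filter_upwards [hf0] with x hx
    simp [hx, ENNReal.zero_rpow_of_pos hp]
  rw [lintegral_congr_ae this, lintegral_zero]

lemma lint_rpow_zero_of_lint_zero {α : Type u} [MeasurableSpace α] {μ : Measure α}
    {f : α → ℝ} {p r : ℝ} (hr : 0 < r) (hrp : r ≤ p)
    (hC : eLpNormEssSup f μ ≠ ∞) (h : ∫⁻ x, (‖f x‖₊ : ℝ≥0∞) ^ r ∂μ = 0) :
    ∫⁻ x, (‖f x‖₊ : ℝ≥0∞) ^ p ∂μ = 0 := by
  set C := eLpNormEssSup f μ with hCdef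
  refine le_antisymm ?_ (zero_le)
  have hae : ∀ᵐ x ∂μ, (‖f x‖₊ : ℝ≥0∞) ≤ C := ae_le_eLpNormEssSup
  have hpt : ∀ᵐ x ∂μ, (‖f x‖₊ : ℝ≥0∞) ^ p ≤ C ^ (p - r) * (‖f x‖₊ : ℝ≥0∞) ^ r := by
    filter_upwards [hae] with x hx
    by_cases h0 : (‖f x‖₊ : ℝ≥0∞) = 0
    · rw [h0, ENNReal.zero_rpow_of_pos (lt_of_lt_of_le hr hrp)]
      exact zero_le
    · have : (‖f x‖₊ : ℝ≥0∞) ^ p = (‖f x‖₊ : ℝ≥0∞) ^ (p - r) * (‖f x‖₊ : ℝ≥0∞) ^ r := by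
        rw [← ENNReal.rpow_add _ _ h0 ENNReal.coe_ne_top]
        ring_nf
      rw [this]
      exact mul_le_mul_left (ENNReal.rpow_le_rpow hx (by linarith)) _
  calc ∫⁻ x, (‖f x‖₊ : ℝ≥0∞) ^ p ∂μ
      ≤ ∫⁻ x, C ^ (p - r) * (‖f x‖₊ : ℝ≥0∞) ^ r ∂μ := lintegral_mono_ae hpt
    _ = C ^ (p - r) * ∫⁻ x, (‖f x‖₊ : ℝ≥0∞) ^ r ∂μ :=
        lintegral_const_mul' _ _ (ENNReal.rpow_ne_top_of_nonneg (by linarith) hC)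
    _ = 0 := by rw [h, mul_zero]

lemma trunc_props (y t : ℝ) (ht : 0 < t) :
    |max (min y t) (-t)| ≤ t ∧ |max (min y t) (-t)| ≤ |y| ∧
      |y - max (min y t) (-t)| ≤ |y| ∧ (|y| ≤ t → y - max (min y t) (-t) = 0) := by
  rcases le_or_gt y t with h1 | h1
  · rcases le_or_gt (-t) y with h2 | h2
    · rw [min_eq_left h1, max_eq_left h2]
      exact ⟨abs_le.2 ⟨by linarith, h1⟩, le_refl _, by simp [abs_nonneg], fun _ => by ring⟩
    · rw [min_eq_left h1, max_eq_right h2.le]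
      have hy : y < 0 := by linarith
      refine ⟨by rw [abs_neg, abs_of_pos ht], ?_, ?_, ?_⟩
      · rw [abs_neg, abs_of_pos ht, abs_of_neg hy]; linarith
      · have he : y - -t = y + t := by ring
        rw [abs_of_neg hy, he, abs_of_nonpos (by linarith)]; linarith
      · intro habs; exfalso; rw [abs_of_neg hy] at habs; linarith
  · rw [min_eq_right h1.le, max_eq_left (by linarith)]
    have hy : 0 < y := lt_trans ht h1
    refine ⟨by rw [abs_of_pos ht], ?_, ?_, ?_⟩
    · rw [abs_of_pos ht, abs_of_pos hy]; linarith
    · rw [abs_of_pos hy, abs_of_nonneg (by linarith : (0:ℝ) ≤ y - t)]; linarith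
    · intro habs; exfalso; rw [abs_of_pos hy] at habs; linarith

lemma exists_level {y : ℝ≥0∞} (hy0 : y ≠ 0) (hyt : y ≠ ∞) {M : ℝ} (hM : 0 < M) :
    ∃ k : ℤ, ENNReal.ofReal (2 * (M * (2:ℝ) ^ ((k:ℤ):ℝ))) < y ∧
      y ≤ ENNReal.ofReal (2 * (M * (2:ℝ) ^ (((k + 1:ℤ)):ℝ))) := by
  have hyr : 0 < y.toReal := ENNReal.toReal_pos hy0 hyt
  obtain ⟨k, h1, h2⟩ := exists_dyadic (show 0 < y.toReal / (2*M) by positivity)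
  refine ⟨k, ?_, ?_⟩
  · rw [← ENNReal.ofReal_toReal hyt]
    rw [ENNReal.ofReal_lt_ofReal_iff hyr]
    have h3 := (lt_div_iff₀ (by positivity : (0:ℝ) < 2*M)).1 h1
    nlinarith [h3]
  · nth_rewrite 1 [← ENNReal.ofReal_toReal hyt]
    apply ENNReal.ofReal_le_ofReal
    have h3 := (div_le_iff₀ (by positivity : (0:ℝ) < 2*M)).1 h2
    have hcast : (((k + 1:ℤ)):ℝ) = (k:ℝ) + 1 := by push_cast; ring
    rw [hcast]
    nlinarith [h3]


set_option maxHeartbeats 2000000 in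
/-- **Nonlinear interpolation theorem with differences**, specialized to the couples
`(L^q, L^∞)` and `(L^r, L^∞)`.  If `T` is `γ`-Hölder from `L^q` to `L^r` and Lipschitz
from `L^∞` to `L^∞` (with constants `M₀` and `M₁`) on `L^q ∩ L^∞(Σ,μ)`, then for every
`θ ∈ (0,1)` there is a constant `K > 0` depending only on `θ, γ, q, r` — in particular
independent of `T`, `M₀`, `M₁` and of the measure space — such that `T` is
`α`-Hölder from `L^{q/(1−η)}` to `L^{r/(1−θ)}` with constant `K M₀^{1−θ} M₁^θ`,
where `α = (1−θ)γ + θ` and `η = θ/α`. -/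
theorem nonlinear_interpolation_with_differences
    (q r γ : ℝ) (hq : 1 ≤ q) (hr : 1 ≤ r) (hγ : 0 < γ) (hqγr : q ≤ γ * r)
    (θ : ℝ) (hθ0 : 0 < θ) (hθ1 : θ < 1) :
    ∃ K : ℝ, 0 < K ∧
      ∀ (α : Type u) [MeasurableSpace α] (μ : Measure α) [SigmaFinite μ],
      ∀ (M₀ M₁ : ℝ), 0 ≤ M₀ → 0 ≤ M₁ →
      ∀ T : (α → ℝ) → (α → ℝ),
        (∀ u v : α → ℝ, MemLp u (ENNReal.ofReal q) μ → MemLp u ⊤ μ →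
          MemLp v (ENNReal.ofReal q) μ → MemLp v ⊤ μ →
          eLpNorm (T u - T v) (ENNReal.ofReal r) μ ≤
            ENNReal.ofReal M₀ * eLpNorm (u - v) (ENNReal.ofReal q) μ ^ γ) →
        (∀ u v : α → ℝ, MemLp u (ENNReal.ofReal q) μ → MemLp u ⊤ μ →
          MemLp v (ENNReal.ofReal q) μ → MemLp v ⊤ μ →
          eLpNorm (T u - T v) ⊤ μ ≤ ENNReal.ofReal M₁ * eLpNorm (u - v) ⊤ μ) →
        ∀ u v : α → ℝ, MemLp u (ENNReal.ofReal q) μ → MemLp u ⊤ μ →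
          MemLp v (ENNReal.ofReal q) μ → MemLp v ⊤ μ →
          eLpNorm (T u - T v) (ENNReal.ofReal (r / (1 - θ))) μ ≤
            ENNReal.ofReal (K * M₀ ^ (1 - θ) * M₁ ^ θ) *
              eLpNorm (u - v)
                  (ENNReal.ofReal (q / (1 - θ / ((1 - θ) * γ + θ)))) μ ^
                ((1 - θ) * γ + θ) := by
  have h1θ : 0 < 1 - θ := by linarith
  have hq0 : 0 < q := lt_of_lt_of_le one_pos hq
  have hr0 : 0 < r := lt_of_lt_of_le one_pos hr
  set a : ℝ := (1 - θ) * γ + θ with ha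
  have ha0 : 0 < a := by nlinarith
  set p : ℝ := r / (1 - θ) with hp
  set s : ℝ := q / (1 - θ / a) with hs
  set m : ℝ := γ * r / q with hm
  have hp0 : 0 < p := div_pos hr0 h1θ
  have hpne : p ≠ 0 := hp0.ne'
  have h1η : 1 - θ / a = (1 - θ) * γ / a := by
    rw [ha]
    field_simp
    ring
  have h1ηpos : 0 < 1 - θ / a := by
    rw [h1η]; positivity
  have hs_eq : s = q * a / ((1 - θ) * γ) := by
    rw [hs, h1η, div_div_eq_mul_div]
  have hs0 : 0 < s := by rw [hs_eq]; positivity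
  have hδpos : 0 < s - q := by
    have : s - q = q * θ / ((1 - θ) * γ) := by
      rw [hs_eq]; field_simp; ring
    rw [this]; positivity
  have hm1 : 1 ≤ m := (one_le_div hq0).2 hqγr
  have hm0 : 0 < m := lt_of_lt_of_le one_pos hm1
  have hmδ : m * (s - q) = p - r := by
    rw [hm, hs_eq, hp]; field_simp; ring
  have hms : m * s = a * p := by
    rw [hm, hs_eq, hp]; field_simp
  have h1θp : (1 - θ) * p = r := by
    rw [hp]; field_simp
  have hθp : θ * p = p - r := by nlinarith [h1θp]
  have hrp : r ≤ p := by nlinarith [h1θp]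
  have hp1 : 1 ≤ p := le_trans hr hrp
  -- the constant
  have hcr_pos : 0 < 1 - (2:ℝ) ^ (-(s - q)) := by
    have : (2:ℝ) ^ (-(s - q)) < 1 :=
      Real.rpow_lt_one_of_one_lt_of_neg (by norm_num) (by linarith)
    linarith
  set K : ℝ := 4 * (2:ℝ) ^ (q * m / p) * ((1 - (2:ℝ) ^ (-(s - q)))⁻¹) ^ (m / p) with hK
  have hKpos : 0 < K := by
    have h1 : (0:ℝ) < (2:ℝ) ^ (q * m / p) := Real.rpow_pos_of_pos (by norm_num) _
    have h2 : (0:ℝ) < ((1 - (2:ℝ) ^ (-(s - q)))⁻¹) ^ (m / p) :=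
      Real.rpow_pos_of_pos (inv_pos.2 hcr_pos) _
    positivity
  refine ⟨K, hKpos, ?_⟩
  intro A mA μ hσ M₀ M₁ hM₀ hM₁ T hyp1 hypinf u v hu hut hv hvt
  have hpof0 : ENNReal.ofReal p ≠ 0 := by
    simp [ENNReal.ofReal_eq_zero, not_le, hp0]
  have hpoftop : ENNReal.ofReal p ≠ ∞ := ENNReal.ofReal_ne_top
  -- reduce to lintegral bound
  rw [eLpNorm_eq_lintegral_rpow_enorm_toReal hpof0 hpoftop, ENNReal.toReal_ofReal hp0.le]
  set X : ℝ≥0∞ := ENNReal.ofReal (K * M₀ ^ (1 - θ) * M₁ ^ θ) *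
      eLpNorm (u - v) (ENNReal.ofReal s) μ ^ a with hX
  suffices hmain : ∫⁻ x, (‖(T u - T v) x‖₊ : ℝ≥0∞) ^ p ∂μ ≤ X ^ p by
    calc (∫⁻ x, (‖(T u - T v) x‖₊ : ℝ≥0∞) ^ p ∂μ) ^ (1/p)
        ≤ (X ^ p) ^ (1/p) := ENNReal.rpow_le_rpow hmain (by positivity)
      _ = X := by
          rw [← ENNReal.rpow_mul, mul_one_div, div_self hpne, ENNReal.rpow_one]
  -- degenerate cases
  have hqof0 : ENNReal.ofReal q ≠ 0 := by simp [ENNReal.ofReal_eq_zero, not_le, hq0]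
  have hrof0 : ENNReal.ofReal r ≠ 0 := by simp [ENNReal.ofReal_eq_zero, not_le, hr0]
  by_cases hM₁0 : M₁ = 0
  · have h := hypinf u v hu hut hv hvt
    rw [hM₁0, ENNReal.ofReal_zero, zero_mul, eLpNorm_exponent_top] at h
    have h0 : eLpNormEssSup (T u - T v) μ = 0 := le_antisymm h (zero_le)
    rw [lint_rpow_zero_of_essSup_zero h0 hp0]
    exact zero_le
  by_cases hM₀0 : M₀ = 0
  · have hCfin : eLpNormEssSup (T u - T v) μ ≠ ∞ := by
      have h := hypinf u v hu hut hv hvt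
      rw [eLpNorm_exponent_top] at h
      exact ne_top_of_le_ne_top
        (ENNReal.mul_ne_top ENNReal.ofReal_ne_top (hut.sub hvt).2.ne) h
    have hint0 : ∫⁻ x, (‖(T u - T v) x‖₊ : ℝ≥0∞) ^ r ∂μ = 0 := by
      have h := hyp1 u v hu hut hv hvt
      rw [hM₀0, ENNReal.ofReal_zero, zero_mul] at h
      rw [eLpNorm_eq_lintegral_rpow_enorm_toReal hrof0 ENNReal.ofReal_ne_top,
        ENNReal.toReal_ofReal hr0.le] at h
      have h' := le_antisymm h (zero_le)
      rcases (ENNReal.rpow_eq_zero_iff).1 h' with ⟨h1, _⟩ | ⟨_, h2⟩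
      · exact h1
      · exfalso
        have : (0:ℝ) < 1 / r := by positivity
        linarith
    rw [lint_rpow_zero_of_lint_zero hr0 hrp hCfin hint0]
    exact zero_le
  have hM₀p : 0 < M₀ := lt_of_le_of_ne hM₀ (Ne.symm hM₀0)
  have hM₁p : 0 < M₁ := lt_of_le_of_ne hM₁ (Ne.symm hM₁0)
  -- measurable representative of u - v
  have hf : AEStronglyMeasurable (u - v) μ := hu.1.sub hv.1
  set f₀ : A → ℝ := hf.mk (u - v) with hf₀def
  have hf₀m : Measurable f₀ := hf.stronglyMeasurable_mk.measurable
  have hfeq : u - v =ᵐ[μ] f₀ := hf.ae_eq_mk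
  -- dyadic levels
  set t : ℤ → ℝ := fun k => (2:ℝ) ^ (k:ℝ) with ht
  have ht_pos : ∀ k, 0 < t k := fun k => Real.rpow_pos_of_pos (by norm_num) _
  have ht_mono : ∀ {i j : ℤ}, i ≤ j → t i ≤ t j := fun {i j} hij =>
    Real.rpow_le_rpow_of_exponent_le (by norm_num) (by exact_mod_cast hij)
  have ht_succ : ∀ k, t (k + 1) = 2 * t k := by
    intro k
    show (2:ℝ) ^ (((k + 1 : ℤ)):ℝ) = 2 * (2:ℝ) ^ ((k:ℤ):ℝ)
    push_cast
    rw [Real.rpow_add_one (by norm_num : (2:ℝ) ≠ 0)]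
    ring
  -- truncations
  set τ : ℤ → A → ℝ := fun k x => max (min (f₀ x) (t k)) (-(t k)) with hτ
  have hτmeas : ∀ k, Measurable (τ k) :=
    fun k => (hf₀m.min measurable_const).max measurable_const
  have hτmemq : ∀ k, MemLp (τ k) (ENNReal.ofReal q) μ := by
    intro k
    refine MemLp.of_le ((hu.sub hv).ae_eq hfeq) (hτmeas k).aestronglyMeasurable
      (ae_of_all _ fun x => ?_)
    rw [Real.norm_eq_abs, Real.norm_eq_abs]
    exact (trunc_props (f₀ x) (t k) (ht_pos k)).2.1
  have hτmemtop : ∀ k, MemLp (τ k) ⊤ μ := by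
    intro k
    refine memLp_top_of_bound (hτmeas k).aestronglyMeasurable (t k)
      (ae_of_all _ fun x => ?_)
    rw [Real.norm_eq_abs]
    exact (trunc_props (f₀ x) (t k) (ht_pos k)).1
  set w : ℤ → A → ℝ := fun k => v + τ k with hw
  have hwq : ∀ k, MemLp (w k) (ENNReal.ofReal q) μ := fun k => hv.add (hτmemq k)
  have hwtop : ∀ k, MemLp (w k) ⊤ μ := fun k => hvt.add (hτmemtop k)
  -- thresholds
  set c : ℤ → ℝ≥0∞ := fun k => ENNReal.ofReal (M₁ * t k) with hcdef
  have hcpos : ∀ k, 0 < M₁ * t k := fun k => mul_pos hM₁p (ht_pos k)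
  have hc0 : ∀ k, c k ≠ 0 := by
    intro k
    simp only [hcdef, Ne, ENNReal.ofReal_eq_zero, not_le]
    exact hcpos k
  have hctop : ∀ k, c k ≠ ∞ := fun k => ENNReal.ofReal_ne_top
  -- hypothesis-driven estimates
  have hG : ∀ k, eLpNorm (T u - T (w k)) (ENNReal.ofReal r) μ ≤
      ENNReal.ofReal M₀ * eLpNorm (u - w k) (ENNReal.ofReal q) μ ^ γ :=
    fun k => hyp1 u (w k) hu hut (hwq k) (hwtop k)
  have hH : ∀ k, eLpNormEssSup (T (w k) - T v) μ ≤ c k := by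
    intro k
    have h := hypinf (w k) v (hwq k) (hwtop k) hv hvt
    rw [eLpNorm_exponent_top, eLpNorm_exponent_top] at h
    refine le_trans h ?_
    have hwv : eLpNormEssSup (w k - v) μ ≤ ENNReal.ofReal (t k) := by
      refine eLpNormEssSup_le_of_ae_bound (ae_of_all _ fun x => ?_)
      have hxe : (w k - v) x = τ k x := by
        simp only [hw, Pi.sub_apply, Pi.add_apply]
        ring
      rw [hxe, Real.norm_eq_abs]
      exact (trunc_props (f₀ x) (t k) (ht_pos k)).1
    calc ENNReal.ofReal M₁ * eLpNormEssSup (w k - v) μ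
        ≤ ENNReal.ofReal M₁ * ENNReal.ofReal (t k) := by gcongr
      _ = c k := by rw [← ENNReal.ofReal_mul hM₁]
  have haeF : ∀ᵐ x ∂μ, ∀ k : ℤ,
      (‖(T u - T v) x‖₊ : ℝ≥0∞) ≤ (‖(T u - T (w k)) x‖₊ : ℝ≥0∞) + c k := by
    rw [ae_all_iff]
    intro k
    filter_upwards [ae_le_eLpNormEssSup (f := T (w k) - T v) (μ := μ)] with x hx
    have hxle : (‖(T (w k) - T v) x‖₊ : ℝ≥0∞) ≤ c k := le_trans hx (hH k)
    have hsplit : (T u - T v) x = (T u - T (w k)) x + (T (w k) - T v) x := by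
      simp only [Pi.sub_apply]
      ring
    calc (‖(T u - T v) x‖₊ : ℝ≥0∞)
        = (‖(T u - T (w k)) x + (T (w k) - T v) x‖₊ : ℝ≥0∞) := by rw [hsplit]
      _ ≤ (‖(T u - T (w k)) x‖₊ : ℝ≥0∞) + (‖(T (w k) - T v) x‖₊ : ℝ≥0∞) := by
          exact_mod_cast nnnorm_add_le _ _
      _ ≤ (‖(T u - T (w k)) x‖₊ : ℝ≥0∞) + c k := by gcongr
  -- dyadic decomposition of f₀
  set E : ℤ → Set A := fun j => {x | t j < |f₀ x| ∧ |f₀ x| ≤ t (j + 1)} with hE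
  have hEmeas : ∀ j, MeasurableSet (E j) := by
    intro j
    have habs : Measurable fun x => |f₀ x| := hf₀m.abs
    exact (measurableSet_lt measurable_const habs).inter
      (measurableSet_le habs measurable_const)
  have hEdisj : Pairwise (Function.onFun Disjoint E) := by
    have key : ∀ {i j : ℤ}, i < j → Disjoint (E i) (E j) := by
      intro i j h
      rw [Set.disjoint_left]
      rintro x ⟨_, hx2⟩ ⟨hy1, _⟩
      have : t j ≤ t j := le_refl _
      have hij : t (i + 1) ≤ t j := ht_mono (by omega)
      linarith
    intro i j hij
    rcases lt_or_gt_of_ne hij with h | h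
    · exact key h
    · exact (key h).symm
  have hcover : ∀ x, f₀ x ≠ 0 → ∃ j, x ∈ E j := by
    intro x hx
    obtain ⟨k, h1, h2⟩ := exists_dyadic (abs_pos.2 hx)
    refine ⟨k, h1, ?_⟩
    have : t (k + 1) = (2:ℝ) ^ ((k:ℝ) + 1) := by
      show (2:ℝ) ^ (((k + 1 : ℤ)):ℝ) = _
      push_cast
      ring_nf
    rw [this]
    exact h2
  set ν : ℤ → ℝ≥0∞ := fun j => μ (E j) with hν
  set d : ℤ → ℝ≥0∞ := fun j => (2:ℝ≥0∞) ^ ((j:ℝ) * s) * ν j with hd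
  set Atot : ℝ≥0∞ := ∫⁻ x, (‖f₀ x‖₊ : ℝ≥0∞) ^ s ∂μ with hAtot
  have hofRt : ∀ j : ℤ, ENNReal.ofReal (t j) = (2:ℝ≥0∞) ^ ((j:ℤ):ℝ) := by
    intro j
    rw [ht]
    show ENNReal.ofReal ((2:ℝ) ^ ((j:ℤ):ℝ)) = _
    rw [← ENNReal.ofReal_rpow_of_pos (by norm_num)]
    norm_num
  have hcsucc : ∀ k, c (k + 1) = 2 * c k := by
    intro k
    simp only [hcdef]
    rw [ht_succ k]
    rw [show M₁ * (2 * t k) = 2 * (M₁ * t k) by ring]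
    rw [ENNReal.ofReal_mul (by norm_num : (0:ℝ) ≤ 2)]
    norm_num
  -- sum of d is below Atot
  have hD_le_A : ∑' j : ℤ, d j ≤ Atot := by
    have hterm : ∀ j : ℤ, d j ≤ ∫⁻ x in E j, (‖f₀ x‖₊ : ℝ≥0∞) ^ s ∂μ := by
      intro j
      calc d j = (2:ℝ≥0∞) ^ ((j:ℝ) * s) * μ (E j) := rfl
        _ = ∫⁻ _ in E j, (2:ℝ≥0∞) ^ ((j:ℝ) * s) ∂μ := (setLIntegral_const _ _).symm
        _ ≤ ∫⁻ x in E j, (‖f₀ x‖₊ : ℝ≥0∞) ^ s ∂μ := by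
            refine lintegral_mono_ae ((ae_restrict_iff' (hEmeas j)).2 (ae_of_all _ fun x hx => ?_))
            have h1 : ENNReal.ofReal (t j) ≤ (‖f₀ x‖₊ : ℝ≥0∞) := by
              rw [← enorm_eq_nnnorm, Real.enorm_eq_ofReal_abs]
              exact ENNReal.ofReal_le_ofReal hx.1.le
            calc (2:ℝ≥0∞) ^ ((j:ℝ) * s) = (ENNReal.ofReal (t j)) ^ s := by
                  rw [hofRt j, ← ENNReal.rpow_mul]
              _ ≤ (‖f₀ x‖₊ : ℝ≥0∞) ^ s := ENNReal.rpow_le_rpow h1 hs0.le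
    calc ∑' j : ℤ, d j ≤ ∑' j : ℤ, ∫⁻ x in E j, (‖f₀ x‖₊ : ℝ≥0∞) ^ s ∂μ :=
          ENNReal.tsum_le_tsum hterm
      _ = ∫⁻ x in ⋃ j : ℤ, E j, (‖f₀ x‖₊ : ℝ≥0∞) ^ s ∂μ :=
          (lintegral_iUnion hEmeas hEdisj _).symm
      _ ≤ Atot := setLIntegral_le_lintegral _ _
  -- the tail sets
  have hSk : ∀ k : ℤ, {x | t k < |f₀ x|} = ⋃ i : ℕ, E (k + (i:ℤ)) := by
    intro k
    ext x
    simp only [Set.mem_setOf_eq, Set.mem_iUnion]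
    constructor
    · intro hx
      have hne : f₀ x ≠ 0 := by
        intro h0
        rw [h0, abs_zero] at hx
        exact absurd hx (not_lt.2 (ht_pos k).le)
      obtain ⟨j, hj⟩ := hcover x hne
      have hkj : k ≤ j := by
        by_contra hcon
        push_neg at hcon
        have h1 : t (j + 1) ≤ t k := ht_mono (by omega)
        have h2 := hj.2
        linarith
      refine ⟨(j - k).toNat, ?_⟩
      have he : k + ((j - k).toNat : ℤ) = j := by omega
      rw [he]
      exact hj
    · rintro ⟨i, hi⟩
      have h1 : t k ≤ t (k + (i:ℤ)) := ht_mono (by omega)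
      have h2 := hi.1
      linarith
  -- bound for the q-integral of the tall part
  set R : ℤ → ℝ≥0∞ := fun k =>
    ∑' i : ℕ, (2:ℝ≥0∞) ^ (-((k:ℝ) + (i:ℝ)) * (s - q)) * d (k + (i:ℤ)) with hRdef
  have hIk : ∀ k : ℤ, ∫⁻ x, (‖(u - w k) x‖₊ : ℝ≥0∞) ^ q ∂μ ≤ (2:ℝ≥0∞) ^ q * R k := by
    intro k
    have hcongr : ∫⁻ x, (‖(u - w k) x‖₊ : ℝ≥0∞) ^ q ∂μ
        = ∫⁻ x, (‖f₀ x - τ k x‖₊ : ℝ≥0∞) ^ q ∂μ := by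
      refine lintegral_congr_ae ?_
      filter_upwards [hfeq] with x hx
      have he : (u - w k) x = f₀ x - τ k x := by
        simp only [hw, Pi.sub_apply, Pi.add_apply]
        have hx' : u x - v x = f₀ x := hx
        linarith
      rw [he]
    rw [hcongr]
    have hmeas_set : MeasurableSet {x | t k < |f₀ x|} :=
      measurableSet_lt measurable_const hf₀m.abs
    have hpt : ∀ x, (‖f₀ x - τ k x‖₊ : ℝ≥0∞) ^ q
        ≤ Set.indicator {x | t k < |f₀ x|} (fun x => (‖f₀ x‖₊ : ℝ≥0∞) ^ q) x := by
      intro x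
      rcases le_or_gt (|f₀ x|) (t k) with h | h
      · have h0 : f₀ x - τ k x = 0 := (trunc_props (f₀ x) (t k) (ht_pos k)).2.2.2 h
        rw [h0]
        simp [ENNReal.zero_rpow_of_pos hq0]
      · have hxmem : x ∈ {x | t k < |f₀ x|} := h
        rw [Set.indicator_of_mem hxmem]
        refine ENNReal.rpow_le_rpow ?_ hq0.le
        rw [← enorm_eq_nnnorm, ← enorm_eq_nnnorm, Real.enorm_eq_ofReal_abs, Real.enorm_eq_ofReal_abs]
        exact ENNReal.ofReal_le_ofReal (trunc_props (f₀ x) (t k) (ht_pos k)).2.2.1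
    have hper : ∀ i : ℕ, ∫⁻ x in E (k + (i:ℤ)), (‖f₀ x‖₊ : ℝ≥0∞) ^ q ∂μ
        ≤ (2:ℝ≥0∞) ^ q * ((2:ℝ≥0∞) ^ (-((k:ℝ) + (i:ℝ)) * (s - q)) * d (k + (i:ℤ))) := by
      intro i
      have hb : ∫⁻ x in E (k + (i:ℤ)), (‖f₀ x‖₊ : ℝ≥0∞) ^ q ∂μ
          ≤ (2:ℝ≥0∞) ^ ((((k:ℝ) + (i:ℝ)) + 1) * q) * ν (k + (i:ℤ)) := by
        have hc1 : ∫⁻ x in E (k + (i:ℤ)), (‖f₀ x‖₊ : ℝ≥0∞) ^ q ∂μ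
            ≤ ∫⁻ _ in E (k + (i:ℤ)), (2:ℝ≥0∞) ^ ((((k:ℝ) + (i:ℝ)) + 1) * q) ∂μ := by
          refine lintegral_mono_ae ((ae_restrict_iff' (hEmeas _)).2 (ae_of_all _ fun x hx => ?_))
          have h1 : (‖f₀ x‖₊ : ℝ≥0∞) ≤ ENNReal.ofReal (t (k + (i:ℤ) + 1)) := by
            rw [← enorm_eq_nnnorm, Real.enorm_eq_ofReal_abs]
            exact ENNReal.ofReal_le_ofReal hx.2
          have h2 : ENNReal.ofReal (t (k + (i:ℤ) + 1)) = (2:ℝ≥0∞) ^ (((k:ℝ) + (i:ℝ)) + 1) := by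
            rw [hofRt]
            congr 1
            push_cast
            ring
          calc (‖f₀ x‖₊ : ℝ≥0∞) ^ q ≤ ((2:ℝ≥0∞) ^ (((k:ℝ) + (i:ℝ)) + 1)) ^ q := by
                rw [← h2]
                exact ENNReal.rpow_le_rpow h1 hq0.le
            _ = (2:ℝ≥0∞) ^ ((((k:ℝ) + (i:ℝ)) + 1) * q) := by rw [← ENNReal.rpow_mul]
        rw [setLIntegral_const] at hc1
        exact hc1
      refine le_trans hb (le_of_eq ?_)
      have hcast : (((k + (i:ℤ)):ℤ):ℝ) = (k:ℝ) + (i:ℝ) := by push_cast; ring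
      calc (2:ℝ≥0∞) ^ ((((k:ℝ) + (i:ℝ)) + 1) * q) * ν (k + (i:ℤ))
          = (2:ℝ≥0∞) ^ (q + (-((k:ℝ) + (i:ℝ)) * (s - q) + (((k + (i:ℤ)):ℤ):ℝ) * s)) * ν (k + (i:ℤ)) := by
            congr 1
            rw [hcast]
            ring
        _ = (2:ℝ≥0∞) ^ q * ((2:ℝ≥0∞) ^ (-((k:ℝ) + (i:ℝ)) * (s - q)) * ((2:ℝ≥0∞) ^ ((((k + (i:ℤ)):ℤ):ℝ) * s) * ν (k + (i:ℤ)))) := by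
            rw [ENNReal.rpow_add _ _ (by norm_num) (by norm_num),
              ENNReal.rpow_add _ _ (by norm_num) (by norm_num)]
            ring
        _ = (2:ℝ≥0∞) ^ q * ((2:ℝ≥0∞) ^ (-((k:ℝ) + (i:ℝ)) * (s - q)) * d (k + (i:ℤ))) := rfl
    have hdisjN : Pairwise (Function.onFun Disjoint (fun i : ℕ => E (k + (i:ℤ)))) := by
      intro i j hij
      exact hEdisj (by omega : k + (i:ℤ) ≠ k + (j:ℤ))
    calc ∫⁻ x, (‖f₀ x - τ k x‖₊ : ℝ≥0∞) ^ q ∂μ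
        ≤ ∫⁻ x, Set.indicator {x | t k < |f₀ x|} (fun x => (‖f₀ x‖₊ : ℝ≥0∞) ^ q) x ∂μ :=
          lintegral_mono hpt
      _ = ∫⁻ x in {x | t k < |f₀ x|}, (‖f₀ x‖₊ : ℝ≥0∞) ^ q ∂μ :=
          lintegral_indicator hmeas_set _
      _ = ∑' i : ℕ, ∫⁻ x in E (k + (i:ℤ)), (‖f₀ x‖₊ : ℝ≥0∞) ^ q ∂μ := by
          rw [hSk k]
          exact lintegral_iUnion (fun i => hEmeas _) hdisjN _
      _ ≤ ∑' i : ℕ, (2:ℝ≥0∞) ^ q * ((2:ℝ≥0∞) ^ (-((k:ℝ) + (i:ℝ)) * (s - q)) * d (k + (i:ℤ))) :=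
          ENNReal.tsum_le_tsum hper
      _ = (2:ℝ≥0∞) ^ q * R k := ENNReal.tsum_mul_left
  -- now bound the integral of an arbitrary simple function below the integrand
  have hsof0 : ENNReal.ofReal s ≠ 0 := by simp [ENNReal.ofReal_eq_zero, not_le, hs0]
  have hEsn : eLpNorm (u - v) (ENNReal.ofReal s) μ = Atot ^ (1/s) := by
    rw [eLpNorm_congr_ae hfeq, eLpNorm_eq_lintegral_rpow_enorm_toReal hsof0 ENNReal.ofReal_ne_top,
      ENNReal.toReal_ofReal hs0.le]
    rfl
  set CST : ℝ≥0∞ := (4:ℝ≥0∞) ^ p * (ENNReal.ofReal M₀) ^ r *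
      (ENNReal.ofReal M₁) ^ (p - r) * (2:ℝ≥0∞) ^ (q * m) with hCST
  have hXp : ((4:ℝ≥0∞) ^ p * (ENNReal.ofReal M₀) ^ r * (ENNReal.ofReal M₁) ^ (p - r) *
        (2:ℝ≥0∞) ^ (q * m)) *
        (((1 - (2:ℝ≥0∞) ^ (-(s - q)))⁻¹) ^ m * Atot ^ m) = X ^ p := by
    rw [hX, hEsn]
    rw [ENNReal.mul_rpow_of_nonneg _ _ hp0.le]
    have hf2 : ((Atot ^ (1/s)) ^ a) ^ p = Atot ^ m := by
      rw [← ENNReal.rpow_mul, ← ENNReal.rpow_mul]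
      congr 1
      have hsne : s ≠ 0 := hs0.ne'
      field_simp
      linarith [hms]
    rw [hf2]
    have hKof : ENNReal.ofReal K = (4:ℝ≥0∞) * (2:ℝ≥0∞) ^ (q * m / p) *
        ((1 - (2:ℝ≥0∞) ^ (-(s - q)))⁻¹) ^ (m / p) := by
      rw [hK]
      rw [ENNReal.ofReal_mul (by positivity), ENNReal.ofReal_mul (by norm_num : (0:ℝ) ≤ 4)]
      congr 1
      · congr 1
        · norm_num
        · rw [← ENNReal.ofReal_rpow_of_pos (by norm_num : (0:ℝ) < 2)]
          norm_num
      · rw [← ENNReal.ofReal_rpow_of_pos (inv_pos.2 hcr_pos)]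
        congr 1
        rw [ENNReal.ofReal_inv_of_pos hcr_pos]
        congr 1
        rw [ENNReal.ofReal_sub _ (by positivity : (0:ℝ) ≤ (2:ℝ) ^ (-(s - q)))]
        rw [ENNReal.ofReal_one]
        congr 1
        rw [← ENNReal.ofReal_rpow_of_pos (by norm_num : (0:ℝ) < 2)]
        norm_num
    rw [ENNReal.ofReal_mul (by positivity : (0:ℝ) ≤ K * M₀ ^ (1 - θ)),
      ENNReal.ofReal_mul hKpos.le]
    rw [← ENNReal.ofReal_rpow_of_pos hM₀p, ← ENNReal.ofReal_rpow_of_pos hM₁p]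
    rw [hKof]
    rw [ENNReal.mul_rpow_of_nonneg _ _ hp0.le, ENNReal.mul_rpow_of_nonneg _ _ hp0.le,
      ENNReal.mul_rpow_of_nonneg _ _ hp0.le, ENNReal.mul_rpow_of_nonneg _ _ hp0.le]
    rw [← ENNReal.rpow_mul, ← ENNReal.rpow_mul, ← ENNReal.rpow_mul, ← ENNReal.rpow_mul]
    rw [div_mul_cancel₀ _ hpne, div_mul_cancel₀ _ hpne, h1θp, hθp]
    ring
  -- main chain
  rw [MeasureTheory.lintegral_def]
  refine iSup_le fun φ => iSup_le fun hφ => ?_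
  set F' : A → ℝ≥0∞ := fun x => φ x ^ (1/p) with hF'
  have hF'meas : Measurable F' := ENNReal.continuous_rpow_const.measurable.comp φ.measurable
  have hφeq : ∀ x, φ x = F' x ^ p := by
    intro x
    show φ x = (φ x ^ (1/p)) ^ p
    rw [← ENNReal.rpow_mul, one_div, inv_mul_cancel₀ hpne, ENNReal.rpow_one]
  have hF'le : ∀ x, F' x ≤ (‖(T u - T v) x‖₊ : ℝ≥0∞) := by
    intro x
    show φ x ^ (1/p) ≤ _
    calc φ x ^ (1/p) ≤ ((‖(T u - T v) x‖₊ : ℝ≥0∞) ^ p) ^ (1/p) :=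
          ENNReal.rpow_le_rpow (hφ x) (by positivity)
      _ = (‖(T u - T v) x‖₊ : ℝ≥0∞) := by
          rw [← ENNReal.rpow_mul, mul_one_div, div_self hpne, ENNReal.rpow_one]
  have hF'fin : ∀ x, F' x ≠ ∞ := fun x => (lt_of_le_of_lt (hF'le x) ENNReal.coe_lt_top).ne
  set B : ℤ → Set A := fun k => {x | 2 * c k < F' x} with hB
  have hBmeas : ∀ k, MeasurableSet (B k) := fun k => measurableSet_lt measurable_const hF'meas
  set Aset : ℤ → Set A := fun k => B k ∩ {x | F' x ≤ 2 * c (k + 1)} with hAsetdef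
  have hAmeas : ∀ k, MeasurableSet (Aset k) :=
    fun k => (hBmeas k).inter (measurableSet_le hF'meas measurable_const)
  have h2c : ∀ k, 2 * c k = ENNReal.ofReal (2 * (M₁ * t k)) := by
    intro k
    rw [ENNReal.ofReal_mul (by norm_num : (0:ℝ) ≤ 2)]
    norm_num
    rfl
  have hφle : ∀ x, φ x ≤ ∑' k : ℤ, Set.indicator (Aset k) (fun _ => (2 * c (k + 1)) ^ p) x := by
    intro x
    by_cases h0 : φ x = 0
    · rw [h0]; exact zero_le
    have hF'0 : F' x ≠ 0 := by
      intro hzero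
      apply h0
      rw [hφeq x, hzero, ENNReal.zero_rpow_of_pos hp0]
    obtain ⟨k, hk1, hk2⟩ := exists_level hF'0 (hF'fin x) hM₁p
    have hmem : x ∈ Aset k := by
      constructor
      · show 2 * c k < F' x
        rw [h2c k]
        exact hk1
      · show F' x ≤ 2 * c (k + 1)
        rw [h2c (k + 1)]
        exact hk2
    calc φ x = F' x ^ p := hφeq x
      _ ≤ (2 * c (k + 1)) ^ p := ENNReal.rpow_le_rpow hmem.2 hp0.le
      _ = Set.indicator (Aset k) (fun _ => (2 * c (k + 1)) ^ p) x :=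
          (Set.indicator_of_mem hmem (fun _ => (2 * c (k + 1)) ^ p)).symm
      _ ≤ ∑' k : ℤ, Set.indicator (Aset k) (fun _ => (2 * c (k + 1)) ^ p) x :=
          ENNReal.le_tsum k
  -- Chebyshev with the G-part
  have hcheb : ∀ k, c k ^ r * μ (B k) ≤
      (ENNReal.ofReal M₀) ^ r * (∫⁻ x, (‖(u - w k) x‖₊ : ℝ≥0∞) ^ q ∂μ) ^ m := by
    intro k
    have h1 : (fun x => Set.indicator (B k) (fun _ => c k ^ r) x) ≤ᵐ[μ]
        fun x => (‖(T u - T (w k)) x‖₊ : ℝ≥0∞) ^ r := by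
      filter_upwards [haeF] with x hx
      by_cases hxB : x ∈ B k
      · rw [Set.indicator_of_mem hxB]
        have h2 : 2 * c k < F' x := hxB
        have h3 := hx k
        have h4 : c k ≤ (‖(T u - T (w k)) x‖₊ : ℝ≥0∞) := by
          by_contra hcon
          push_neg at hcon
          have h5 : F' x ≤ 2 * c k := by
            refine le_trans (hF'le x) (le_trans h3 ?_)
            rw [two_mul]
            exact add_le_add hcon.le (le_refl _)
          exact absurd h2 (not_lt.2 h5)
        exact ENNReal.rpow_le_rpow h4 hr0.le
      · rw [Set.indicator_of_notMem hxB]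
        exact zero_le
    have h2 : c k ^ r * μ (B k) ≤ ∫⁻ x, (‖(T u - T (w k)) x‖₊ : ℝ≥0∞) ^ r ∂μ := by
      rw [← lintegral_indicator_const (hBmeas k)]
      exact lintegral_mono_ae h1
    have h3 : ∫⁻ x, (‖(T u - T (w k)) x‖₊ : ℝ≥0∞) ^ r ∂μ
        = eLpNorm (T u - T (w k)) (ENNReal.ofReal r) μ ^ r := by
      rw [eLpNorm_eq_lintegral_rpow_enorm_toReal hrof0 ENNReal.ofReal_ne_top,
        ENNReal.toReal_ofReal hr0.le, ← ENNReal.rpow_mul, one_div,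
        inv_mul_cancel₀ hr0.ne', ENNReal.rpow_one]
      rfl
    have h4 : (eLpNorm (u - w k) (ENNReal.ofReal q) μ ^ γ) ^ r
        = (∫⁻ x, (‖(u - w k) x‖₊ : ℝ≥0∞) ^ q ∂μ) ^ m := by
      rw [eLpNorm_eq_lintegral_rpow_enorm_toReal hqof0 ENNReal.ofReal_ne_top,
        ENNReal.toReal_ofReal hq0.le, ← ENNReal.rpow_mul, ← ENNReal.rpow_mul]
      congr 1
      rw [hm]
      field_simp
    calc c k ^ r * μ (B k)
        ≤ eLpNorm (T u - T (w k)) (ENNReal.ofReal r) μ ^ r := by rw [← h3]; exact h2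
      _ ≤ (ENNReal.ofReal M₀ * eLpNorm (u - w k) (ENNReal.ofReal q) μ ^ γ) ^ r :=
          ENNReal.rpow_le_rpow (hG k) hr0.le
      _ = (ENNReal.ofReal M₀) ^ r * (eLpNorm (u - w k) (ENNReal.ofReal q) μ ^ γ) ^ r :=
          ENNReal.mul_rpow_of_nonneg _ _ hr0.le
      _ = (ENNReal.ofReal M₀) ^ r * (∫⁻ x, (‖(u - w k) x‖₊ : ℝ≥0∞) ^ q ∂μ) ^ m := by
          rw [h4]
  -- per-term estimate
  have hterm : ∀ k : ℤ, (2 * c (k + 1)) ^ p * μ (Aset k)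
      ≤ CST * ((2:ℝ≥0∞) ^ ((k:ℝ) * (m * (s - q))) * R k ^ m) := by
    intro k
    have hA_B : μ (Aset k) ≤ μ (B k) := measure_mono Set.inter_subset_left
    have hc4 : 2 * c (k + 1) = 4 * c k := by
      rw [hcsucc k]
      ring
    have hckp : c k ^ p = c k ^ (p - r) * c k ^ r := by
      rw [← ENNReal.rpow_add _ _ (hc0 k) (hctop k)]
      ring_nf
    have hck_dyadic : c k ^ (p - r)
        = (ENNReal.ofReal M₁) ^ (p - r) * (2:ℝ≥0∞) ^ ((k:ℝ) * (m * (s - q))) := by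
      have he1 : c k = ENNReal.ofReal M₁ * (2:ℝ≥0∞) ^ ((k:ℤ):ℝ) := by
        rw [hcdef]
        show ENNReal.ofReal (M₁ * t k) = _
        rw [ENNReal.ofReal_mul hM₁, hofRt k]
      rw [he1, ENNReal.mul_rpow_of_nonneg _ _ (sub_nonneg.2 hrp), ← ENNReal.rpow_mul]
      congr 1
      rw [hmδ]
    calc (2 * c (k + 1)) ^ p * μ (Aset k)
        ≤ (4 * c k) ^ p * μ (B k) := by
          rw [hc4]
          exact mul_le_mul_right hA_B _
      _ = (4:ℝ≥0∞) ^ p * (c k ^ (p - r) * (c k ^ r * μ (B k))) := by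
          rw [ENNReal.mul_rpow_of_nonneg _ _ hp0.le, hckp]
          ring
      _ ≤ (4:ℝ≥0∞) ^ p * (c k ^ (p - r) *
            ((ENNReal.ofReal M₀) ^ r * (∫⁻ x, (‖(u - w k) x‖₊ : ℝ≥0∞) ^ q ∂μ) ^ m)) :=
          mul_le_mul_right (mul_le_mul_right (hcheb k) _) _
      _ ≤ (4:ℝ≥0∞) ^ p * (c k ^ (p - r) *
            ((ENNReal.ofReal M₀) ^ r * ((2:ℝ≥0∞) ^ q * R k) ^ m)) :=
          mul_le_mul_right (mul_le_mul_right (mul_le_mul_right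
            (ENNReal.rpow_le_rpow (hIk k) hm0.le) _) _) _
      _ = CST * ((2:ℝ≥0∞) ^ ((k:ℝ) * (m * (s - q))) * R k ^ m) := by
          rw [hck_dyadic, ENNReal.mul_rpow_of_nonneg _ _ hm0.le, ← ENNReal.rpow_mul, hCST]
          ring
  calc SimpleFunc.lintegral φ μ = ∫⁻ x, φ x ∂μ := (SimpleFunc.lintegral_eq_lintegral φ μ).symm
    _ ≤ ∫⁻ x, ∑' k : ℤ, Set.indicator (Aset k) (fun _ => (2 * c (k + 1)) ^ p) x ∂μ :=
        lintegral_mono hφle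
    _ = ∑' k : ℤ, (2 * c (k + 1)) ^ p * μ (Aset k) := by
        rw [lintegral_tsum (fun k => (measurable_const.indicator (hAmeas k)).aemeasurable)]
        congr 1
        funext k
        rw [lintegral_indicator_const (hAmeas k)]
    _ ≤ ∑' k : ℤ, CST * ((2:ℝ≥0∞) ^ ((k:ℝ) * (m * (s - q))) * R k ^ m) :=
        ENNReal.tsum_le_tsum hterm
    _ = CST * ∑' k : ℤ, (2:ℝ≥0∞) ^ ((k:ℝ) * (m * (s - q))) * R k ^ m :=
        ENNReal.tsum_mul_left
    _ ≤ CST * (((1 - (2:ℝ≥0∞) ^ (-(s - q)))⁻¹) ^ m * (∑' j : ℤ, d j) ^ m) :=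
        mul_le_mul_right (hardy hδpos hm1 d) _
    _ ≤ CST * (((1 - (2:ℝ≥0∞) ^ (-(s - q)))⁻¹) ^ m * Atot ^ m) :=
        mul_le_mul_right (mul_le_mul_right (ENNReal.rpow_le_rpow hD_le_A hm0.le) _) _
    _ = X ^ p := hXp


end Statement9
end

section
/- Let (Σ,μ) be a finite measure space and u, v ∈ L¹(Σ,μ). Then the following are equivalent: (i) for every lower semicontinuous function j : ℝ → [0,∞] which is convex in the sense that j((1−t)a + tb) ≤ (1−t)·j(a) + t·j(b) in [0,∞] for all a, b ∈ ℝ and t ∈ [0,1], and for every λ > 0, one has ∫_Σ j(u) dμ ≤ ∫_Σ j(u + λv) dμ (both integrals taken in [0,∞]); (ii) for every T ∈ C^∞(ℝ) with 0 ≤ T′ ≤ 1 on ℝ and T′ compactly supported, one has ∫_Σ T(u)·v dμ ≥ 0. -/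
set_option maxHeartbeats 1000000
set_option linter.unusedSectionVars false
set_option linter.unusedVariables false

open MeasureTheory Filter ENNReal

namespace Statement12

/-- `j : ℝ → [0,∞]` is convex (in the extended-value sense) and lower semicontinuous. -/
def ConvexLSC (j : ℝ → ℝ≥0∞) : Prop :=
  LowerSemicontinuous j ∧
    ∀ a b t : ℝ, 0 ≤ t → t ≤ 1 →
      j ((1 - t) * a + t * b) ≤ ENNReal.ofReal (1 - t) * j a + ENNReal.ofReal t * j b

section Aux

open Set

variable {α : Type*} [MeasurableSpace α] {μ : Measure α} [IsFiniteMeasure μ]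

lemma integrable_comp_lip {f : ℝ → ℝ} (hf : Continuous f) {L : ℝ}
    (hL : ∀ x y, |f x - f y| ≤ L * |x - y|)
    {w : α → ℝ} (hw : Integrable w μ) : Integrable (fun x => f (w x)) μ := by
  have hm : AEStronglyMeasurable (fun x => f (w x)) μ := hf.comp_aestronglyMeasurable hw.1
  refine ((integrable_const |f 0|).add (hw.abs.const_mul L)).mono' hm
    (Filter.Eventually.of_forall fun x => ?_)
  have h1 := hL (w x) 0
  have h2 : |f (w x)| ≤ |f 0| + |f (w x) - f 0| := by
    have := abs_add_le (f 0) (f (w x) - f 0); simpa using this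
  simp only [Real.norm_eq_abs]
  calc |f (w x)| ≤ |f 0| + |f (w x) - f 0| := h2
    _ ≤ |f 0| + L * |w x - 0| := by linarith
    _ = |f 0| + L * |w x| := by rw [sub_zero]

section LemD

variable {D : ℝ → ℝ}

/-- upper tangent bound for the primitive of a monotone function -/
lemma primitive_le_tangent (hD : Continuous D) (hmono : Monotone D) (a₀ : ℝ) (x y : ℝ) :
    (∫ t in a₀..y, D t) - (∫ t in a₀..x, D t) ≤ D y * (y - x) := by
  have hint : ∀ p q : ℝ, IntervalIntegrable D volume p q := fun p q =>
    hD.intervalIntegrable p q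
  have hdiff : (∫ t in a₀..y, D t) - (∫ t in a₀..x, D t) = ∫ t in x..y, D t := by
    rw [← intervalIntegral.integral_add_adjacent_intervals (hint a₀ x) (hint x y)]
    ring
  rw [hdiff]
  rcases le_total x y with hxy | hyx
  · calc (∫ t in x..y, D t) ≤ ∫ t in x..y, D y := by
          refine intervalIntegral.integral_mono_on hxy (hint x y)
            (intervalIntegrable_const) (fun t ht => hmono ht.2)
      _ = D y * (y - x) := by rw [intervalIntegral.integral_const, smul_eq_mul, mul_comm]
  · have h1 : D y * (x - y) ≤ ∫ t in y..x, D t := by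
      calc D y * (x - y) = ∫ t in y..x, D y := by
            rw [intervalIntegral.integral_const, smul_eq_mul, mul_comm]
        _ ≤ ∫ t in y..x, D t := by
            refine intervalIntegral.integral_mono_on hyx intervalIntegrable_const
              (hint y x) (fun t ht => hmono ht.1)
    rw [intervalIntegral.integral_symm]
    nlinarith
  
lemma tangent_le_primitive (hD : Continuous D) (hmono : Monotone D) (a₀ : ℝ) (x y : ℝ) :
    D x * (y - x) ≤ (∫ t in a₀..y, D t) - (∫ t in a₀..x, D t) := by
  have hint : ∀ p q : ℝ, IntervalIntegrable D volume p q := fun p q =>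
    hD.intervalIntegrable p q
  have hdiff : (∫ t in a₀..y, D t) - (∫ t in a₀..x, D t) = ∫ t in x..y, D t := by
    rw [← intervalIntegral.integral_add_adjacent_intervals (hint a₀ x) (hint x y)]
    ring
  rw [hdiff]
  rcases le_total x y with hxy | hyx
  · calc D x * (y - x) = ∫ t in x..y, D x := by
          rw [intervalIntegral.integral_const, smul_eq_mul, mul_comm]
      _ ≤ ∫ t in x..y, D t := intervalIntegral.integral_mono_on hxy
          intervalIntegrable_const (hint x y) (fun t ht => hmono ht.1)
  · have h1 : (∫ t in y..x, D t) ≤ D x * (x - y) := by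
      calc (∫ t in y..x, D t) ≤ ∫ t in y..x, D x := intervalIntegral.integral_mono_on hyx
            (hint y x) intervalIntegrable_const (fun t ht => hmono ht.2)
        _ = D x * (x - y) := by rw [intervalIntegral.integral_const, smul_eq_mul, mul_comm]
    rw [intervalIntegral.integral_symm]
    nlinarith

lemma primitive_convexOn (hD : Continuous D) (hmono : Monotone D) (a₀ : ℝ) : ConvexOn ℝ Set.univ (fun s => ∫ t in a₀..s, D t) := by
  refine convexOn_of_slope_mono_adjacent convex_univ ?_
  intro x y z _ _ hxy hyz
  have h1 := primitive_le_tangent hD hmono a₀ x y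
  have h2 := tangent_le_primitive hD hmono a₀ y z
  rw [div_le_div_iff₀ (by linarith) (by linarith)]
  nlinarith [mul_pos (sub_pos.mpr hxy) (sub_pos.mpr hyz)]

lemma primitive_lip (hD : Continuous D) {C : ℝ} (hC : ∀ t, |D t| ≤ C) (a₀ : ℝ) (x y : ℝ) :
    |(∫ t in a₀..y, D t) - (∫ t in a₀..x, D t)| ≤ C * |y - x| := by
  have hint : ∀ p q : ℝ, IntervalIntegrable D volume p q := fun p q =>
    hD.intervalIntegrable p q
  have hdiff : (∫ t in a₀..y, D t) - (∫ t in a₀..x, D t) = ∫ t in x..y, D t := by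
    rw [← intervalIntegral.integral_add_adjacent_intervals (hint a₀ x) (hint x y)]
    ring
  rw [hdiff]
  have := intervalIntegral.norm_integral_le_of_norm_le_const
    (f := D) (a := x) (b := y) (C := C) (fun t _ => by simpa using hC t)
  simpa [Real.norm_eq_abs, abs_sub_comm x y] using this

/-- Core lemma for the forward direction. -/
lemma lemD {u v : α → ℝ} (hu : Integrable u μ) (hv : Integrable v μ)
    (H1 : ∀ j : ℝ → ℝ≥0∞, ConvexLSC j → ∀ l : ℝ, 0 < l →
        ∫⁻ x, j (u x) ∂μ ≤ ∫⁻ x, j (u x + l * v x) ∂μ)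
    (hD : Continuous D) (hmono : Monotone D) {C : ℝ} (hC : ∀ t, |D t| ≤ C)
    {a₀ : ℝ} (hjD : ∀ s, 0 ≤ ∫ t in a₀..s, D t) :
    0 ≤ ∫ x, D (u x) * v x ∂μ := by
  set jD : ℝ → ℝ := fun s => ∫ t in a₀..s, D t with hjDdef
  have hjDlip : ∀ x y, |jD x - jD y| ≤ C * |x - y| := fun x y =>
    primitive_lip hD hC a₀ y x
  have hC0 : 0 ≤ C := le_trans (abs_nonneg _) (hC 0)
  have hjDcont : Continuous jD := by
    refine (LipschitzWith.of_dist_le_mul (K := C.toNNReal) (f := jD) ?_).continuous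
    intro x y
    simpa [Real.dist_eq, Real.coe_toNNReal C hC0] using hjDlip x y
  have hconv : ConvexOn ℝ Set.univ jD := primitive_convexOn hD hmono a₀
  -- the extended-valued function
  have hCLSC : ConvexLSC (fun s => ENNReal.ofReal (jD s)) := by
    constructor
    · exact (ENNReal.continuous_ofReal.comp hjDcont).lowerSemicontinuous
    · intro a b t ht0 ht1
      have hreal : jD ((1 - t) * a + t * b) ≤ (1 - t) * jD a + t * jD b := by
        have := hconv.2 (Set.mem_univ a) (Set.mem_univ b) (by linarith : (0:ℝ) ≤ 1 - t) ht0
          (by ring)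
        simpa [smul_eq_mul] using this
      calc ENNReal.ofReal (jD ((1 - t) * a + t * b))
          ≤ ENNReal.ofReal ((1 - t) * jD a + t * jD b) := ENNReal.ofReal_le_ofReal hreal
        _ = ENNReal.ofReal ((1 - t) * jD a) + ENNReal.ofReal (t * jD b) :=
            ENNReal.ofReal_add (mul_nonneg (by linarith) (hjD a)) (mul_nonneg ht0 (hjD b))
        _ = ENNReal.ofReal (1 - t) * ENNReal.ofReal (jD a)
            + ENNReal.ofReal t * ENNReal.ofReal (jD b) := by
            rw [ENNReal.ofReal_mul (by linarith), ENNReal.ofReal_mul ht0]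
  -- for each positive l, the integral inequality
  have key : ∀ l : ℝ, 0 < l → 0 ≤ ∫ x, D (u x + l * v x) * v x ∂μ := by
    intro l hl
    have hw2 : Integrable (fun x => u x + l * v x) μ := hu.add (hv.const_mul l)
    have hint1 : Integrable (fun x => jD (u x)) μ := integrable_comp_lip hjDcont hjDlip hu
    have hint2 : Integrable (fun x => jD (u x + l * v x)) μ :=
      integrable_comp_lip hjDcont hjDlip hw2
    have hFm : AEStronglyMeasurable (fun x => D (u x + l * v x) * v x) μ :=
      (hD.comp_aestronglyMeasurable hw2.1).mul hv.1
    have hFint : Integrable (fun x => D (u x + l * v x) * v x) μ := by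
      refine (hv.abs.const_mul C).mono' hFm (Filter.Eventually.of_forall fun x => ?_)
      simp only [Real.norm_eq_abs, abs_mul]
      exact mul_le_mul_of_nonneg_right (hC _) (abs_nonneg _)
    -- lintegral inequality to real
    have h1 := H1 _ hCLSC l hl
    have h2 : ∫ x, jD (u x) ∂μ ≤ ∫ x, jD (u x + l * v x) ∂μ := by
      have e1 := ofReal_integral_eq_lintegral_ofReal hint1
        (Filter.Eventually.of_forall fun x => hjD (u x))
      have e2 := ofReal_integral_eq_lintegral_ofReal hint2
        (Filter.Eventually.of_forall fun x => hjD (u x + l * v x))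
      rw [← e1, ← e2] at h1
      exact (ENNReal.ofReal_le_ofReal_iff (integral_nonneg fun x => hjD _)).mp h1
    have h3 : ∫ x, (jD (u x + l * v x) - jD (u x)) ∂μ
        ≤ ∫ x, l * (D (u x + l * v x) * v x) ∂μ := by
      refine integral_mono (hint2.sub hint1) (hFint.const_mul l)
        (fun x => ?_)
      have := primitive_le_tangent hD hmono a₀ (u x) (u x + l * v x)
      simp only [hjDdef]
      calc (∫ t in a₀..(u x + l * v x), D t) - ∫ t in a₀..(u x), D t
          ≤ D (u x + l * v x) * (u x + l * v x - u x) := this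
        _ = l * (D (u x + l * v x) * v x) := by ring_nf
    rw [integral_sub hint2 hint1, integral_const_mul] at h3
    have h4 : l * 0 ≤ l * ∫ x, D (u x + l * v x) * v x ∂μ := by
      rw [mul_zero]; linarith
    exact le_of_mul_le_mul_left h4 hl
  -- let l → 0
  have hm : ∀ n : ℕ, (0:ℝ) < 1 / (n + 1) := fun n => by positivity
  have hlim : Tendsto (fun n : ℕ => ∫ x, D (u x + (1 / (n + 1)) * v x) * v x ∂μ)
      atTop (nhds (∫ x, D (u x) * v x ∂μ)) := by
    refine tendsto_integral_of_dominated_convergence (fun x => C * |v x|)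
      (fun n => (hD.comp_aestronglyMeasurable (hu.add (hv.const_mul _)).1).mul hv.1)
      (hv.abs.const_mul C)
      (fun n => Filter.Eventually.of_forall fun x => ?_)
      (Filter.Eventually.of_forall fun x => ?_)
    · simp only [Real.norm_eq_abs, abs_mul]
      exact mul_le_mul_of_nonneg_right (hC _) (abs_nonneg _)
    · have h0 : Tendsto (fun n : ℕ => (1:ℝ) / (n + 1)) atTop (nhds 0) :=
        tendsto_one_div_add_atTop_nhds_zero_nat
      have h1 : Tendsto (fun n : ℕ => u x + (1 / (n + 1)) * v x) atTop (nhds (u x)) := by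
        have := tendsto_const_nhds (x := u x) (f := atTop (α := ℕ)) |>.add
          (h0.mul_const (v x))
        simpa using this
      exact ((hD.tendsto (u x)).comp h1).mul_const (v x)
  exact ge_of_tendsto hlim (Filter.Eventually.of_forall fun n => key _ (hm n))

end LemD


lemma deriv_nonneg_of_monotone {T : ℝ → ℝ} (hm : Monotone T) (x : ℝ) : 0 ≤ deriv T x := by
  by_cases hd : DifferentiableAt ℝ T x
  · have h := hd.hasDerivAt
    rw [hasDerivAt_iff_tendsto_slope] at h
    refine ge_of_tendsto h ?_
    filter_upwards [self_mem_nhdsWithin] with y hy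
    rcases lt_or_gt_of_ne (hy : y ≠ x) with h' | h'
    · rw [slope_def_field]
      exact div_nonneg_of_nonpos (sub_nonpos.mpr (hm h'.le)) (by linarith)
    · rw [slope_def_field]
      exact div_nonneg (sub_nonneg.mpr (hm h'.le)) (by linarith)
  · rw [deriv_zero_of_not_differentiableAt hd]

lemma continuous_of_lip {f : ℝ → ℝ} {L : ℝ} (hL0 : 0 ≤ L)
    (h : ∀ x y, |f x - f y| ≤ L * |x - y|) : Continuous f := by
  refine (LipschitzWith.of_dist_le_mul (K := L.toNNReal) (f := f) ?_).continuous
  intro x y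
  simpa [Real.dist_eq, Real.coe_toNNReal L hL0] using h x y

lemma H2_of_monotone {u v : α → ℝ}
    (H2 : ∀ T : ℝ → ℝ, ContDiff ℝ (⊤ : ℕ∞) T → (∀ x : ℝ, 0 ≤ deriv T x) →
        (∀ x : ℝ, deriv T x ≤ 1) → HasCompactSupport (deriv T) →
        0 ≤ ∫ x, T (u x) * v x ∂μ)
    {T : ℝ → ℝ} (hT : ContDiff ℝ (⊤ : ℕ∞) T) (hmono : Monotone T)
    (hcs : HasCompactSupport (deriv T)) : 0 ≤ ∫ x, T (u x) * v x ∂μ := by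
  have hdc : Continuous (deriv T) := hT.continuous_deriv (by exact_mod_cast le_top)
  obtain ⟨M, hM0, hM⟩ : ∃ M : ℝ, 0 < M ∧ ∀ x, deriv T x ≤ M := by
    rcases (tsupport (deriv T)).eq_empty_or_nonempty with he | hne
    · refine ⟨1, one_pos, fun x => ?_⟩
      have : deriv T x = 0 := image_eq_zero_of_notMem_tsupport (by simp [he])
      rw [this]; norm_num
    · obtain ⟨x₀, _, hmax⟩ := hcs.exists_isMaxOn hne hdc.continuousOn
      refine ⟨max (deriv T x₀) 1, lt_of_lt_of_le one_pos (le_max_right _ _), fun x => ?_⟩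
      by_cases hx : x ∈ tsupport (deriv T)
      · exact le_trans (hmax hx) (le_max_left _ _)
      · rw [image_eq_zero_of_notMem_tsupport hx]
        exact le_trans zero_le_one (le_max_right _ _)
  have hTM : ContDiff ℝ (⊤ : ℕ∞) (fun x => T x / M) := hT.div_const M
  have hder : (deriv fun x => T x / M) = fun x => deriv T x / M := by
    funext x; exact deriv_div_const _
  have h1 := H2 (fun x => T x / M) hTM
    (by rw [hder]; exact fun x => div_nonneg (deriv_nonneg_of_monotone hmono x) hM0.le)
    (by rw [hder]; exact fun x => (div_le_one hM0).mpr (hM x))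
    (by rw [hder]
        exact HasCompactSupport.intro hcs (fun x hx => by
          rw [image_eq_zero_of_notMem_tsupport hx, zero_div]))
  have h2 : (fun x => T (u x) / M * v x) = fun x => (T (u x) * v x) / M := by
    funext x; ring
  rw [h2, integral_div] at h1
  have h3 := mul_nonneg h1 hM0.le
  rwa [div_mul_cancel₀] at h3
  exact ne_of_gt hM0

lemma forward {u v : α → ℝ} (hu : Integrable u μ) (hv : Integrable v μ)
    (H1 : ∀ j : ℝ → ℝ≥0∞, ConvexLSC j → ∀ l : ℝ, 0 < l →
        ∫⁻ x, j (u x) ∂μ ≤ ∫⁻ x, j (u x + l * v x) ∂μ)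
    (T : ℝ → ℝ) (hT : ContDiff ℝ (⊤ : ℕ∞) T) (hd0 : ∀ x : ℝ, 0 ≤ deriv T x)
    (hd1 : ∀ x : ℝ, deriv T x ≤ 1) (hcs : HasCompactSupport (deriv T)) :
    0 ≤ ∫ x, T (u x) * v x ∂μ := by
  -- Step 1 : ∫ v = 0
  have hv0 : ∫ x, v x ∂μ = 0 := by
    -- ∫ v ≥ 0
    have hge : 0 ≤ ∫ x, v x ∂μ := by
      set D : ℕ → ℝ → ℝ := fun n s => min (max (s + n) 0) 1 with hDdef
      have hpos : ∀ n : ℕ, 0 ≤ ∫ x, D n (u x) * v x ∂μ := by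
        intro n
        refine lemD hu hv H1 ?_ ?_ (C := 1) ?_ (a₀ := -(n : ℝ)) ?_
        · exact ((continuous_id.add continuous_const).max continuous_const).min
            continuous_const
        · intro a b hab
          exact min_le_min (max_le_max (by linarith) le_rfl) le_rfl
        · intro t
          rw [abs_le]
          constructor
          · have : (0:ℝ) ≤ min (max (t + n) 0) 1 := le_min (le_max_right _ _) zero_le_one
            linarith
          · exact min_le_right _ _
        · intro s
          rcases le_total (-(n:ℝ)) s with h | h
          · refine intervalIntegral.integral_nonneg h (fun t _ => ?_)
            exact le_min (le_max_right _ _) zero_le_one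
          · have hz : ∀ t ∈ uIcc s (-(n:ℝ)), D n t = 0 := by
              intro t ht
              rw [uIcc_of_le h] at ht
              have : t + n ≤ 0 := by have := ht.2; linarith
              simp [hDdef, max_eq_right this, min_eq_left zero_le_one]
            rw [intervalIntegral.integral_symm, intervalIntegral.integral_congr hz]
            simp
      have hlim : Tendsto (fun n : ℕ => ∫ x, D n (u x) * v x ∂μ) atTop
          (nhds (∫ x, v x ∂μ)) := by
        refine tendsto_integral_of_dominated_convergence (fun x => |v x|)
          (fun n => ?_) hv.abs (fun n => Filter.Eventually.of_forall fun x => ?_)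
          (Filter.Eventually.of_forall fun x => ?_)
        · exact ((((continuous_id.add continuous_const).max continuous_const).min
            continuous_const).comp_aestronglyMeasurable hu.1).mul hv.1
        · simp only [Real.norm_eq_abs, abs_mul]
          have h1 : |D n (u x)| ≤ 1 := by
            rw [abs_le]
            constructor
            · have : (0:ℝ) ≤ D n (u x) := le_min (le_max_right _ _) zero_le_one
              linarith
            · exact min_le_right _ _
          nlinarith [abs_nonneg (v x)]
        · have hev : ∀ᶠ n : ℕ in atTop, D n (u x) * v x = v x := by
            rw [eventually_atTop]
            refine ⟨⌈1 - u x⌉₊, fun n hn => ?_⟩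
            have h1 : (1:ℝ) - u x ≤ n := le_trans (Nat.le_ceil _) (by exact_mod_cast hn)
            have h2 : (1:ℝ) ≤ u x + n := by linarith
            have : D n (u x) = 1 := by
              have hmax : max (u x + n) 0 = u x + n := max_eq_left (by linarith)
              rw [hDdef]; simp only []
              rw [hmax, min_eq_right h2]
            rw [this, one_mul]
          exact Tendsto.congr' (hev.mono fun n h => h.symm) tendsto_const_nhds
      exact ge_of_tendsto hlim (Filter.Eventually.of_forall hpos)
    -- ∫ v ≤ 0
    have hle : ∫ x, v x ∂μ ≤ 0 := by
      set D : ℕ → ℝ → ℝ := fun n s => min (max (s - n) (-1)) 0 with hDdef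
      have hpos : ∀ n : ℕ, 0 ≤ ∫ x, D n (u x) * v x ∂μ := by
        intro n
        refine lemD hu hv H1 ?_ ?_ (C := 1) ?_ (a₀ := (n : ℝ)) ?_
        · exact ((continuous_id.sub continuous_const).max continuous_const).min
            continuous_const
        · intro a b hab
          exact min_le_min (max_le_max (by linarith) le_rfl) le_rfl
        · intro t
          rw [abs_le]
          constructor
          · have : (-1:ℝ) ≤ max (t - n) (-1) := le_max_right _ _
            have : (-1:ℝ) ≤ min (max (t - n) (-1)) 0 := le_min this (by norm_num)
            linarith
          · have : min (max (t - n) (-1)) 0 ≤ 0 := min_le_right _ _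
            linarith
        · intro s
          rcases le_total ((n:ℝ)) s with h | h
          · have hz : ∀ t ∈ uIcc (n:ℝ) s, D n t = 0 := by
              intro t ht
              rw [uIcc_of_le h] at ht
              have h0 : (0:ℝ) ≤ t - n := by have := ht.1; linarith
              have hmax : max (t - (n:ℝ)) (-1) = t - n := max_eq_left (by linarith)
              simp only [hDdef]
              rw [hmax, min_eq_right h0]
            rw [intervalIntegral.integral_congr hz]
            simp
          · have hnonpos : ∀ t ∈ Icc s (n:ℝ), D n t ≤ 0 := fun t _ => min_le_right _ _
            have : (∫ t in s..(n:ℝ), D n t) ≤ 0 := by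
              have := intervalIntegral.integral_mono_on (μ := volume) h
                (Continuous.intervalIntegrable (((continuous_id.sub continuous_const).max
                  continuous_const).min continuous_const) s (n:ℝ))
                intervalIntegrable_const hnonpos
              simpa using this
            rw [intervalIntegral.integral_symm]
            linarith
      have hlim : Tendsto (fun n : ℕ => ∫ x, D n (u x) * v x ∂μ) atTop
          (nhds (∫ x, -v x ∂μ)) := by
        refine tendsto_integral_of_dominated_convergence (fun x => |v x|)
          (fun n => ?_) hv.abs (fun n => Filter.Eventually.of_forall fun x => ?_)
          (Filter.Eventually.of_forall fun x => ?_)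
        · exact ((((continuous_id.sub continuous_const).max continuous_const).min
            continuous_const).comp_aestronglyMeasurable hu.1).mul hv.1
        · simp only [Real.norm_eq_abs, abs_mul]
          have h1 : |D n (u x)| ≤ 1 := by
            rw [abs_le]
            constructor
            · have h2 : (-1:ℝ) ≤ min (max (u x - n) (-1)) 0 :=
                le_min (le_max_right _ _) (by norm_num)
              exact h2
            · have : min (max (u x - n) (-1)) 0 ≤ 0 := min_le_right _ _
              linarith
          nlinarith [abs_nonneg (v x)]
        · have hev : ∀ᶠ n : ℕ in atTop, D n (u x) * v x = -v x := by
            rw [eventually_atTop]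
            refine ⟨⌈u x + 1⌉₊, fun n hn => ?_⟩
            have h1 : u x + 1 ≤ (n:ℝ) := le_trans (Nat.le_ceil _) (by exact_mod_cast hn)
            have h2 : u x - n ≤ -1 := by linarith
            have : D n (u x) = -1 := by
              have hmax : max (u x - (n:ℝ)) (-1) = -1 := max_eq_right h2
              simp only [hDdef]
              rw [hmax, min_eq_left (by norm_num : (-1:ℝ) ≤ 0)]
            rw [this]; ring
          exact Tendsto.congr' (hev.mono fun n h => h.symm) tendsto_const_nhds
      have := ge_of_tendsto hlim (Filter.Eventually.of_forall hpos)
      rw [integral_neg] at this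
      linarith
    linarith
  -- Step 2 : structure of T
  have hTd : Differentiable ℝ T := hT.differentiable (by simp)
  have hTmono : Monotone T := monotone_of_deriv_nonneg hTd hd0
  obtain ⟨R0, hR0⟩ := hcs.isBounded.subset_closedBall 0
  set R : ℝ := max R0 0 with hRdef
  have hsub : tsupport (deriv T) ⊆ Icc (-R) R := by
    refine subset_trans hR0 ?_
    rw [Real.closedBall_eq_Icc, zero_sub, zero_add]
    exact Icc_subset_Icc (by simp [hRdef]) (le_max_left _ _)
  have hconst : ∀ x y : ℝ, x ≤ y → (y ≤ -(R+1) ∨ R+1 ≤ x) → T x = T y := by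
    intro x y hxy hcase
    have hinteg : (∫ t in x..y, deriv T t) = T y - T x :=
      intervalIntegral.integral_deriv_eq_sub (fun t _ => hTd t)
        ((hT.continuous_deriv (by exact_mod_cast le_top)).intervalIntegrable x y)
    have hz : ∀ t ∈ uIcc x y, deriv T t = 0 := by
      intro t ht
      rw [uIcc_of_le hxy] at ht
      refine image_eq_zero_of_notMem_tsupport (fun hmem => ?_)
      have h2 := hsub hmem
      have hR : 0 ≤ R := le_max_right _ _
      rcases hcase with h | h
      · have := ht.2; have := h2.1; linarith
      · have := ht.1; have := h2.2; linarith
    rw [intervalIntegral.integral_congr hz] at hinteg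
    simp at hinteg
    linarith
  set c : ℝ := T (-(R+1)) with hcdef
  set CT : ℝ := T (R+1) - c with hCTdef
  have hD0 : ∀ s, 0 ≤ T s - c := by
    intro s
    rcases le_total (-(R+1)) s with h | h
    · have := hTmono h; linarith
    · have := hconst s (-(R+1)) h (Or.inl le_rfl); linarith
  have hDC : ∀ s, T s - c ≤ CT := by
    intro s
    rcases le_total s (R+1) with h | h
    · have := hTmono h; simp only [hCTdef]; linarith
    · have := hconst (R+1) s h (Or.inr le_rfl); simp only [hCTdef]; linarith
  have hkey : 0 ≤ ∫ x, (T (u x) - c) * v x ∂μ := by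
    refine lemD (D := fun s => T s - c) hu hv H1 (hT.continuous.sub continuous_const)
      (fun a b hab => sub_le_sub_right (hTmono hab) c)
      (C := CT) (fun t => abs_le.mpr ⟨by have := hD0 t; have := hDC t; linarith, hDC t⟩)
      (a₀ := -(R+1)) ?_
    intro s
    rcases le_total (-(R+1)) s with h | h
    · exact intervalIntegral.integral_nonneg h (fun t _ => hD0 t)
    · have hz : ∀ t ∈ uIcc s (-(R+1)), T t - c = 0 := by
        intro t ht
        rw [uIcc_of_le h] at ht
        have := hconst t (-(R+1)) ht.2 (Or.inl le_rfl)
        linarith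
      rw [intervalIntegral.integral_symm, intervalIntegral.integral_congr hz]
      simp
  -- conclude
  have hTuv : Integrable (fun x => T (u x) * v x) μ := by
    have hm : AEStronglyMeasurable (fun x => T (u x) * v x) μ :=
      (hT.continuous.comp_aestronglyMeasurable hu.1).mul hv.1
    refine (hv.abs.const_mul (|c| + CT)).mono' hm (Filter.Eventually.of_forall fun x => ?_)
    simp only [Real.norm_eq_abs, abs_mul]
    have h1 : |T (u x)| ≤ |c| + CT := by
      have := hD0 (u x); have := hDC (u x)
      rw [abs_le]; constructor
      · have := neg_abs_le c; linarith
      · have := le_abs_self c; linarith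
    exact mul_le_mul_of_nonneg_right h1 (abs_nonneg _)
  have heq : ∫ x, (T (u x) - c) * v x ∂μ = ∫ x, T (u x) * v x ∂μ := by
    have : (fun x => (T (u x) - c) * v x) = fun x => T (u x) * v x - c * v x := by
      funext x; ring
    rw [this, integral_sub hTuv (hv.const_mul c), integral_const_mul, hv0, mul_zero, sub_zero]
  rw [heq] at hkey
  exact hkey

lemma lemB_step {u v : α → ℝ} (hu : Integrable u μ) (hv : Integrable v μ)
    (H2 : ∀ T : ℝ → ℝ, ContDiff ℝ (⊤ : ℕ∞) T → (∀ x : ℝ, 0 ≤ deriv T x) →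
        (∀ x : ℝ, deriv T x ≤ 1) → HasCompactSupport (deriv T) →
        0 ≤ ∫ x, T (u x) * v x ∂μ)
    {g : ℝ → ℝ} {L : ℝ} (hL0 : 0 ≤ L) (hgL : ∀ x y, |g x - g y| ≤ L * |x - y|)
    (hgW : ∀ a b c : ℝ, a ≤ b → 0 ≤ c → g (a + c) + g b ≤ g (b + c) + g a)
    {l : ℝ} (hl : 0 < l) (n : ℕ) :
    ∫ x, g (u x) ∂μ ≤ ∫ x, g (u x + l * v x) ∂μ
      + (8 * L / (n + 1)) * (μ Set.univ).toReal
      + 2 * L * ((∫ x, max (|u x| - ((n : ℝ) + 1)) 0 ∂μ)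
        + ∫ x, max (|u x + l * v x| - ((n : ℝ) + 1)) 0 ∂μ) := by
  have hgcont : Continuous g := continuous_of_lip hL0 hgL
  set δ : ℝ := 1 / ((n : ℝ) + 1) with hδdef
  have hn1 : (0:ℝ) < (n : ℝ) + 1 := by positivity
  have hδpos : 0 < δ := by positivity
  have hδn : δ * ((n : ℝ) + 1) = 1 := by rw [hδdef]; field_simp
  set R : ℝ := (n : ℝ) + 2 with hRdef
  have hR2 : (2:ℝ) ≤ R := by rw [hRdef]; linarith [Nat.cast_nonneg (α := ℝ) n]
  have hRm1 : R - 1 = (n : ℝ) + 1 := by rw [hRdef]; ring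
  -- the mollified function G
  set ρ : ContDiffBump (0:ℝ) := ⟨δ/2, δ, by positivity, by linarith⟩ with hρdef
  set ρn : ℝ → ℝ := ρ.normed volume with hρndef
  set G : ℝ → ℝ := fun x => ∫ t, ρn t * g (x - t) with hGdef
  have hGconv : G = convolution ρn g (ContinuousLinearMap.lsmul ℝ ℝ) volume := by
    funext x
    rw [convolution_def]
    simp [ContinuousLinearMap.lsmul_apply, smul_eq_mul]
    rfl
  have hGsm : ContDiff ℝ (⊤ : ℕ∞) G := by
    rw [hGconv]
    exact HasCompactSupport.contDiff_convolution_left _ ρ.hasCompactSupport_normed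
      ρ.contDiff_normed hgcont.locallyIntegrable
  have hconv_int : ∀ x : ℝ, Integrable (fun t => ρn t * g (x - t)) volume := by
    intro x
    apply Continuous.integrable_of_hasCompactSupport
    · exact ρ.continuous_normed.mul (hgcont.comp (continuous_const.sub continuous_id))
    · exact ρ.hasCompactSupport_normed.mul_right
  have hGg : ∀ x, |G x - g x| ≤ L * δ := by
    intro x
    have hd : dist (convolution ρn g (ContinuousLinearMap.lsmul ℝ ℝ) volume x) (g x)
        ≤ L * δ := by
      refine ContDiffBump.dist_normed_convolution_le (φ := ρ) (μ := volume) (x₀ := x)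
        hgcont.aestronglyMeasurable (fun y hy => ?_)
      rw [Real.dist_eq]
      have hyx : |y - x| < δ := by
        have := Metric.mem_ball.mp hy
        simpa [Real.dist_eq] using this
      calc |g y - g x| ≤ L * |y - x| := hgL y x
        _ ≤ L * δ := mul_le_mul_of_nonneg_left hyx.le hL0
    rw [hGconv]
    simpa [Real.dist_eq] using hd
  have hGlip : ∀ x y, |G x - G y| ≤ L * |x - y| := by
    intro x y
    have he : G x - G y = ∫ t, (ρn t * g (x - t) - ρn t * g (y - t)) := by
      rw [hGdef]
      exact (integral_sub (hconv_int x) (hconv_int y)).symm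
    rw [he]
    have h1 : |∫ t, (ρn t * g (x - t) - ρn t * g (y - t))|
        ≤ ∫ t, ρn t * (L * |x - y|) := by
      rw [← Real.norm_eq_abs]
      refine norm_integral_le_of_norm_le (ρ.integrable_normed.mul_const _)
        (Filter.Eventually.of_forall fun t => ?_)
      rw [← mul_sub, Real.norm_eq_abs, abs_mul, abs_of_nonneg (ρ.nonneg_normed t)]
      refine mul_le_mul_of_nonneg_left ?_ (ρ.nonneg_normed t)
      have : (x - t) - (y - t) = x - y := by ring
      calc |g (x - t) - g (y - t)| ≤ L * |(x - t) - (y - t)| := hgL _ _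
        _ = L * |x - y| := by rw [this]
    rwa [integral_mul_const, ρ.integral_normed, one_mul] at h1
  have hGW : ∀ a b c : ℝ, a ≤ b → 0 ≤ c → G (a + c) + G b ≤ G (b + c) + G a := by
    intro a b c hab hc
    have e : ∀ p q : ℝ, G p + G q = ∫ t, (ρn t * g (p - t) + ρn t * g (q - t)) := by
      intro p q
      rw [hGdef]
      exact (integral_add (hconv_int p) (hconv_int q)).symm
    rw [e, e]
    refine integral_mono ((hconv_int _).add (hconv_int _))
      ((hconv_int _).add (hconv_int _)) fun t => ?_
    have hw := hgW (a - t) (b - t) c (by linarith) hc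
    have hρ : 0 ≤ ρn t := ρ.nonneg_normed t
    have e1 : a + c - t = (a - t) + c := by ring
    have e2 : b + c - t = (b - t) + c := by ring
    simp only [e1, e2]
    nlinarith
  -- the smooth cutoff φ
  set η : ℝ → ℝ := fun t => Real.smoothTransition (t + R) * Real.smoothTransition (R - t)
    with hηdef
  have hηsm : ContDiff ℝ (⊤ : ℕ∞) η :=
    (Real.smoothTransition.contDiff.comp (contDiff_id.add contDiff_const)).mul
      (Real.smoothTransition.contDiff.comp (contDiff_const.sub contDiff_id))
  have hηcont : Continuous η := hηsm.continuous
  have hη0 : ∀ t, 0 ≤ η t := fun t =>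
    mul_nonneg (Real.smoothTransition.nonneg _) (Real.smoothTransition.nonneg _)
  have hη1 : ∀ t, η t ≤ 1 := fun t =>
    mul_le_one₀ (Real.smoothTransition.le_one _) (Real.smoothTransition.nonneg _)
      (Real.smoothTransition.le_one _)
  have hηone : ∀ t, |t| ≤ R - 1 → η t = 1 := by
    intro t ht
    rw [abs_le] at ht
    show Real.smoothTransition (t + R) * Real.smoothTransition (R - t) = 1
    rw [Real.smoothTransition.one_of_one_le (by linarith : (1:ℝ) ≤ t + R),
      Real.smoothTransition.one_of_one_le (by linarith : (1:ℝ) ≤ R - t), mul_one]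
  have hηzero : ∀ t, R ≤ |t| → η t = 0 := by
    intro t ht
    show Real.smoothTransition (t + R) * Real.smoothTransition (R - t) = 0
    rcases le_abs.mp ht with h | h
    · rw [Real.smoothTransition.zero_of_nonpos (x := R - t) (by linarith), mul_zero]
    · rw [Real.smoothTransition.zero_of_nonpos (x := t + R) (by linarith), zero_mul]
  set φ : ℝ → ℝ := fun x => ∫ t in (0:ℝ)..x, η t with hφdef
  have hφd : ∀ x : ℝ, HasDerivAt φ (η x) x := by
    intro x
    exact intervalIntegral.integral_hasDerivAt_right (hηcont.intervalIntegrable _ _)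
      (hηcont.stronglyMeasurableAtFilter _ _) hηcont.continuousAt
  have hφdiff : Differentiable ℝ φ := fun x => (hφd x).differentiableAt
  have hφderiv : deriv φ = η := funext fun x => (hφd x).deriv
  have hφsm : ContDiff ℝ (⊤ : ℕ∞) φ := by
    rw [show ((⊤ : ℕ∞) : ℕ∞) = (⊤ : ℕ∞) from rfl]
    refine contDiff_infty_iff_deriv.mpr ⟨hφdiff, ?_⟩
    rw [hφderiv]
    exact_mod_cast hηsm
  have hφmono : Monotone φ :=
    monotone_of_deriv_nonneg hφdiff (by rw [hφderiv]; exact hη0)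
  have habsuIcc : ∀ x : ℝ, ∀ t ∈ uIcc (0:ℝ) x, |t| ≤ |x| := by
    intro x t ht
    rcases le_total 0 x with h | h
    · rw [uIcc_of_le h] at ht
      rw [abs_of_nonneg ht.1, abs_of_nonneg h]; exact ht.2
    · rw [uIcc_of_ge h] at ht
      rw [abs_of_nonpos ht.2, abs_of_nonpos h]; linarith [ht.1]
  have hφid : ∀ x : ℝ, |x| ≤ R - 1 → φ x = x := by
    intro x hx
    have : ∀ t ∈ uIcc (0:ℝ) x, η t = (fun _ => (1:ℝ)) t := by
      intro t ht
      exact hηone t (le_trans (habsuIcc x t ht) hx)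
    show (∫ t in (0:ℝ)..x, η t) = x
    rw [intervalIntegral.integral_congr this]
    simp
  have hφconst : ∀ x y : ℝ, x ≤ y → (y ≤ -R ∨ R ≤ x) → φ x = φ y := by
    intro x y hxy hcase
    have hz : ∀ t ∈ uIcc x y, η t = (fun _ => (0:ℝ)) t := by
      intro t ht
      rw [uIcc_of_le hxy] at ht
      refine hηzero t ?_
      rcases hcase with h | h
      · rw [le_abs]; right; linarith [ht.2]
      · rw [le_abs]; left; linarith [ht.1]
    have e : φ y - φ x = ∫ t in x..y, η t := by
      show (∫ t in (0:ℝ)..y, η t) - (∫ t in (0:ℝ)..x, η t) = _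
      rw [← intervalIntegral.integral_add_adjacent_intervals
        (hηcont.intervalIntegrable 0 x) (hηcont.intervalIntegrable x y)]
      ring
    rw [intervalIntegral.integral_congr hz] at e
    simp at e
    linarith
  -- the test function T
  set T : ℝ → ℝ := fun x => (G (φ x + δ) - G (φ x)) * ((n : ℝ) + 1) with hTdef
  have hTsm : ContDiff ℝ (⊤ : ℕ∞) T :=
    (((hGsm.comp (hφsm.add contDiff_const)).sub (hGsm.comp hφsm)).mul contDiff_const)
  have hTcont : Continuous T := hTsm.continuous
  have hTmono : Monotone T := by
    intro a b hab
    have h1 : φ a ≤ φ b := hφmono hab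
    have h2 := hGW (φ a) (φ b) δ h1 hδpos.le
    show (G (φ a + δ) - G (φ a)) * ((n : ℝ) + 1) ≤ (G (φ b + δ) - G (φ b)) * ((n : ℝ) + 1)
    nlinarith
  have hTbd : ∀ x, |T x| ≤ L := by
    intro x
    show |(G (φ x + δ) - G (φ x)) * ((n : ℝ) + 1)| ≤ L
    rw [abs_mul, abs_of_nonneg (by positivity : (0:ℝ) ≤ (n:ℝ)+1)]
    have h1 : |G (φ x + δ) - G (φ x)| ≤ L * δ := by
      have := hGlip (φ x + δ) (φ x)
      simpa [abs_of_nonneg hδpos.le] using this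
    calc |G (φ x + δ) - G (φ x)| * ((n:ℝ)+1) ≤ (L * δ) * ((n:ℝ)+1) := by nlinarith
      _ = L := by rw [mul_assoc, hδn, mul_one]
  have hTconst : ∀ x y : ℝ, x ≤ y → (y ≤ -R ∨ R ≤ x) → T x = T y := by
    intro x y hxy hcase
    show (G (φ x + δ) - G (φ x)) * ((n : ℝ) + 1) = (G (φ y + δ) - G (φ y)) * ((n : ℝ) + 1)
    rw [hφconst x y hxy hcase]
  have hTcs : HasCompactSupport (deriv T) := by
    refine HasCompactSupport.intro (isCompact_Icc (a := -(R+1)) (b := R+1))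
      (fun x hx => ?_)
    have hcase : x < -(R+1) ∨ R+1 < x := by
      simp only [mem_Icc, not_and, not_le] at hx
      rcases lt_or_ge x (-(R+1)) with h | h
      · exact Or.inl h
      · exact Or.inr (hx h)
    have hloc : ∀ᶠ y in nhds x, T y = T x := by
      filter_upwards [Metric.ball_mem_nhds x one_pos] with y hy
      have hxy : |y - x| < 1 := by simpa [Real.dist_eq] using hy
      rw [abs_lt] at hxy
      rcases hcase with h | h
      · rcases le_total y x with h2 | h2
        · exact hTconst y x h2 (Or.inl (by linarith))
        · exact (hTconst x y h2 (Or.inl (by linarith))).symm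
      · rcases le_total y x with h2 | h2
        · exact hTconst y x h2 (Or.inr (by linarith))
        · exact (hTconst x y h2 (Or.inr (by linarith))).symm
    calc deriv T x = deriv (fun _ => T x) x := Filter.EventuallyEq.deriv_eq hloc
      _ = 0 := deriv_const x (T x)
  have hTpos : 0 ≤ ∫ x, T (u x) * v x ∂μ := H2_of_monotone H2 hTsm hTmono hTcs
  -- the comparison function h
  set h : ℝ → ℝ := fun x => g 0 + ∫ t in (0:ℝ)..x, T t with hhdef
  have hsub : ∀ x y : ℝ, T x * (y - x) ≤ h y - h x := by
    intro x y
    have := tangent_le_primitive hTcont hTmono 0 x y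
    show T x * (y - x) ≤ (g 0 + ∫ t in (0:ℝ)..y, T t) - (g 0 + ∫ t in (0:ℝ)..x, T t)
    linarith
  have hhlip : ∀ x y, |h x - h y| ≤ L * |x - y| := by
    intro x y
    have := primitive_lip hTcont hTbd 0 y x
    show |(g 0 + ∫ t in (0:ℝ)..x, T t) - (g 0 + ∫ t in (0:ℝ)..y, T t)| ≤ L * |x - y|
    have e : g 0 + (∫ t in (0:ℝ)..x, T t) - (g 0 + ∫ t in (0:ℝ)..y, T t)
        = (∫ t in (0:ℝ)..x, T t) - (∫ t in (0:ℝ)..y, T t) := by ring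
    rw [e]
    exact this
  have hhcont : Continuous h := continuous_of_lip hL0 hhlip
  -- middle estimate
  have hGcont : Continuous G := hGsm.continuous
  have hGint : ∀ p q : ℝ, IntervalIntegrable G volume p q := fun p q =>
    hGcont.intervalIntegrable p q
  have havg : ∀ x : ℝ, |(∫ t in x..(x+δ), G t) * ((n:ℝ)+1) - G x| ≤ L * δ := by
    intro x
    have e1 : (∫ t in x..(x+δ), G t) - δ * G x = ∫ t in x..(x+δ), (G t - G x) := by
      rw [intervalIntegral.integral_sub (hGint _ _) intervalIntegrable_const,
        intervalIntegral.integral_const]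
      simp only [smul_eq_mul]
      ring
    have e2 : |∫ t in x..(x+δ), (G t - G x)| ≤ (L * δ) * |(x+δ) - x| := by
      rw [← Real.norm_eq_abs]
      refine intervalIntegral.norm_integral_le_of_norm_le_const (fun t ht => ?_)
      rw [uIoc_of_le (by linarith)] at ht
      rw [Real.norm_eq_abs]
      have htx : |t - x| ≤ δ := by
        rw [abs_le]; constructor
        · linarith [ht.1]
        · linarith [ht.2]
      calc |G t - G x| ≤ L * |t - x| := hGlip t x
        _ ≤ L * δ := mul_le_mul_of_nonneg_left htx hL0
    have e3 : |(∫ t in x..(x+δ), G t) - δ * G x| ≤ L * δ * δ := by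
      rw [e1]
      calc |∫ t in x..(x+δ), (G t - G x)| ≤ (L * δ) * |(x+δ) - x| := e2
        _ = L * δ * δ := by rw [show (x+δ) - x = δ by ring, abs_of_nonneg hδpos.le]
    have e4 : (∫ t in x..(x+δ), G t) * ((n:ℝ)+1) - G x
        = ((∫ t in x..(x+δ), G t) - δ * G x) * ((n:ℝ)+1) := by
      linear_combination (G x) * hδn
    rw [e4, abs_mul, abs_of_nonneg (by positivity : (0:ℝ) ≤ (n:ℝ)+1)]
    calc |(∫ t in x..(x+δ), G t) - δ * G x| * ((n:ℝ)+1) ≤ (L * δ * δ) * ((n:ℝ)+1) := by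
          nlinarith [e3]
      _ = L * δ := by rw [mul_assoc, hδn, mul_one]
  have hmid : ∀ x : ℝ, |x| ≤ R - 1 → |h x - g x| ≤ 4 * (L * δ) := by
    intro x hx
    have hTeq : ∀ t ∈ uIcc (0:ℝ) x, T t
        = (fun s => ((n:ℝ)+1) * (G (s + δ) - G s)) t := by
      intro t ht
      have hφt : φ t = t := hφid t (le_trans (habsuIcc x t ht) hx)
      show (G (φ t + δ) - G (φ t)) * ((n : ℝ) + 1) = _
      rw [hφt]
      ring
    have e1 : (∫ t in (0:ℝ)..x, T t)
        = ((∫ t in (0:ℝ)..x, G (t + δ)) - ∫ t in (0:ℝ)..x, G t) * ((n:ℝ)+1) := by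
      calc (∫ t in (0:ℝ)..x, T t)
          = ∫ t in (0:ℝ)..x, ((n:ℝ)+1) * (G (t + δ) - G t) :=
            intervalIntegral.integral_congr hTeq
        _ = ((n:ℝ)+1) * ∫ t in (0:ℝ)..x, (G (t + δ) - G t) :=
            intervalIntegral.integral_const_mul _ _
        _ = ((∫ t in (0:ℝ)..x, G (t + δ)) - ∫ t in (0:ℝ)..x, G t) * ((n:ℝ)+1) := by
            have hc : Continuous fun s : ℝ => G (s + δ) :=
              hGcont.comp (continuous_add_right δ)
            rw [intervalIntegral.integral_sub (hc.intervalIntegrable _ _) (hGint _ _)]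
            ring
    have e2 : (∫ t in (0:ℝ)..x, G (t + δ)) = ∫ t in δ..(x+δ), G t := by
      have := intervalIntegral.integral_comp_add_right (a := (0:ℝ)) (b := x) G δ
      simpa using this
    have e3 : (∫ t in δ..(x+δ), G t) - (∫ t in (0:ℝ)..x, G t)
        = (∫ t in x..(x+δ), G t) - ∫ t in (0:ℝ)..δ, G t := by
      have i1 : (∫ t in δ..x, G t) + (∫ t in x..(x+δ), G t) = ∫ t in δ..(x+δ), G t :=
        intervalIntegral.integral_add_adjacent_intervals (hGint _ _) (hGint _ _)
      have i2 : (∫ t in (0:ℝ)..δ, G t) + (∫ t in δ..x, G t) = ∫ t in (0:ℝ)..x, G t :=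
        intervalIntegral.integral_add_adjacent_intervals (hGint _ _) (hGint _ _)
      linarith
    have e5 : h x - g x = ((∫ t in x..(x+δ), G t) * ((n:ℝ)+1) - G x)
        - ((∫ t in (0:ℝ)..δ, G t) * ((n:ℝ)+1) - G 0)
        + (G x - g x) - (G 0 - g 0) := by
      show g 0 + (∫ t in (0:ℝ)..x, T t) - g x = _
      rw [e1, e2]
      nlinarith [e3]
    have b1 := havg x
    have b2 : |(∫ t in (0:ℝ)..δ, G t) * ((n:ℝ)+1) - G 0| ≤ L * δ := by
      have := havg 0
      simpa using this
    have b3 := hGg x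
    have b4 := hGg 0
    rw [e5]
    rw [abs_le] at b1 b2 b3 b4 ⊢
    constructor <;>
      linarith [b1.1, b1.2, b2.1, b2.2, b3.1, b3.2, b4.1, b4.2]
  -- global estimate with the tail term
  set q : ℝ → ℝ := fun s => max (|s| - (R - 1)) 0 with hqdef
  have hq0 : ∀ s, 0 ≤ q s := fun s => le_max_right _ _
  have hqlip : ∀ x y, |q x - q y| ≤ 1 * |x - y| := by
    intro x y
    rw [one_mul]
    have h1 : |q x - q y| ≤ abs ((|x| - (R-1)) - (|y| - (R-1))) :=
      abs_max_sub_max_le_abs _ _ _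
    have h2 : abs ((|x| - (R-1)) - (|y| - (R-1))) = abs (|x| - |y|) := by
      congr 1; ring
    have h3 : abs (|x| - |y|) ≤ |x - y| := abs_abs_sub_abs_le_abs_sub x y
    linarith
  have hqcont : Continuous q := continuous_of_lip zero_le_one hqlip
  have hglobal : ∀ x : ℝ, |h x - g x| ≤ 4 * (L * δ) + 2 * L * q x := by
    intro x
    rcases le_total |x| (R - 1) with hx | hx
    · have h1 := hmid x hx
      have h2 : q x = 0 := max_eq_right (by linarith)
      rw [h2]
      have : 0 ≤ L * δ := mul_nonneg hL0 hδpos.le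
      linarith
    · have hR1 : (0:ℝ) ≤ R - 1 := by linarith
      -- the projected point y
      rcases le_total 0 x with hx0 | hx0
      · have hxx : |x| = x := abs_of_nonneg hx0
        set y : ℝ := R - 1 with hy
        have hyabs : |y| ≤ R - 1 := by rw [abs_of_nonneg hR1]
        have h1 := hmid y hyabs
        have h2 := hhlip x y
        have h3 := hgL y x
        have hq : q x = x - (R - 1) := by
          show max (|x| - (R-1)) 0 = x - (R - 1)
          rw [hxx]
          exact max_eq_left (by linarith [hxx ▸ hx])
        have hxy : |x - y| = x - (R-1) := by
          rw [abs_of_nonneg (by rw [hy]; linarith [hxx ▸ hx])]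
        have htot : |h x - g x| ≤ |h x - h y| + |h y - g y| + |g y - g x| := by
          have := abs_add_le (h x - h y) (h y - g x)
          have e : h x - g x = (h x - h y) + (h y - g x) := by ring
          have e2 : h y - g x = (h y - g y) + (g y - g x) := by ring
          calc |h x - g x| = |(h x - h y) + (h y - g x)| := by rw [← e]
            _ ≤ |h x - h y| + |h y - g x| := abs_add_le _ _
            _ ≤ |h x - h y| + (|h y - g y| + |g y - g x|) := by
                have := abs_add_le (h y - g y) (g y - g x)
                rw [e2] at *
                linarith [abs_add_le (h y - g y) (g y - g x)]
            _ = _ := by ring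
        have hgyx : |g y - g x| ≤ L * (x - (R-1)) := by
          calc |g y - g x| ≤ L * |y - x| := h3
            _ = L * (x - (R-1)) := by rw [abs_sub_comm, hxy]
        have hhyx : |h x - h y| ≤ L * (x - (R-1)) := by
          calc |h x - h y| ≤ L * |x - y| := h2
            _ = L * (x - (R-1)) := by rw [hxy]
        rw [hq]
        linarith
      · have hxx : |x| = -x := abs_of_nonpos hx0
        set y : ℝ := -(R - 1) with hy
        have hyabs : |y| ≤ R - 1 := by rw [hy, abs_neg, abs_of_nonneg hR1]
        have h1 := hmid y hyabs
        have h2 := hhlip x y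
        have h3 := hgL y x
        have hxRneg : x ≤ -(R-1) := by linarith [hxx ▸ hx]
        have hq : q x = -x - (R - 1) := by
          show max (|x| - (R-1)) 0 = -x - (R - 1)
          rw [hxx]
          exact max_eq_left (by linarith [hxx ▸ hx])
        have hxy : |x - y| = -x - (R-1) := by
          rw [hy, abs_of_nonpos (by linarith)]
          ring
        have htot : |h x - g x| ≤ |h x - h y| + |h y - g y| + |g y - g x| := by
          calc |h x - g x| = |(h x - h y) + (h y - g x)| := by
                rw [show h x - g x = (h x - h y) + (h y - g x) by ring]
            _ ≤ |h x - h y| + |h y - g x| := abs_add_le _ _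
            _ ≤ |h x - h y| + (|h y - g y| + |g y - g x|) := by
                have e2 : h y - g x = (h y - g y) + (g y - g x) := by ring
                rw [e2]
                linarith [abs_add_le (h y - g y) (g y - g x)]
            _ = _ := by ring
        have hgyx : |g y - g x| ≤ L * (-x - (R-1)) := by
          calc |g y - g x| ≤ L * |y - x| := h3
            _ = L * (-x - (R-1)) := by rw [abs_sub_comm, hxy]
        have hhyx : |h x - h y| ≤ L * (-x - (R-1)) := by
          calc |h x - h y| ≤ L * |x - y| := h2
            _ = L * (-x - (R-1)) := by rw [hxy]
        rw [hq]
        linarith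
  -- integrability
  set w : α → ℝ := fun x => u x + l * v x with hwdef
  have hw : Integrable w μ := hu.add (hv.const_mul l)
  have hgu : Integrable (fun x => g (u x)) μ := integrable_comp_lip hgcont hgL hu
  have hgw : Integrable (fun x => g (w x)) μ := integrable_comp_lip hgcont hgL hw
  have hhu : Integrable (fun x => h (u x)) μ := integrable_comp_lip hhcont hhlip hu
  have hhw : Integrable (fun x => h (w x)) μ := integrable_comp_lip hhcont hhlip hw
  have hqu : Integrable (fun x => q (u x)) μ := integrable_comp_lip hqcont hqlip hu
  have hqw : Integrable (fun x => q (w x)) μ := integrable_comp_lip hqcont hqlip hw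
  have hTuv : Integrable (fun x => T (u x) * v x) μ := by
    refine (hv.abs.const_mul L).mono'
      ((hTcont.comp_aestronglyMeasurable hu.1).mul hv.1)
      (Filter.Eventually.of_forall fun x => ?_)
    simp only [Real.norm_eq_abs, abs_mul]
    exact mul_le_mul_of_nonneg_right (hTbd _) (abs_nonneg _)
  set m : ℝ := (μ Set.univ).toReal with hmdef
  -- step P1
  have P1 : ∫ x, g (u x) ∂μ ≤ (∫ x, h (u x) ∂μ) + ((4 * (L * δ)) * m
      + 2 * L * ∫ x, q (u x) ∂μ) := by
    have hint3 : Integrable (fun x : α => 2 * L * q (u x)) μ := hqu.const_mul _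
    have hint2 : Integrable (fun x : α => 4 * (L * δ) + 2 * L * q (u x)) μ :=
      (integrable_const _).add hint3
    have hint : Integrable (fun x => h (u x) + (4 * (L * δ) + 2 * L * q (u x))) μ :=
      hhu.add hint2
    have hmono2 := integral_mono hgu hint (fun x => by
      have := hglobal (u x)
      rw [abs_le] at this
      linarith [this.1])
    rw [integral_add hhu hint2,
      integral_add (integrable_const (4 * (L * δ))) hint3, integral_const,
      integral_const_mul] at hmono2
    simpa [hmdef, smul_eq_mul, mul_comm, measureReal_def] using hmono2
  -- step P2
  have P2 : ∫ x, h (u x) ∂μ ≤ ∫ x, h (w x) ∂μ := by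
    have hpoint : ∀ x, h (u x) + l * (T (u x) * v x) ≤ h (w x) := by
      intro x
      have := hsub (u x) (w x)
      have e : w x - u x = l * v x := by rw [hwdef]; ring
      rw [e] at this
      nlinarith [this]
    have hint1 : Integrable (fun x => h (u x) + l * (T (u x) * v x)) μ :=
      hhu.add (hTuv.const_mul l)
    have := integral_mono hint1 hhw hpoint
    rw [integral_add hhu (hTuv.const_mul l), integral_const_mul] at this
    nlinarith [mul_nonneg hl.le hTpos]
  -- step P3
  have P3 : ∫ x, h (w x) ∂μ ≤ (∫ x, g (w x) ∂μ) + ((4 * (L * δ)) * m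
      + 2 * L * ∫ x, q (w x) ∂μ) := by
    have hint3 : Integrable (fun x : α => 2 * L * q (w x)) μ := hqw.const_mul _
    have hint2 : Integrable (fun x : α => 4 * (L * δ) + 2 * L * q (w x)) μ :=
      (integrable_const _).add hint3
    have hint : Integrable (fun x => g (w x) + (4 * (L * δ) + 2 * L * q (w x))) μ :=
      hgw.add hint2
    have hmono2 := integral_mono hhw hint (fun x => by
      have := hglobal (w x)
      rw [abs_le] at this
      linarith [this.2])
    rw [integral_add hgw hint2,
      integral_add (integrable_const (4 * (L * δ))) hint3, integral_const,
      integral_const_mul] at hmono2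
    simpa [hmdef, smul_eq_mul, mul_comm, measureReal_def] using hmono2
  -- combine
  have hqueq : (∫ x, q (u x) ∂μ) = ∫ x, max (|u x| - ((n : ℝ) + 1)) 0 ∂μ := by
    refine integral_congr_ae (Filter.Eventually.of_forall fun x => ?_)
    show max (|u x| - (R-1)) 0 = _
    rw [hRm1]
  have hqweq : (∫ x, q (w x) ∂μ) = ∫ x, max (|u x + l * v x| - ((n : ℝ) + 1)) 0 ∂μ := by
    refine integral_congr_ae (Filter.Eventually.of_forall fun x => ?_)
    show max (|u x + l * v x| - (R-1)) 0 = _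
    rw [hRm1]
  have hgweq : (∫ x, g (w x) ∂μ) = ∫ x, g (u x + l * v x) ∂μ := by
    exact rfl
  have hδeq : 8 * (L * δ) = 8 * L / ((n:ℝ) + 1) := by
    rw [hδdef]; field_simp
  rw [← hgweq, ← hqueq, ← hqweq]
  have hm0 : 0 ≤ m := ENNReal.toReal_nonneg
  have e : (8 * L / ((n:ℝ) + 1)) * m = 2 * ((4 * (L * δ)) * m) := by
    rw [← hδeq]; ring
  rw [e]
  linarith

lemma tail_tendsto {w : α → ℝ} (hw : Integrable w μ) :
    Tendsto (fun n : ℕ => ∫ x, max (|w x| - ((n:ℝ)+1)) 0 ∂μ) atTop (nhds 0) := by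
  have hdct : Tendsto (fun n : ℕ => ∫ x, max (|w x| - ((n:ℝ)+1)) 0 ∂μ) atTop
      (nhds (∫ _x, (0:ℝ) ∂μ)) := by
    refine tendsto_integral_of_dominated_convergence (fun x => |w x|) (fun n => ?_) hw.abs
      (fun n => Filter.Eventually.of_forall fun x => ?_)
      (Filter.Eventually.of_forall fun x => ?_)
    · exact ((continuous_abs.sub continuous_const).max
        continuous_const).comp_aestronglyMeasurable hw.1
    · rw [Real.norm_eq_abs, abs_of_nonneg (le_max_right _ _)]
      refine max_le (by linarith [abs_nonneg (w x), Nat.cast_nonneg (α := ℝ) n]) (abs_nonneg _)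
    · have hev : ∀ᶠ n : ℕ in atTop, max (|w x| - ((n:ℝ)+1)) 0 = 0 := by
        rw [eventually_atTop]
        refine ⟨⌈|w x|⌉₊, fun n hn => max_eq_right ?_⟩
        have : |w x| ≤ (n:ℝ) := le_trans (Nat.le_ceil _) (by exact_mod_cast hn)
        linarith
      exact Tendsto.congr' (hev.mono fun n h => h.symm) tendsto_const_nhds
  simpa using hdct

lemma lemB {u v : α → ℝ} (hu : Integrable u μ) (hv : Integrable v μ)
    (H2 : ∀ T : ℝ → ℝ, ContDiff ℝ (⊤ : ℕ∞) T → (∀ x : ℝ, 0 ≤ deriv T x) →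
        (∀ x : ℝ, deriv T x ≤ 1) → HasCompactSupport (deriv T) →
        0 ≤ ∫ x, T (u x) * v x ∂μ)
    {g : ℝ → ℝ} {L : ℝ} (hL0 : 0 ≤ L) (hgL : ∀ x y, |g x - g y| ≤ L * |x - y|)
    (hgW : ∀ a b c : ℝ, a ≤ b → 0 ≤ c → g (a + c) + g b ≤ g (b + c) + g a)
    {l : ℝ} (hl : 0 < l) :
    ∫ x, g (u x) ∂μ ≤ ∫ x, g (u x + l * v x) ∂μ := by
  have hw : Integrable (fun x => u x + l * v x) μ := hu.add (hv.const_mul l)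
  have hlim : Tendsto (fun n : ℕ => ∫ x, g (u x + l * v x) ∂μ
      + (8 * L / (n + 1)) * (μ Set.univ).toReal
      + 2 * L * ((∫ x, max (|u x| - ((n : ℝ) + 1)) 0 ∂μ)
        + ∫ x, max (|u x + l * v x| - ((n : ℝ) + 1)) 0 ∂μ)) atTop
      (nhds (∫ x, g (u x + l * v x) ∂μ + 0 * (μ Set.univ).toReal + 2 * L * (0 + 0))) := by
    refine Tendsto.add (Tendsto.add tendsto_const_nhds (Tendsto.mul_const _ ?_))
      (Tendsto.const_mul _ (Tendsto.add (tail_tendsto hu) (tail_tendsto hw)))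
    have h1 : Tendsto (fun n : ℕ => (1:ℝ)/((n:ℝ)+1)) atTop (nhds 0) :=
      tendsto_one_div_add_atTop_nhds_zero_nat
    have h2 := h1.const_mul (8*L)
    rw [mul_zero] at h2
    refine h2.congr fun n => ?_
    field_simp
  have hconc := ge_of_tendsto hlim (Filter.Eventually.of_forall
    (fun n => lemB_step hu hv H2 hL0 hgL hgW hl n))
  simpa using hconc

/-- Wright convexity from convexity, real version. -/
lemma wright_of_convexOn {g : ℝ → ℝ} (hg : ConvexOn ℝ Set.univ g) :
    ∀ a b c : ℝ, a ≤ b → 0 ≤ c → g (a + c) + g b ≤ g (b + c) + g a := by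
  intro a b c hab hc
  rcases eq_or_lt_of_le (show a ≤ b + c by linarith) with heq | hlt
  · have hc0 : c = 0 := by linarith
    have hab' : a = b := by linarith
    simp [hc0, hab']
  · set t := c / (b + c - a) with ht
    have hden : 0 < b + c - a := by linarith
    have ht0 : 0 ≤ t := div_nonneg hc hden.le
    have ht1 : t ≤ 1 := by rw [ht, div_le_one hden]; linarith
    have e1 : (1 - t) * a + t * (b + c) = a + c := by
      field_simp [ht]
      rw [ht]; linear_combination (div_mul_cancel₀ c hden.ne' : c / (b + c - a) * (b + c - a) = c)
    have e2 : t * a + (1 - t) * (b + c) = b := by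
      field_simp [ht]
      rw [ht]; linear_combination (-1:ℝ) * (div_mul_cancel₀ c hden.ne' : c / (b + c - a) * (b + c - a) = c)
    have h1 := hg.2 (mem_univ a) (mem_univ (b+c)) (by linarith : (0:ℝ) ≤ 1 - t) ht0 (by ring)
    have h2 := hg.2 (mem_univ a) (mem_univ (b+c)) ht0 (by linarith : (0:ℝ) ≤ 1 - t) (by ring)
    simp only [smul_eq_mul] at h1 h2
    rw [e1] at h1
    rw [e2] at h2
    linarith

noncomputable def my (j : ℝ → ℝ≥0∞) (n : ℕ) (x : ℝ) : ℝ≥0∞ :=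
  ⨅ y : ℝ, (j y + ENNReal.ofReal (((n:ℝ)+1) * |x - y|))

noncomputable def myr (j : ℝ → ℝ≥0∞) (n : ℕ) (x : ℝ) : ℝ := (my j n x).toReal

lemma my_le_self {j : ℝ → ℝ≥0∞} (n : ℕ) (x : ℝ) : my j n x ≤ j x := by
  have := iInf_le (fun y => j y + ENNReal.ofReal (((n:ℝ)+1) * |x - y|)) x
  simpa [my] using this

lemma my_mono {j : ℝ → ℝ≥0∞} (x : ℝ) : Monotone fun n => my j n x := by
  intro m n hmn
  refine le_iInf fun y => ?_
  refine le_trans (iInf_le _ y) (add_le_add_right (ENNReal.ofReal_le_ofReal ?_) _)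
  have hcast : ((m:ℝ)+1) ≤ ((n:ℝ)+1) := by
    have : (m:ℝ) ≤ n := by exact_mod_cast hmn
    linarith
  nlinarith [abs_nonneg (x - y)]

lemma my_ne_top {j : ℝ → ℝ≥0∞} {y₀ : ℝ} (hy₀ : j y₀ ≠ ⊤) (n : ℕ) (x : ℝ) :
    my j n x ≠ ⊤ := by
  refine ne_top_of_le_ne_top ?_ (iInf_le _ y₀)
  exact ENNReal.add_ne_top.mpr ⟨hy₀, ENNReal.ofReal_ne_top⟩

lemma my_lip {j : ℝ → ℝ≥0∞} (n : ℕ) (x y : ℝ) :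
    my j n x ≤ my j n y + ENNReal.ofReal (((n:ℝ)+1) * |x - y|) := by
  rw [my, my, ENNReal.iInf_add]
  refine le_iInf fun z => ?_
  refine le_trans (iInf_le _ z) ?_
  rw [add_assoc]
  gcongr
  rw [← ENNReal.ofReal_add (by positivity) (by positivity)]
  refine ENNReal.ofReal_le_ofReal ?_
  have habs : |x - z| ≤ |x - y| + |y - z| := abs_sub_le x y z
  nlinarith [Nat.cast_nonneg (α := ℝ) n]

lemma myr_lip {j : ℝ → ℝ≥0∞} {y₀ : ℝ} (hy₀ : j y₀ ≠ ⊤) (n : ℕ) :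
    ∀ x y, |myr j n x - myr j n y| ≤ ((n:ℝ)+1) * |x - y| := by
  have key : ∀ x y : ℝ, myr j n x - myr j n y ≤ ((n:ℝ)+1) * |x - y| := by
    intro x y
    have h1 := my_lip (j := j) n x y
    have h2 := ENNReal.toReal_mono
      (ENNReal.add_ne_top.mpr ⟨my_ne_top hy₀ n y, ENNReal.ofReal_ne_top⟩) h1
    rw [ENNReal.toReal_add (my_ne_top hy₀ n y) ENNReal.ofReal_ne_top,
      ENNReal.toReal_ofReal (by positivity)] at h2
    simp only [myr]
    linarith [h2]
  intro x y
  rw [abs_le]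
  constructor
  · have := key y x
    rw [abs_sub_comm] at this
    linarith
  · exact key x y

lemma my_convex {j : ℝ → ℝ≥0∞} (hj : ConvexLSC j) (n : ℕ) :
    ∀ a b t : ℝ, 0 ≤ t → t ≤ 1 →
    my j n ((1 - t) * a + t * b)
      ≤ ENNReal.ofReal (1 - t) * my j n a + ENNReal.ofReal t * my j n b := by
  intro a b t ht0 ht1
  by_cases hA : ENNReal.ofReal (1-t) * my j n a + ENNReal.ofReal t * my j n b = ⊤
  · rw [hA]; exact le_top
  obtain ⟨hA1, hA2⟩ := ENNReal.add_ne_top.mp hA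
  refine ENNReal.le_of_forall_pos_le_add fun ε hε _ => ?_
  have hεpos : (0:ℝ≥0∞) < (ε:ℝ≥0∞) := by exact_mod_cast hε
  have pick : ∀ x : ℝ, ∀ p : ℝ, 0 ≤ p → ENNReal.ofReal p * my j n x ≠ ⊤ →
      ∃ y : ℝ, j y + ENNReal.ofReal (((n:ℝ)+1) * |x - y|) ≤ my j n x + (ε:ℝ≥0∞)
        ∨ ENNReal.ofReal p = 0 := by
    intro x p hp hptop
    by_cases hp0 : ENNReal.ofReal p = 0
    · exact ⟨x, Or.inr hp0⟩
    have hxfin : my j n x ≠ ⊤ := by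
      intro h
      apply hptop
      rw [h]
      exact ENNReal.mul_top hp0
    have hlt : my j n x < my j n x + (ε:ℝ≥0∞) :=
      ENNReal.lt_add_right hxfin (by exact_mod_cast hε.ne')
    rw [my] at hlt
    obtain ⟨y, hy⟩ := iInf_lt_iff.mp hlt
    exact ⟨y, Or.inl (le_of_lt (by rw [my]; exact hy))⟩
  obtain ⟨y₁, hy₁⟩ := pick a (1-t) (by linarith) hA1
  obtain ⟨y₂, hy₂⟩ := pick b t ht0 hA2
  -- handle degenerate coefficient cases
  rcases hy₁ with hy₁ | h0
  · rcases hy₂ with hy₂ | h0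
    · -- main case
      set P : ℝ := (1-t)*y₁ + t*y₂ with hP
      have step1 : my j n ((1 - t) * a + t * b)
          ≤ j P + ENNReal.ofReal (((n:ℝ)+1) * |((1-t)*a + t*b) - P|) := iInf_le _ P
      have habs : |((1-t)*a + t*b) - P| ≤ (1-t)*|a - y₁| + t*|b - y₂| := by
        have e : ((1-t)*a + t*b) - P = (1-t)*(a - y₁) + t*(b - y₂) := by rw [hP]; ring
        rw [e]
        calc |(1-t)*(a - y₁) + t*(b - y₂)| ≤ |(1-t)*(a - y₁)| + |t*(b - y₂)| := abs_add_le _ _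
          _ = (1-t)*|a - y₁| + t*|b - y₂| := by
              rw [abs_mul, abs_mul, abs_of_nonneg (by linarith : (0:ℝ) ≤ 1-t),
                abs_of_nonneg ht0]
      have step2 : ENNReal.ofReal (((n:ℝ)+1) * |((1-t)*a + t*b) - P|)
          ≤ ENNReal.ofReal ((1-t) * (((n:ℝ)+1) * |a - y₁|))
            + ENNReal.ofReal (t * (((n:ℝ)+1) * |b - y₂|)) := by
        rw [← ENNReal.ofReal_add (mul_nonneg (by linarith) (by positivity))
          (mul_nonneg ht0 (by positivity))]
        refine ENNReal.ofReal_le_ofReal ?_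
        nlinarith [Nat.cast_nonneg (α := ℝ) n, abs_nonneg (((1-t)*a + t*b) - P)]
      have step3 : j P ≤ ENNReal.ofReal (1-t) * j y₁ + ENNReal.ofReal t * j y₂ :=
        hj.2 y₁ y₂ t ht0 ht1
      have step4 : my j n ((1 - t) * a + t * b)
          ≤ ENNReal.ofReal (1-t) * (j y₁ + ENNReal.ofReal (((n:ℝ)+1) * |a - y₁|))
            + ENNReal.ofReal t * (j y₂ + ENNReal.ofReal (((n:ℝ)+1) * |b - y₂|)) := by
        refine le_trans step1 ?_
        refine le_trans (add_le_add step3 step2) ?_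
        rw [ENNReal.ofReal_mul (by linarith : (0:ℝ) ≤ 1-t), ENNReal.ofReal_mul ht0]
        rw [mul_add, mul_add]
        ring_nf
        exact le_refl _
      refine le_trans step4 ?_
      have step5 : ENNReal.ofReal (1-t) * (j y₁ + ENNReal.ofReal (((n:ℝ)+1) * |a - y₁|))
            + ENNReal.ofReal t * (j y₂ + ENNReal.ofReal (((n:ℝ)+1) * |b - y₂|))
          ≤ ENNReal.ofReal (1-t) * (my j n a + (ε:ℝ≥0∞))
            + ENNReal.ofReal t * (my j n b + (ε:ℝ≥0∞)) := by
        gcongr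
      refine le_trans step5 ?_
      have e6 : ENNReal.ofReal (1-t) * (my j n a + (ε:ℝ≥0∞))
            + ENNReal.ofReal t * (my j n b + (ε:ℝ≥0∞))
          = (ENNReal.ofReal (1-t) * my j n a + ENNReal.ofReal t * my j n b)
            + (ENNReal.ofReal (1-t) + ENNReal.ofReal t) * (ε:ℝ≥0∞) := by ring
      rw [e6]
      refine add_le_add_right ?_ _
      rw [← ENNReal.ofReal_add (by linarith) ht0]
      rw [show (1 - t + t : ℝ) = 1 by ring, ENNReal.ofReal_one, one_mul]
    · -- t = 0 case (second coefficient zero)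
      have ht00 : t = 0 := by
        have := ENNReal.ofReal_eq_zero.mp h0
        linarith
      subst ht00
      have e : (1 - (0:ℝ)) * a + 0 * b = a := by ring
      rw [e]
      have e2 : ENNReal.ofReal (1 - (0:ℝ)) * my j n a + ENNReal.ofReal 0 * my j n b
          = my j n a := by
        norm_num
      rw [e2]
      exact le_self_add
  · -- 1 - t = 0, i.e. t = 1
    have ht11 : t = 1 := by
      have := ENNReal.ofReal_eq_zero.mp h0
      linarith
    subst ht11
    have e : (1 - (1:ℝ)) * a + 1 * b = b := by ring
    rw [e]
    have e2 : ENNReal.ofReal (1 - (1:ℝ)) * my j n a + ENNReal.ofReal 1 * my j n b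
        = my j n b := by
      norm_num
    rw [e2]
    exact le_self_add


lemma myr_convexOn {j : ℝ → ℝ≥0∞} (hj : ConvexLSC j) {y₀ : ℝ} (hy₀ : j y₀ ≠ ⊤) (n : ℕ) :
    ConvexOn ℝ Set.univ (myr j n) := by
  refine ⟨convex_univ, ?_⟩
  intro x _ y _ p q hp hq hpq
  have hp' : p = 1 - q := by linarith
  have ht := my_convex hj n x y q hq (by linarith)
  have hfx := my_ne_top hy₀ n x
  have hfy := my_ne_top hy₀ n y
  have hR1 : ENNReal.ofReal (1-q) * my j n x ≠ ⊤ :=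
    ENNReal.mul_ne_top ENNReal.ofReal_ne_top hfx
  have hR2 : ENNReal.ofReal q * my j n y ≠ ⊤ :=
    ENNReal.mul_ne_top ENNReal.ofReal_ne_top hfy
  have hRfin : ENNReal.ofReal (1-q) * my j n x + ENNReal.ofReal q * my j n y ≠ ⊤ :=
    ENNReal.add_ne_top.mpr ⟨hR1, hR2⟩
  have h2 := ENNReal.toReal_mono hRfin ht
  rw [ENNReal.toReal_add hR1 hR2, ENNReal.toReal_mul, ENNReal.toReal_mul,
    ENNReal.toReal_ofReal (by linarith), ENNReal.toReal_ofReal hq] at h2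
  have e : p • x + q • y = (1 - q) * x + q * y := by
    rw [hp']
    simp [smul_eq_mul]
  rw [e]
  simp only [smul_eq_mul, myr]
  calc (my j n ((1-q) * x + q * y)).toReal
      ≤ (1-q) * (my j n x).toReal + q * (my j n y).toReal := h2
    _ = p * (my j n x).toReal + q * (my j n y).toReal := by rw [hp']

lemma my_sup {j : ℝ → ℝ≥0∞} (hj : ConvexLSC j) (x : ℝ) : (⨆ n, my j n x) = j x := by
  refine le_antisymm (iSup_le fun n => my_le_self n x) ?_
  by_contra hcon
  push_neg at hcon
  obtain ⟨c, hc1, hc2⟩ := exists_between hcon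
  have hcne : c ≠ ⊤ := hc2.ne_top
  have hlsc := hj.1 x c hc2
  obtain ⟨δ, hδpos, hball⟩ := Metric.eventually_nhds_iff.mp hlsc
  obtain ⟨n, hn⟩ := exists_nat_ge (c.toReal / δ)
  have hkey : c ≤ my j n x := by
    refine le_iInf fun y => ?_
    rcases lt_or_ge (dist y x) δ with h | h
    · exact le_trans (hball h).le le_self_add
    · refine le_trans ?_ le_add_self
      rw [← ENNReal.ofReal_toReal hcne]
      refine ENNReal.ofReal_le_ofReal ?_
      have h1 : c.toReal ≤ (n:ℝ) * δ := by
        rw [div_le_iff₀ hδpos] at hn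
        exact hn
      have h2 : δ ≤ |x - y| := by
        rw [Real.dist_eq, abs_sub_comm] at h
        exact h
      nlinarith [Nat.cast_nonneg (α := ℝ) n, hδpos, ENNReal.toReal_nonneg (a := c)]
  exact absurd (hkey.trans (le_iSup (fun n => my j n x) n)) (not_le.mpr hc1)

lemma backward {u v : α → ℝ} (hu : Integrable u μ) (hv : Integrable v μ)
    (H2 : ∀ T : ℝ → ℝ, ContDiff ℝ (⊤ : ℕ∞) T → (∀ x : ℝ, 0 ≤ deriv T x) →
        (∀ x : ℝ, deriv T x ≤ 1) → HasCompactSupport (deriv T) →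
        0 ≤ ∫ x, T (u x) * v x ∂μ) :
    ∀ j : ℝ → ℝ≥0∞, ConvexLSC j → ∀ l : ℝ, 0 < l →
      ∫⁻ x, j (u x) ∂μ ≤ ∫⁻ x, j (u x + l * v x) ∂μ := by
  intro j hj l hl
  by_cases hdeg : ∀ y : ℝ, j y = ⊤
  · have e1 : (fun x => j (u x)) = fun _ => (⊤:ℝ≥0∞) := funext fun x => hdeg _
    have e2 : (fun x => j (u x + l * v x)) = fun _ => (⊤:ℝ≥0∞) := funext fun x => hdeg _
    refine le_of_eq ?_
    rw [lintegral_congr (fun x => hdeg (u x)), lintegral_congr (fun x => hdeg (u x + l * v x))]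
  · push_neg at hdeg
    obtain ⟨y₀, hy₀⟩ := hdeg
    have hgnlip : ∀ n : ℕ, ∀ x y, |myr j n x - myr j n y| ≤ ((n:ℝ)+1) * |x - y| :=
      fun n => myr_lip hy₀ n
    have hgncont : ∀ n, Continuous (myr j n) :=
      fun n => continuous_of_lip (by positivity) (hgnlip n)
    have hgn0 : ∀ n (x : ℝ), 0 ≤ myr j n x := fun n x => ENNReal.toReal_nonneg
    have hofReal : ∀ n (x : ℝ), ENNReal.ofReal (myr j n x) = my j n x :=
      fun n x => ENNReal.ofReal_toReal (my_ne_top hy₀ n x)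
    have hW : ∀ n, ∀ a b c : ℝ, a ≤ b → 0 ≤ c →
        myr j n (a+c) + myr j n b ≤ myr j n (b+c) + myr j n a :=
      fun n => wright_of_convexOn (myr_convexOn hj hy₀ n)
    have hwint : Integrable (fun x => u x + l * v x) μ := hu.add (hv.const_mul l)
    have hmeas : ∀ (w : α → ℝ), Integrable w μ → ∀ n,
        AEMeasurable (fun x => my j n (w x)) μ := by
      intro w hwi n
      have e : (fun x => my j n (w x)) = fun x => ENNReal.ofReal (myr j n (w x)) :=
        funext fun x => (hofReal n (w x)).symm
      rw [e]
      exact ENNReal.measurable_ofReal.comp_aemeasurable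
        ((hgncont n).measurable.comp_aemeasurable hwi.aemeasurable)
    have hMCT : ∫⁻ x, j (u x) ∂μ = ⨆ n, ∫⁻ x, my j n (u x) ∂μ := by
      rw [← lintegral_iSup' (hmeas u hu)
        (Filter.Eventually.of_forall fun x => my_mono (u x))]
      exact lintegral_congr fun x => (my_sup hj (u x)).symm
    rw [hMCT]
    refine iSup_le fun n => ?_
    have e1 : ∫⁻ x, my j n (u x) ∂μ = ENNReal.ofReal (∫ x, myr j n (u x) ∂μ) := by
      rw [ofReal_integral_eq_lintegral_ofReal
        (integrable_comp_lip (hgncont n) (hgnlip n) hu)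
        (Filter.Eventually.of_forall fun x => hgn0 n _)]
      exact lintegral_congr fun x => (hofReal n (u x)).symm
    have e2 : ∫⁻ x, my j n (u x + l * v x) ∂μ
        = ENNReal.ofReal (∫ x, myr j n (u x + l * v x) ∂μ) := by
      rw [ofReal_integral_eq_lintegral_ofReal
        (integrable_comp_lip (hgncont n) (hgnlip n) hwint)
        (Filter.Eventually.of_forall fun x => hgn0 n _)]
      exact lintegral_congr fun x => (hofReal n (u x + l * v x)).symm
    calc ∫⁻ x, my j n (u x) ∂μ
        = ENNReal.ofReal (∫ x, myr j n (u x) ∂μ) := e1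
      _ ≤ ENNReal.ofReal (∫ x, myr j n (u x + l * v x) ∂μ) :=
          ENNReal.ofReal_le_ofReal
            (lemB hu hv H2 (L := (n:ℝ)+1) (by positivity) (hgnlip n) (hW n) hl)
      _ = ∫⁻ x, my j n (u x + l * v x) ∂μ := e2.symm
      _ ≤ ∫⁻ x, j (u x + l * v x) ∂μ := lintegral_mono fun x => my_le_self n _


end Aux

/-- **Characterisation of `c`-completeness** (Proposition on finite measure spaces):
for `u, v ∈ L¹(Σ,μ)` over a finite measure space, the family of inequalities
`∫ j(u) dμ ≤ ∫ j(u + λ v) dμ` for all convex lsc `j : ℝ → [0,∞]` and all `λ > 0`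
is equivalent to `∫ T(u) v dμ ≥ 0` for all `T ∈ C^∞(ℝ)` with `0 ≤ T' ≤ 1` and
`T'` compactly supported. -/
theorem c_complete_characterisation
    {α : Type*} [MeasurableSpace α] (μ : Measure α) [IsFiniteMeasure μ]
    (u v : α → ℝ) (hu : Integrable u μ) (hv : Integrable v μ) :
    (∀ j : ℝ → ℝ≥0∞, ConvexLSC j → ∀ l : ℝ, 0 < l →
        ∫⁻ x, j (u x) ∂μ ≤ ∫⁻ x, j (u x + l * v x) ∂μ) ↔
      (∀ T : ℝ → ℝ, ContDiff ℝ (⊤ : ℕ∞) T → (∀ x : ℝ, 0 ≤ deriv T x) →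
        (∀ x : ℝ, deriv T x ≤ 1) → HasCompactSupport (deriv T) →
        0 ≤ ∫ x, T (u x) * v x ∂μ) := by
  constructor
  · intro H1 T hT hd0 hd1 hcs
    exact forward hu hv H1 T hT hd0 hd1 hcs
  · intro H2 j hj l hl
    exact backward hu hv H2 j hj l hl

end Statement12
end
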